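/- arXiv:1710.04750 — 9 statements merged into one kernel-verified Lean document; each statement's English description precedes it below -/
import Mathlib

section
/- Let ℓ ≥ 2, ρ ∈ (0,1), and d ∈ (0,1). Consider the set F of real symmetric ℓ×ℓ matrices D with 0 ≺ D ⪯ Σ^{(ℓ)} and (1/ℓ)·tr(D) ≤ d. Then the minimum over D ∈ F of (1/2)·log(det(Σ^{(ℓ)})/det(D)) is attained and equals: (1/2)·log((1−ρ)^{ℓ−1}(1+(ℓ−1)ρ)/d^ℓ) if d ∈ (0, 1−ρ), and (1/2)·log((1+(ℓ−1)ρ)/(ℓd−(ℓ−1)(1−ρ))) if d ∈ [1−ρ, 1). -/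
/-!
If `A = Xᴴ X` and `D` are positive semidefinite with `tr (A D) ≤ n`, then AM–GM on the
eigenvalues of `X D Xᴴ` gives `det A · det D ≤ 1`. Hence a feasible `D₀` maximises `det D` over
the feasible set as soon as `tr (D₀⁻¹ D) ≤ ℓ` for every feasible `D`.

Write `Σ = (1 - ρ) I + ρ J` with `J` the all-ones matrix. For `d < 1 - ρ` take `D₀ = d I`; the
trace constraint alone gives `tr (D₀⁻¹ D) ≤ ℓ`. For `d ≥ 1 - ρ` take
`D₀ = (1 - ρ) I + (d - (1 - ρ)) J`, whose inverse is `α⁻¹ I + (1 / (1 - ρ) - α⁻¹) P` with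
`α = ℓ d - (ℓ - 1)(1 - ρ)` and `P = I - J / ℓ` the centering projection. Since `P ⪰ 0`, the
constraint `D ⪯ Σ` gives `tr (P D) ≤ tr (P Σ) = (ℓ - 1)(1 - ρ)`, and together with `tr D ≤ ℓ d`
this is exactly `tr (D₀⁻¹ D) ≤ ℓ`.
-/

namespace Matrix.PosSemidef

variable {ι : Type*} [Fintype ι] [DecidableEq ι] {A B : Matrix ι ι ℝ}

theorem det_le_exp_trace_sub_card (hB : B.PosSemidef) :
    B.det ≤ Real.exp (B.trace - Fintype.card ι) := by
  rw [hB.1.det_eq_prod_eigenvalues, hB.1.trace_eq_sum_eigenvalues]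
  simp only [RCLike.ofReal_real_eq_id, id_eq]
  calc ∏ i, hB.1.eigenvalues i ≤ ∏ i, Real.exp (hB.1.eigenvalues i - 1) :=
        Finset.prod_le_prod (fun i _ => hB.eigenvalues_nonneg i) fun i _ => by
          linarith [Real.add_one_le_exp (hB.1.eigenvalues i - 1)]
    _ = Real.exp (∑ i, hB.1.eigenvalues i - Fintype.card ι) := by
        rw [← Real.exp_sum, Finset.sum_sub_distrib]; simp

open scoped MatrixOrder in
theorem trace_mul_nonneg (hA : A.PosSemidef) (hB : B.PosSemidef) : 0 ≤ (A * B).trace := by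
  obtain ⟨X, rfl⟩ := CStarAlgebra.nonneg_iff_eq_star_mul_self.mp hA.nonneg
  have := (hB.mul_mul_conjTranspose_same X).trace_nonneg
  rwa [trace_mul_cycle] at this

open scoped MatrixOrder in
theorem det_mul_det_le_one (hA : A.PosSemidef) (hB : B.PosSemidef)
    (h : (A * B).trace ≤ Fintype.card ι) : A.det * B.det ≤ 1 := by
  obtain ⟨X, rfl⟩ := CStarAlgebra.nonneg_iff_eq_star_mul_self.mp hA.nonneg
  have hXBX := hB.mul_mul_conjTranspose_same X
  calc (star X * X).det * B.det = (X * B * Xᴴ).det := by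
        simp only [det_mul, star_eq_conjTranspose, det_conjTranspose, star_trivial]; ring
    _ ≤ Real.exp ((X * B * Xᴴ).trace - Fintype.card ι) := hXBX.det_le_exp_trace_sub_card
    _ ≤ 1 := by
        rw [Real.exp_le_one_iff, sub_nonpos, trace_mul_cycle]
        exact h

theorem det_le_det_of_mul_eq_one {D₀ : Matrix ι ι ℝ} (hA : A.PosSemidef) (hAD₀ : A * D₀ = 1)
    (hB : B.PosSemidef) (h : (A * B).trace ≤ Fintype.card ι) : B.det ≤ D₀.det := by
  have hdet : A.det * D₀.det = 1 := by rw [← det_mul, hAD₀, det_one]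
  have hA₀ : 0 < A.det := lt_of_le_of_ne hA.det_nonneg fun h0 => by simp [← h0] at hdet
  nlinarith [hA.det_mul_det_le_one hB h]

end Matrix.PosSemidef

namespace Matrix

variable (ι : Type*) [Fintype ι] [DecidableEq ι]

/-- The paper's `Σ^(ℓ)` is `compoundSymm (Fin ℓ) (1 - ρ) ρ`. -/
def compoundSymm (a b : ℝ) : Matrix ι ι ℝ := a • 1 + b • vecMulVec 1 1

variable {ι}

omit [Fintype ι] in
theorem compoundSymm_apply (a b : ℝ) (i j : ι) :
    compoundSymm ι a b i j = if i = j then a + b else b := by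
  by_cases h : i = j <;> simp [compoundSymm, h]

theorem isHermitian_compoundSymm (a b : ℝ) : (compoundSymm ι a b).IsHermitian :=
  (isHermitian_one.smul (.all a)).add
    ((posSemidef_vecMulVec_self_star 1).isHermitian.smul (.all b))

theorem isSymm_compoundSymm (a b : ℝ) : (compoundSymm ι a b).IsSymm :=
  isHermitian_compoundSymm a b

theorem posSemidef_compoundSymm {a b : ℝ} (ha : 0 ≤ a) (hb : 0 ≤ b) :
    (compoundSymm ι a b).PosSemidef :=
  (PosSemidef.one.smul ha).add ((posSemidef_vecMulVec_self_star 1).smul hb)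

theorem posDef_compoundSymm {a b : ℝ} (ha : 0 < a) (hb : 0 ≤ b) :
    (compoundSymm ι a b).PosDef :=
  (PosDef.one.smul ha).add_posSemidef ((posSemidef_vecMulVec_self_star 1).smul hb)

theorem compoundSymm_mul_compoundSymm (a b c e : ℝ) :
    compoundSymm ι a b * compoundSymm ι c e =
      compoundSymm ι (a * c) (a * e + b * c + Fintype.card ι * b * e) := by
  have hJ : vecMulVec (1 : ι → ℝ) (1 : ι → ℝ) * vecMulVec (1 : ι → ℝ) (1 : ι → ℝ) =
      (Fintype.card ι : ℝ) • vecMulVec (1 : ι → ℝ) (1 : ι → ℝ) := by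
    rw [vecMulVec_mul_vecMulVec, vecMulVec_smul]
    simp
  simp only [compoundSymm, Matrix.add_mul, Matrix.mul_add, Matrix.smul_mul, Matrix.mul_smul,
    Matrix.one_mul, Matrix.mul_one, hJ]
  module

theorem trace_compoundSymm (a b : ℝ) :
    (compoundSymm ι a b).trace = Fintype.card ι * (a + b) := by
  simp only [compoundSymm, trace_add, trace_smul, trace_one, trace_vecMulVec, dotProduct_one,
    Pi.one_apply, Finset.sum_const, Finset.card_univ, nsmul_eq_mul, mul_one, smul_eq_mul]
  ring

theorem det_compoundSymm [Nonempty ι] {a : ℝ} (ha : a ≠ 0) (b : ℝ) :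
    (compoundSymm ι a b).det = a ^ (Fintype.card ι - 1) * (a + Fintype.card ι * b) := by
  have : compoundSymm ι a b = a • (1 + vecMulVec ((b / a) • 1) 1) := by
    simp only [compoundSymm, smul_add, smul_vecMulVec, smul_smul, mul_div_cancel₀ _ ha]
  rw [this, det_smul, vecMulVec_eq Unit, det_one_add_replicateCol_mul_replicateRow,
    dotProduct_smul, dotProduct_one, ← pow_sub_one_mul Fintype.card_ne_zero]
  simp only [Pi.one_apply, Finset.sum_const, Finset.card_univ, nsmul_eq_mul, mul_one, smul_eq_mul]
  field_simp

omit [Fintype ι] in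
theorem compoundSymm_sub_compoundSymm (a b c e : ℝ) :
    compoundSymm ι a b - compoundSymm ι c e = compoundSymm ι (a - c) (b - e) := by
  simp only [compoundSymm]
  module

omit [Fintype ι] in
theorem smul_one_eq_compoundSymm (a : ℝ) : (a • 1 : Matrix ι ι ℝ) = compoundSymm ι a 0 := by
  simp [compoundSymm]

omit [Fintype ι] in
theorem compoundSymm_one_zero : compoundSymm ι 1 0 = 1 := by
  simp [compoundSymm]

variable (ι) in
noncomputable def centering : Matrix ι ι ℝ := compoundSymm ι 1 (-(Fintype.card ι : ℝ)⁻¹)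

theorem centering_mul_self [Nonempty ι] : centering ι * centering ι = centering ι := by
  rw [centering, compoundSymm_mul_compoundSymm]
  congr 1 <;> field_simp
  ring

theorem posSemidef_centering [Nonempty ι] : (centering ι).PosSemidef := by
  have hP : (centering ι)ᴴ = centering ι := isHermitian_compoundSymm 1 _
  rw [← centering_mul_self]
  nth_rw 1 [← hP]
  exact posSemidef_conjTranspose_mul_self _

theorem trace_centering_mul_le [Nonempty ι] {σ τ : ℝ} {D : Matrix ι ι ℝ}
    (hSD : (compoundSymm ι σ τ - D).PosSemidef) :
    (centering ι * D).trace ≤ (Fintype.card ι - 1) * σ := by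
  have hPS : (centering ι * compoundSymm ι σ τ).trace = (Fintype.card ι - 1) * σ := by
    rw [centering, compoundSymm_mul_compoundSymm, trace_compoundSymm]
    field_simp
    ring
  have := posSemidef_centering.trace_mul_nonneg hSD
  rw [Matrix.mul_sub, trace_sub, hPS] at this
  linarith

variable {D : Matrix ι ι ℝ}

theorem PosSemidef.det_le_pow_of_trace_le {d : ℝ} (hd : 0 < d) (hD : D.PosSemidef)
    (htr : D.trace ≤ Fintype.card ι * d) : D.det ≤ d ^ Fintype.card ι := by
  have hinv : (d⁻¹ • 1 : Matrix ι ι ℝ) * d • 1 = 1 := by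
    rw [smul_mul_smul, Matrix.one_mul, inv_mul_cancel₀ hd.ne', one_smul]
  have htr' : (d⁻¹ • 1 * D).trace ≤ Fintype.card ι := by
    rw [smul_mul, Matrix.one_mul, trace_smul, smul_eq_mul, inv_mul_le_iff₀ hd, mul_comm]
    exact htr
  simpa [det_smul] using
    (PosSemidef.one.smul (inv_nonneg.2 hd.le)).det_le_det_of_mul_eq_one hinv hD htr'

theorem PosSemidef.det_le_det_compoundSymm_of_le [Nonempty ι] {σ τ d : ℝ} (hσ : 0 < σ)
    (hσd : σ ≤ d) (hD : D.PosSemidef) (hSD : (compoundSymm ι σ τ - D).PosSemidef)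
    (htr : D.trace ≤ Fintype.card ι * d) : D.det ≤ (compoundSymm ι σ (d - σ)).det := by
  set n : ℝ := (Fintype.card ι : ℝ) with hn_def
  have hn : 1 ≤ n := Nat.one_le_cast.2 Fintype.card_pos
  obtain ⟨α, hα_def⟩ : ∃ α : ℝ, α = n * d - (n - 1) * σ := ⟨_, rfl⟩
  have hσα : σ ≤ α := by rw [hα_def]; nlinarith
  have hα : 0 < α := hσ.trans_le hσα
  set c : ℝ := σ⁻¹ - α⁻¹
  have hc : 0 ≤ c := sub_nonneg.2 (inv_anti₀ hσ hσα)
  have hA : α⁻¹ • 1 + c • centering ι = compoundSymm ι (α⁻¹ + c) (-(c * n⁻¹)) := by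
    simp only [centering, compoundSymm]
    module
  refine ((PosSemidef.one.smul (inv_nonneg.2 hα.le)).add
    (posSemidef_centering.smul hc)).det_le_det_of_mul_eq_one ?_ hD ?_
  · rw [hA, compoundSymm_mul_compoundSymm, ← compoundSymm_one_zero]
    congr 1 <;> simp only [c, ← hn_def] <;> field_simp <;> rw [hα_def] <;> ring
  · rw [Matrix.add_mul, trace_add, smul_mul, Matrix.one_mul, smul_mul, trace_smul, trace_smul,
      smul_eq_mul, smul_eq_mul]
    calc α⁻¹ * D.trace + c * (centering ι * D).trace
        ≤ α⁻¹ * (n * d) + c * ((n - 1) * σ) := by gcongr; exact trace_centering_mul_le hSD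
      _ = n := by simp only [c]; field_simp; rw [hα_def]; ring

theorem isLeast_image_mul_log_div {α : Type*} {F : Set α} {f : α → ℝ} {c s : ℝ} {x₀ : α}
    (hc : 0 ≤ c) (hs : 0 < s) (hf : ∀ x ∈ F, 0 < f x) (hx₀ : x₀ ∈ F)
    (hmax : ∀ x ∈ F, f x ≤ f x₀) :
    IsLeast ((fun x => c * Real.log (s / f x)) '' F) (c * Real.log (s / f x₀)) := by
  refine ⟨Set.mem_image_of_mem _ hx₀, Set.forall_mem_image.2 fun x hx => ?_⟩
  have := hf x hx
  have := hf x₀ hx₀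
  gcongr
  exact hmax x hx

variable (ι) in
def distortionSet (S : Matrix ι ι ℝ) (d : ℝ) : Set (Matrix ι ι ℝ) :=
  {D | D.IsSymm ∧ D.PosDef ∧ (S - D).PosSemidef ∧ D.trace ≤ Fintype.card ι * d}

variable {σ τ d : ℝ}

theorem isLeast_half_log_det_div_of_lt (hτ : 0 ≤ τ) (hd : 0 < d) (hdσ : d < σ) :
    IsLeast ((fun D => 1 / 2 * Real.log ((compoundSymm ι σ τ).det / D.det)) ''
        distortionSet ι (compoundSymm ι σ τ) d)
      (1 / 2 * Real.log ((compoundSymm ι σ τ).det / d ^ Fintype.card ι)) := by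
  have hS := (posDef_compoundSymm (ι := ι) (hd.trans hdσ) hτ).det_pos
  have hD₀ : (d • 1 : Matrix ι ι ℝ).det = d ^ Fintype.card ι := by rw [det_smul, det_one, mul_one]
  rw [← hD₀]
  refine isLeast_image_mul_log_div (by norm_num) hS (fun D hD => hD.2.1.det_pos)
    ⟨isSymm_one.smul d, PosDef.one.smul hd, ?_, ?_⟩ fun D ⟨_, hD, _, hDtr⟩ => ?_
  · rw [smul_one_eq_compoundSymm, compoundSymm_sub_compoundSymm, sub_zero]
    exact posSemidef_compoundSymm (by linarith) hτ
  · rw [trace_smul, trace_one, smul_eq_mul, mul_comm]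
  · exact hD₀ ▸ hD.posSemidef.det_le_pow_of_trace_le hd hDtr

theorem isLeast_half_log_det_div_of_le [Nonempty ι] (hσ : 0 < σ) (hσd : σ ≤ d)
    (hdτ : d ≤ σ + τ) :
    IsLeast ((fun D => 1 / 2 * Real.log ((compoundSymm ι σ τ).det / D.det)) ''
        distortionSet ι (compoundSymm ι σ τ) d)
      (1 / 2 * Real.log ((compoundSymm ι σ τ).det /
        (σ ^ (Fintype.card ι - 1) * (Fintype.card ι * d - (Fintype.card ι - 1) * σ)))) := by
  have hS := (posDef_compoundSymm (ι := ι) hσ (by linarith : 0 ≤ τ)).det_pos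
  have hD₀ : (compoundSymm ι σ (d - σ)).det
      = σ ^ (Fintype.card ι - 1) * (Fintype.card ι * d - (Fintype.card ι - 1) * σ) := by
    rw [det_compoundSymm hσ.ne']
    ring
  rw [← hD₀]
  refine isLeast_image_mul_log_div (by norm_num) hS (fun D hD => hD.2.1.det_pos)
    ⟨isSymm_compoundSymm _ _, posDef_compoundSymm hσ (by linarith), ?_, ?_⟩
    fun D ⟨_, hD, hSD, hDtr⟩ => hD.posSemidef.det_le_det_compoundSymm_of_le hσ hσd hSD hDtr
  · rw [compoundSymm_sub_compoundSymm, sub_self]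
    exact posSemidef_compoundSymm le_rfl (by linarith)
  · rw [trace_compoundSymm, add_sub_cancel]

end Matrix

open Matrix in
/-- explicit value of the centralized Gaussian rate-distortion function
for positive correlation (Proposition 1, second case): the minimum of
`(1/2)·log(det Σ / det D)` over symmetric `D` with `0 ≺ D ⪯ Σ^(ℓ)` and `(1/ℓ)·tr D ≤ d`
is attained and equals the stated piecewise expression. -/
theorem stmt_4 (ℓ : ℕ) (hℓ : 2 ≤ ℓ) (ρ d : ℝ)
    (hρ₁ : 0 < ρ) (hρ₂ : ρ < 1) (hd₁ : 0 < d) (hd₂ : d < 1)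
    (S : Matrix (Fin ℓ) (Fin ℓ) ℝ)
    (hS : S = Matrix.of fun i j => if i = j then (1 : ℝ) else ρ) :
    IsLeast
      ((fun D : Matrix (Fin ℓ) (Fin ℓ) ℝ => (1 / 2) * Real.log (S.det / D.det)) ''
        {D | D.IsSymm ∧ D.PosDef ∧ (S - D).PosSemidef ∧ (1 / (ℓ : ℝ)) * D.trace ≤ d})
      (if d < 1 - ρ then
        (1 / 2) * Real.log ((1 - ρ) ^ (ℓ - 1) * (1 + ((ℓ : ℝ) - 1) * ρ) / d ^ ℓ)
      else
        (1 / 2) *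
          Real.log ((1 + ((ℓ : ℝ) - 1) * ρ) / ((ℓ : ℝ) * d - ((ℓ : ℝ) - 1) * (1 - ρ)))) := by
  have : Nonempty (Fin ℓ) := ⟨⟨0, by omega⟩⟩
  have hℓ₀ : (0 : ℝ) < ℓ := by positivity
  have hρ : 0 < 1 - ρ := sub_pos.2 hρ₂
  obtain rfl : S = compoundSymm (Fin ℓ) (1 - ρ) ρ := by
    ext i j
    simp [hS, compoundSymm_apply]
  have hdetS : (compoundSymm (Fin ℓ) (1 - ρ) ρ).det = (1 - ρ) ^ (ℓ - 1) * (1 + (ℓ - 1) * ρ) := by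
    rw [det_compoundSymm hρ.ne', Fintype.card_fin]
    ring
  have hset : {D | D.IsSymm ∧ D.PosDef ∧ (compoundSymm (Fin ℓ) (1 - ρ) ρ - D).PosSemidef ∧
      1 / (ℓ : ℝ) * D.trace ≤ d} = distortionSet (Fin ℓ) (compoundSymm (Fin ℓ) (1 - ρ) ρ) d := by
    ext D
    simp only [distortionSet, Set.mem_ofPred_eq, one_div, inv_mul_le_iff₀ hℓ₀, Fintype.card_fin]
  rw [hset]
  split_ifs with hdρ
  · convert isLeast_half_log_det_div_of_lt hρ₁.le hd₁ hdρ using 3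
    rw [hdetS, Fintype.card_fin]
  · convert isLeast_half_log_det_div_of_le (ι := Fin ℓ) hρ (not_lt.1 hdρ)
      (by linarith : d ≤ 1 - ρ + ρ) using 3
    rw [hdetS, Fintype.card_fin, mul_div_mul_left _ _ (pow_pos hρ _).ne']
end

section
/- Let ℓ ≥ 2, ρ ∈ (0,1), and d ∈ (0,1). Define θ = 0 if d ∈ (0, 1−ρ) and θ = d−1+ρ if d ∈ [1−ρ, 1), and let D* be the ℓ×ℓ real matrix with diagonal entries d and off-diagonal entries θ. Then D* is positive definite, Σ^{(ℓ)} − D* is positive semidefinite, tr(D*) = ℓd, and for every real symmetric ℓ×ℓ matrix D with 0 ≺ D ⪯ Σ^{(ℓ)} and tr(D) ≤ ℓd one has det(D) ≤ det(D*), with equality only if D = D*. -/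
open Matrix Finset
open scoped MatrixOrder

/-! The feasible set is convex and `log det` is concave, so `D*` is optimal as soon as it satisfies
the KKT conditions: `D*⁻¹ = t⁻¹ • 1 + M` with `t > 0`, `M = c • (ℓ • 1 - J) ⪰ 0` (`J` the all-ones
matrix) and complementary slackness `M * (Σ - D*) = 0`, which holds because either `θ = 0` and
`c = 0`, or `Σ - D* = (1 - d) • J` is annihilated by `ℓ • 1 - J`. Weak duality then gives
`tr (D*⁻¹ * D) ≤ ℓ` for every feasible `D`. Finally, for positive definite `A` and `B`,
`tr (A⁻¹ * B) ≤ n` forces `det B ≤ det A`, with equality only for `B = A`: apply `x ≤ exp (x - 1)`,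
strict unless `x = 1`, to the eigenvalues of `A^(-1/2) * B * A^(-1/2)`. -/

theorem Real.prod_exp_sub_one {ι : Type*} [Fintype ι] (x : ι → ℝ) :
    ∏ i, Real.exp (x i - 1) = Real.exp (∑ i, x i - Fintype.card ι) := by
  simp [← Real.exp_sum, sum_sub_distrib]

theorem Real.prod_le_exp_sum_sub_card {ι : Type*} [Fintype ι] {x : ι → ℝ} (hx : ∀ i, 0 ≤ x i) :
    ∏ i, x i ≤ Real.exp (∑ i, x i - Fintype.card ι) :=
  Real.prod_exp_sub_one x ▸ prod_le_prod (fun i _ => hx i) fun i _ => by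
    linarith [Real.add_one_le_exp (x i - 1)]

theorem Real.prod_lt_exp_sum_sub_card {ι : Type*} [Fintype ι] {x : ι → ℝ} (hx : ∀ i, 0 < x i)
    (hne : ∃ i, x i ≠ 1) : ∏ i, x i < Real.exp (∑ i, x i - Fintype.card ι) := by
  obtain ⟨i, hi⟩ := hne
  refine Real.prod_exp_sub_one x ▸ prod_lt_prod (fun i _ => hx i)
    (fun j _ => by linarith [Real.add_one_le_exp (x j - 1)]) ⟨i, mem_univ i, ?_⟩
  linarith [Real.add_one_lt_exp (sub_ne_zero.mpr hi)]

namespace Matrix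

def allOnes (n : Type*) : Matrix n n ℝ := of fun _ _ => 1

variable {n : Type*}

@[simp]
theorem allOnes_apply (i j : n) : allOnes n i j = 1 := rfl

variable [Fintype n]

theorem allOnes_mul_allOnes : allOnes n * allOnes n = (Fintype.card n : ℝ) • allOnes n := by
  ext i j
  simp [mul_apply]

theorem dotProduct_allOnes_mulVec (x : n → ℝ) : x ⬝ᵥ (allOnes n *ᵥ x) = (∑ i, x i) ^ 2 := by
  simp [dotProduct, mulVec, sq, sum_mul]

theorem posSemidef_allOnes : (allOnes n).PosSemidef := by
  have h : allOnes n = vecMulVec 1 (star 1) := by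
    ext i j
    simp [vecMulVec_apply]
  exact h ▸ posSemidef_vecMulVec_self_star 1

theorem trace_allOnes : (allOnes n).trace = Fintype.card n := by
  simp [trace]

variable [DecidableEq n]

theorem posDef_smul_one_add_smul_allOnes {a b : ℝ} (ha : 0 < a) (hb : 0 ≤ b) :
    (a • 1 + b • allOnes n).PosDef :=
  (PosDef.one.smul ha).add_posSemidef (posSemidef_allOnes.smul hb)

theorem card_smul_one_sub_allOnes_mul_allOnes :
    ((Fintype.card n : ℝ) • 1 - allOnes n) * allOnes n = 0 := by
  rw [sub_mul, allOnes_mul_allOnes, smul_mul_assoc, one_mul, sub_self]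

theorem posSemidef_card_smul_one_sub_allOnes :
    ((Fintype.card n : ℝ) • 1 - allOnes n).PosSemidef := by
  refine .of_dotProduct_mulVec_nonneg
    ((isHermitian_one.smul (.all _)).sub posSemidef_allOnes.isHermitian) fun x => ?_
  rw [star_trivial, sub_mulVec, smul_mulVec, one_mulVec, dotProduct_sub, dotProduct_smul,
    dotProduct_allOnes_mulVec, smul_eq_mul, sub_nonneg]
  simpa [dotProduct, sq] using sq_sum_le_card_mul_sum_sq (s := univ) (f := x)

theorem inv_smul_one_add_smul_allOnes {a b : ℝ} (ha : a ≠ 0)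
    (ht : a + Fintype.card n * b ≠ 0) :
    (a • 1 + b • allOnes n)⁻¹ = (a + Fintype.card n * b)⁻¹ • 1 +
      (b / (a * (a + Fintype.card n * b))) • ((Fintype.card n : ℝ) • 1 - allOnes n) := by
  refine inv_eq_right_inv ?_
  simp only [add_mul, mul_add, mul_smul_comm, smul_mul_assoc, one_mul, mul_one,
    mul_sub, allOnes_mul_allOnes]
  match_scalars
  · field_simp
  · field_simp
    ring

theorem IsHermitian.eq_one_of_eigenvalues_eq_one {C : Matrix n n ℝ} (hC : C.IsHermitian)
    (h : ∀ i, hC.eigenvalues i = 1) : C = 1 := by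
  have h1 : (RCLike.ofReal ∘ hC.eigenvalues : n → ℝ) = fun _ => 1 := funext h
  rw [hC.spectral_theorem, h1, diagonal_one, map_one]

theorem PosDef.det_le_one_of_trace_le_card {C : Matrix n n ℝ} (hC : C.PosDef)
    (htr : C.trace ≤ Fintype.card n) : C.det ≤ 1 ∧ (C.det = 1 → C = 1) := by
  have hdet : C.det = ∏ i, hC.isHermitian.eigenvalues i := by
    simpa using hC.isHermitian.det_eq_prod_eigenvalues
  have htrace : C.trace = ∑ i, hC.isHermitian.eigenvalues i := by
    simpa using hC.isHermitian.trace_eq_sum_eigenvalues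
  have hexp : Real.exp (C.trace - Fintype.card n) ≤ 1 := Real.exp_le_one_iff.mpr (by linarith)
  rw [hdet, htrace] at *
  refine ⟨(Real.prod_le_exp_sum_sub_card fun i => (hC.eigenvalues_pos i).le).trans hexp,
    fun h1 => hC.isHermitian.eq_one_of_eigenvalues_eq_one fun i => ?_⟩
  by_contra hi
  linarith [Real.prod_lt_exp_sum_sub_card hC.eigenvalues_pos ⟨i, hi⟩]

theorem PosSemidef.trace_mul_nonneg_s5 {M N : Matrix n n ℝ} (hM : M.PosSemidef)
    (hN : N.PosSemidef) : 0 ≤ (M * N).trace := by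
  set R := CFC.sqrt M
  have hR : Rᴴ = R := (CFC.sqrt_nonneg M).posSemidef.isHermitian
  have hMR : (M * N).trace = (R * N * Rᴴ).trace := by
    rw [hR, ← CFC.sqrt_mul_sqrt_self M hM.nonneg, mul_assoc, trace_mul_comm]
  rw [hMR]
  exact (hN.mul_mul_conjTranspose_same R).trace_nonneg

theorem PosDef.det_le_of_trace_inv_mul_le_card {A B : Matrix n n ℝ} (hA : A.PosDef)
    (hB : B.PosDef) (htr : (A⁻¹ * B).trace ≤ Fintype.card n) :
    B.det ≤ A.det ∧ (B.det = A.det → B = A) := by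
  set R := CFC.sqrt A
  have hRR : R * R = A := CFC.sqrt_mul_sqrt_self A hA.posSemidef.nonneg
  have hRu : IsUnit R := (CFC.isUnit_sqrt_iff A hA.posSemidef.nonneg).mpr hA.isUnit
  have hRdet : IsUnit R.det := (isUnit_iff_isUnit_det R).mp hRu
  have hRinv : (R⁻¹)ᴴ = R⁻¹ := ((CFC.sqrt_nonneg A).posSemidef.isHermitian).inv
  have hC : (R⁻¹ * B * R⁻¹).PosDef := by
    simpa only [star_eq_conjTranspose, hRinv] using
      (IsUnit.posDef_star_right_conjugate_iff (isUnit_nonsing_inv_iff.mpr hRu)).mpr hB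
  have hCtr : (R⁻¹ * B * R⁻¹).trace = (A⁻¹ * B).trace := by
    rw [trace_mul_comm, ← mul_assoc, ← mul_inv_rev, hRR]
  have hCdet : (R⁻¹ * B * R⁻¹).det * A.det = B.det := by
    rw [det_mul, det_mul, ← hRR, det_mul, det_nonsing_inv, Ring.inverse_eq_inv']
    field_simp [hRdet.ne_zero]
  have hBC : B = R * (R⁻¹ * B * R⁻¹) * R := by
    rw [← mul_assoc, ← mul_assoc, mul_nonsing_inv R hRdet, one_mul, mul_assoc,
      nonsing_inv_mul R hRdet, mul_one]
  obtain ⟨hle, heq⟩ := hC.det_le_one_of_trace_le_card (hCtr ▸ htr)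
  refine ⟨hCdet ▸ mul_le_of_le_one_left hA.det_pos.le hle, fun hdet => ?_⟩
  rw [hBC, heq (by nlinarith [hA.det_pos]), mul_one, hRR]

theorem trace_inv_mul_le_card_of_inv_eq_smul_one_add {A B S M : Matrix n n ℝ} {μ : ℝ}
    (hA : IsUnit A) (hinv : A⁻¹ = μ • 1 + M) (hμ : 0 ≤ μ) (hM : M.PosSemidef)
    (hslack : M * (S - A) = 0) (hSB : (S - B).PosSemidef) (htr : B.trace ≤ A.trace) :
    (A⁻¹ * B).trace ≤ Fintype.card n := by
  have hMBA : M * (B - A) = -(M * (S - B)) := by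
    rw [show B - A = (S - A) - (S - B) by abel, mul_sub, hslack, zero_sub]
  calc (A⁻¹ * B).trace = (A⁻¹ * A).trace + (A⁻¹ * (B - A)).trace := by
        rw [← trace_add, ← mul_add, add_sub_cancel]
    _ = Fintype.card n + μ * (B.trace - A.trace) - (M * (S - B)).trace := by
        rw [nonsing_inv_mul A ((isUnit_iff_isUnit_det A).mp hA), trace_one, hinv, add_mul, hMBA,
          smul_mul_assoc, one_mul, trace_add, trace_smul, trace_neg, trace_sub, smul_eq_mul]
        ring
    _ ≤ Fintype.card n := by nlinarith [hM.trace_mul_nonneg_s5 hSB]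

theorem trace_inv_smul_one_add_smul_allOnes_mul_le_card {a b p q : ℝ} {S B : Matrix n n ℝ}
    (ha : 0 < a) (hb : 0 ≤ b) (hslack : b * p = 0)
    (hS : S - (a • 1 + b • allOnes n) = p • 1 + q • allOnes n) (hSB : (S - B).PosSemidef)
    (htr : B.trace ≤ (a • 1 + b • allOnes n).trace) :
    ((a • 1 + b • allOnes n)⁻¹ * B).trace ≤ Fintype.card n := by
  set t := a + Fintype.card n * b
  have ht : 0 < t := by positivity
  set M := (b / (a * t)) • ((Fintype.card n : ℝ) • 1 - allOnes n)
  have hM : M.PosSemidef := posSemidef_card_smul_one_sub_allOnes.smul (by positivity)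
  have hMslack : M * (S - (a • 1 + b • allOnes n)) = 0 := by
    have : p * (b / (a * t)) = 0 := by rw [mul_div_assoc', mul_comm p, hslack, zero_div]
    simp only [M, hS, mul_add, smul_mul_assoc, mul_smul_comm, mul_one,
      card_smul_one_sub_allOnes_mul_allOnes, smul_zero, add_zero, smul_smul, this, zero_smul]
  exact trace_inv_mul_le_card_of_inv_eq_smul_one_add (posDef_smul_one_add_smul_allOnes ha hb).isUnit
    (inv_smul_one_add_smul_allOnes ha.ne' ht.ne') (inv_nonneg.2 ht.le) hM hMslack hSB htr

end Matrix

theorem stmt_5_general (ℓ : ℕ) (ρ d : ℝ)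
    (hρ₁ : 0 < ρ) (hρ₂ : ρ < 1) (hd₁ : 0 < d) (hd₂ : d < 1)
    (θ : ℝ) (hθ : θ = if d < 1 - ρ then 0 else d - 1 + ρ)
    (S Dstar : Matrix (Fin ℓ) (Fin ℓ) ℝ)
    (hS : S = Matrix.of fun i j => if i = j then (1 : ℝ) else ρ)
    (hDstar : Dstar = Matrix.of fun i j => if i = j then d else θ) :
    Dstar.PosDef ∧ (S - Dstar).PosSemidef ∧ Dstar.trace = (ℓ : ℝ) * d ∧
    ∀ D : Matrix (Fin ℓ) (Fin ℓ) ℝ, D.IsSymm → D.PosDef → (S - D).PosSemidef →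
      D.trace ≤ (ℓ : ℝ) * d → (D.det ≤ Dstar.det ∧ (D.det = Dstar.det → D = Dstar)) := by
  set a := d - θ
  obtain ⟨ha, hθ₀, hθρ, haρ, hslack⟩ :
      0 < a ∧ 0 ≤ θ ∧ θ ≤ ρ ∧ a ≤ 1 - ρ ∧ θ * (1 - ρ - a) = 0 := by
    split_ifs at hθ with h <;> subst hθ <;> refine ⟨?_, ?_, ?_, ?_, ?_⟩ <;> grind
  have hS' : S = (1 - ρ) • 1 + ρ • allOnes (Fin ℓ) := by
    ext i j
    by_cases h : i = j <;> simp [hS, one_apply, h]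
  have hD' : Dstar = a • 1 + θ • allOnes (Fin ℓ) := by
    ext i j
    by_cases h : i = j <;> simp [hDstar, one_apply, h, a]
  have hSD : S - Dstar = (1 - ρ - a) • 1 + (ρ - θ) • allOnes (Fin ℓ) := by
    rw [hS', hD']
    module
  have hDpd : Dstar.PosDef := hD' ▸ posDef_smul_one_add_smul_allOnes ha hθ₀
  have htr : Dstar.trace = ℓ * d := by
    simp [hD', trace_allOnes, a]
    ring
  have hSDpsd : (S - Dstar).PosSemidef :=
    hSD ▸ (PosSemidef.one.smul (by linarith)).add (posSemidef_allOnes.smul (by linarith))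
  refine ⟨hDpd, hSDpsd, htr, fun D _ hD hSD_le htrD => hDpd.det_le_of_trace_inv_mul_le_card hD ?_⟩
  rw [hD'] at hSD htr ⊢
  exact trace_inv_smul_one_add_smul_allOnes_mul_le_card ha hθ₀ hslack hSD hSD_le (htr ▸ htrD)

/-- for ρ ∈ (0,1), the matrix `D*` with diagonal entries `d` and off-diagonal
entries `θ` (with `θ = 0` for `d < 1-ρ` and `θ = d-1+ρ` otherwise) is the unique optimal
solution of the convex program defining the centralized Gaussian rate-distortion function. -/
theorem stmt_5 (ℓ : ℕ) (hℓ : 2 ≤ ℓ) (ρ d : ℝ)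
    (hρ₁ : 0 < ρ) (hρ₂ : ρ < 1) (hd₁ : 0 < d) (hd₂ : d < 1)
    (θ : ℝ) (hθ : θ = if d < 1 - ρ then 0 else d - 1 + ρ)
    (S Dstar : Matrix (Fin ℓ) (Fin ℓ) ℝ)
    (hS : S = Matrix.of fun i j => if i = j then (1 : ℝ) else ρ)
    (hDstar : Dstar = Matrix.of fun i j => if i = j then d else θ) :
    Dstar.PosDef ∧ (S - Dstar).PosSemidef ∧ Dstar.trace = (ℓ : ℝ) * d ∧
    ∀ D : Matrix (Fin ℓ) (Fin ℓ) ℝ, D.IsSymm → D.PosDef → (S - D).PosSemidef →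
      D.trace ≤ (ℓ : ℝ) * d → (D.det ≤ Dstar.det ∧ (D.det = Dstar.det → D = Dstar)) :=
  stmt_5_general ℓ ρ d hρ₁ hρ₂ hd₁ hd₂ θ hθ S Dstar hS hDstar
end

section
/- (Proposition 4, second-moment form.) Let H be a real inner product space, let ℓ ≥ 2 and 2 ≤ m ≤ ℓ be integers, ρ ∈ (−1/(ℓ−1), 1), and γ > 0. Let I be the collection of all m-element subsets of {1,…,ℓ}. Suppose x₁,…,x_ℓ ∈ H satisfy ⟨x_i, x_i⟩ = 1 and ⟨x_i, x_j⟩ = ρ for i ≠ j, and vectors n_{S,k} ∈ H (S ∈ I, 1 ≤ k ≤ m) satisfy ⟨n_{S,k}, n_{S,k}⟩ = m−1, ⟨n_{S,k}, n_{S,k'}⟩ = −1 for k ≠ k', ⟨n_{S,k}, n_{S',k'}⟩ = 0 whenever S ≠ S', and ⟨n_{S,k}, x_i⟩ = 0 for all i, S, k. For S ∈ I with increasing enumeration i₁ < ⋯ < i_m, define u_{S,k} = m·x_{i_k} − Σ_{j=1}^{m} x_{i_j} + √γ·n_{S,k}. Let κ = (1−ρ)/(γ + C(ℓ−2,m−2)·ℓ·(1−ρ))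 and x̂_i = κ·Σ_{S ∈ I : i ∈ S} u_{S, τ_S(i)}, where τ_S(i) is the position of i in the increasing enumeration of S. Then: (a) ⟨x_i − x̂_i, u_{S',k'}⟩ = 0 for every i ∈ {1,…,ℓ}, S' ∈ I, and 1 ≤ k' ≤ m; and (b) ⟨x_i − x̂_i, x_j − x̂_j⟩ equals d⁻(γ) if i = j and equals θ⁻(γ) if i ≠ j. -/
/-!
Summing `u_{S,τ_S(i)}` over the blocks `S ∋ i`, the signal parts collapse by double counting:
each `x_i - x_j` with `j ≠ i` occurs in exactly `C(ℓ-2, m-2)` blocks, so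
`x̂_i = κ (C(ℓ-2,m-2) (ℓ x_i - ∑_j x_j) + √γ ∑_{S ∋ i} n_{S,τ_S(i)})`.
Against `u_{S',k'}` the vectors `x_i`, `∑_j x_j` and `∑_{S ∋ i} n_{S,τ_S(i)}` have inner products
`(1-ρ) w`, `0` and `√γ w` with the same `w = m [i = i_{k'}] - [i ∈ S']`, and `κ` is exactly the
constant that cancels them. Part (b) follows because `x̂_j` lies in the span of the `u`'s.
-/

open scoped RealInnerProductSpace
open Finset

section Combinatorics

variable {α : Type*} [Fintype α] [DecidableEq α] {m : ℕ}

lemma card_filter_powersetCard_univ_mem_and_mem (hm : 2 ≤ m) {i j : α} (hij : i ≠ j) :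
    #{S ∈ powersetCard m univ | i ∈ S ∧ j ∈ S} = (Fintype.card α - 2).choose (m - 2) := by
  have h := card_filter_powersetCard_subset {i, j} univ m (subset_univ _)
    ((card_pair hij).trans_le hm)
  simp only [insert_subset_iff, singleton_subset_iff, card_pair hij, card_univ] at h
  exact h

lemma sum_powersetCard_univ_ite_mem {E : Type*} [AddCommGroup E] (hm : 2 ≤ m) (f : α → E)
    (i : α) :
    ∑ S ∈ powersetCard m univ, (if i ∈ S then m • f i - ∑ j ∈ S, f j else 0)
      = (Fintype.card α - 2).choose (m - 2) • (Fintype.card α • f i - ∑ j, f j) := by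
  calc ∑ S ∈ powersetCard m univ, (if i ∈ S then m • f i - ∑ j ∈ S, f j else 0)
      = ∑ S ∈ powersetCard m univ, ∑ j, if i ∈ S ∧ j ∈ S then f i - f j else 0 := by
        refine sum_congr rfl fun S hS => ?_
        have hm_eq : m • f i = ∑ j ∈ S, f i := by
          rw [sum_const, mem_powersetCard_univ.mp hS]
        by_cases hi : i ∈ S
        · simp only [hi, true_and, if_true, hm_eq, ← sum_sub_distrib, sum_ite_mem, univ_inter]
        · simp [hi]
    _ = ∑ j, #{S ∈ powersetCard m univ | i ∈ S ∧ j ∈ S} • (f i - f j) := by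
        rw [sum_comm]
        simp only [← sum_filter, sum_const]
    _ = ∑ j, (Fintype.card α - 2).choose (m - 2) • (f i - f j) := by
        refine sum_congr rfl fun j _ => ?_
        rcases eq_or_ne i j with rfl | hij
        · simp
        · rw [card_filter_powersetCard_univ_mem_and_mem hm hij]
    _ = _ := by
        rw [← smul_sum, sum_sub_distrib, sum_const, card_univ]

end Combinatorics

section MemberSum

variable {α : Type*} [Fintype α] [DecidableEq α] {m : ℕ}
  (e : ∀ S : {S : Finset α // #S = m}, Fin m ≃ S.1)

/-- `∑_{S ∋ i} v_{S, τ_S(i)}`, where `e S` enumerates the block `S` and `τ_S = (e S)⁻¹`. -/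
noncomputable def memberSum {E : Type*} [AddCommMonoid E]
    (v : {S : Finset α // #S = m} → Fin m → E) (i : α) : E :=
  ∑ S, if h : i ∈ S.1 then v S ((e S).symm ⟨i, h⟩) else 0

variable {e}

lemma memberSum_eq_of_eq_smul_sub_sum_add {E : Type*} [AddCommGroup E] [Module ℝ E]
    (hm : 2 ≤ m) {x : α → E} {n u : {S : Finset α // #S = m} → Fin m → E} {t : ℝ}
    (hu : ∀ S k, u S k = (m : ℝ) • x (e S k) - ∑ j ∈ S.1, x j + t • n S k) (i : α) :
    memberSum e u i = ((Fintype.card α - 2).choose (m - 2) : ℝ) •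
      ((Fintype.card α : ℝ) • x i - ∑ j, x j) + t • memberSum e n i := by
  have hsplit : ∀ S : {S : Finset α // #S = m},
      (if h : i ∈ S.1 then u S ((e S).symm ⟨i, h⟩) else 0)
        = (if i ∈ S.1 then m • x i - ∑ j ∈ S.1, x j else 0)
          + t • if h : i ∈ S.1 then n S ((e S).symm ⟨i, h⟩) else 0 := by
    intro S
    by_cases h : i ∈ S.1
    · simp [h, hu, Nat.cast_smul_eq_nsmul]
    · simp [h]
  rw [memberSum, memberSum, sum_congr rfl fun S _ => hsplit S, sum_add_distrib, ← smul_sum,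
    ← sum_subtype (powersetCard m univ) (fun _ => mem_powersetCard_univ)
      (fun S => if i ∈ S then m • x i - ∑ j ∈ S, x j else 0),
    sum_powersetCard_univ_ite_mem hm, Nat.cast_smul_eq_nsmul, Nat.cast_smul_eq_nsmul]

variable {H : Type*} [NormedAddCommGroup H] [InnerProductSpace ℝ H]

lemma inner_memberSum_eq_zero {v : {S : Finset α // #S = m} → Fin m → H} {y : H}
    (h : ∀ S k, ⟪y, v S k⟫ = 0) (i : α) : ⟪y, memberSum e v i⟫ = 0 := by
  rw [memberSum, inner_sum]
  refine sum_eq_zero fun S _ => ?_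
  split_ifs
  · exact h _ _
  · exact inner_zero_right y

end MemberSum

section Equicorrelated

variable {H : Type*} [NormedAddCommGroup H] [InnerProductSpace ℝ H] {ι : Type*} [DecidableEq ι]
  {x : ι → H} {ρ : ℝ}

lemma inner_eq_of_equicorrelated (hx1 : ∀ i, ⟪x i, x i⟫ = 1)
    (hx2 : ∀ i j, i ≠ j → ⟪x i, x j⟫ = ρ) (i j : ι) :
    ⟪x i, x j⟫ = ρ + (1 - ρ) * if i = j then 1 else 0 := by
  rcases eq_or_ne i j with rfl | hij
  · rw [hx1, if_pos rfl]
    ring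
  · rw [hx2 i j hij, if_neg hij]
    ring

lemma inner_sum_of_equicorrelated (hx1 : ∀ i, ⟪x i, x i⟫ = 1)
    (hx2 : ∀ i j, i ≠ j → ⟪x i, x j⟫ = ρ) (i : ι) (T : Finset ι) :
    ⟪x i, ∑ j ∈ T, x j⟫ = ρ * #T + (1 - ρ) * if i ∈ T then 1 else 0 := by
  simp only [inner_sum, inner_eq_of_equicorrelated hx1 hx2, sum_add_distrib, sum_const,
    ← mul_sum, sum_ite_eq]
  simp [mul_comm]

lemma sum_inner_of_equicorrelated [Fintype ι] (hx1 : ∀ i, ⟪x i, x i⟫ = 1)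
    (hx2 : ∀ i j, i ≠ j → ⟪x i, x j⟫ = ρ) (j : ι) :
    ⟪∑ i, x i, x j⟫ = ρ * Fintype.card ι + (1 - ρ) := by
  rw [real_inner_comm, inner_sum_of_equicorrelated hx1 hx2]
  simp

lemma inner_smul_sub_sum_of_equicorrelated (hx1 : ∀ i, ⟪x i, x i⟫ = 1)
    (hx2 : ∀ i j, i ≠ j → ⟪x i, x j⟫ = ρ) {m : ℕ} {T : Finset ι} (hT : #T = m) (i a : ι) :
    ⟪x i, (m : ℝ) • x a - ∑ j ∈ T, x j⟫
      = (1 - ρ) * (m * (if i = a then 1 else 0) - if i ∈ T then 1 else 0) := by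
  rw [inner_sub_right, real_inner_smul_right, inner_eq_of_equicorrelated hx1 hx2,
    inner_sum_of_equicorrelated hx1 hx2, hT]
  ring

lemma inner_sum_smul_sub_sum_of_equicorrelated [Fintype ι] (hx1 : ∀ i, ⟪x i, x i⟫ = 1)
    (hx2 : ∀ i j, i ≠ j → ⟪x i, x j⟫ = ρ) {m : ℕ} {T : Finset ι} (hT : #T = m) (a : ι) :
    ⟪∑ i, x i, (m : ℝ) • x a - ∑ j ∈ T, x j⟫ = 0 := by
  simp only [sum_inner, inner_smul_sub_sum_of_equicorrelated hx1 hx2 hT, ← mul_sum,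
    sum_sub_distrib, sum_ite_eq', sum_boole, filter_mem_eq_inter, univ_inter, hT]
  simp

end Equicorrelated

section Design

variable {H : Type*} [NormedAddCommGroup H] [InnerProductSpace ℝ H]
  {α : Type*} [DecidableEq α] {m : ℕ}
  {e : ∀ S : {S : Finset α // #S = m}, Fin m ≃ S.1} {x : α → H}
  {n u : {S : Finset α // #S = m} → Fin m → H} {ρ t : ℝ}

lemma inner_memberSum_of_simplex [Fintype α] (hn1 : ∀ S k, ⟪n S k, n S k⟫ = (m : ℝ) - 1)
    (hn2 : ∀ S k k', k ≠ k' → ⟪n S k, n S k'⟫ = -1)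
    (hn3 : ∀ S S' k k', S ≠ S' → ⟪n S k, n S' k'⟫ = 0)
    (i : α) (S' : {S : Finset α // #S = m}) (k' : Fin m) :
    ⟪memberSum e n i, n S' k'⟫
      = (m : ℝ) * (if i = e S' k' then 1 else 0) - if i ∈ S'.1 then 1 else 0 := by
  have hother : ∀ S ∈ univ, S ≠ S' →
      ⟪if h : i ∈ S.1 then n S ((e S).symm ⟨i, h⟩) else 0, n S' k'⟫ = 0 := by
    intro S _ hS
    split_ifs
    · exact hn3 _ _ _ _ hS
    · exact inner_zero_left _
  rw [memberSum, sum_inner, sum_eq_single S' hother (by simp)]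
  by_cases h : i ∈ S'.1
  · rw [dif_pos h, if_pos h]
    rcases eq_or_ne ((e S').symm ⟨i, h⟩) k' with hk | hk
    · have hi : i = e S' k' := by rw [← hk, Equiv.apply_symm_apply]
      rw [hk, hn1, if_pos hi]
      ring
    · have hi : i ≠ e S' k' := fun hi => hk ((Equiv.symm_apply_eq _).mpr (Subtype.ext hi))
      rw [hn2 _ _ _ hk, if_neg hi]
      ring
  · rw [dif_neg h, if_neg h, if_neg fun (hi : i = e S' k') => h (hi ▸ (e S' k').2), inner_zero_left]
    ring

lemma inner_memberSum_x_eq_zero [Fintype α] (hn4 : ∀ S k i, ⟪n S k, x i⟫ = 0) (i j : α) :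
    ⟪memberSum e n i, x j⟫ = 0 := by
  rw [real_inner_comm, inner_memberSum_eq_zero fun S k => by rw [real_inner_comm, hn4]]

lemma inner_x_u_eq (hx1 : ∀ i, ⟪x i, x i⟫ = 1) (hx2 : ∀ i j, i ≠ j → ⟪x i, x j⟫ = ρ)
    (hn4 : ∀ S k i, ⟪n S k, x i⟫ = 0)
    (hu : ∀ S k, u S k = (m : ℝ) • x (e S k) - ∑ j ∈ S.1, x j + t • n S k)
    (i : α) (S' : {S : Finset α // #S = m}) (k' : Fin m) :
    ⟪x i, u S' k'⟫
      = (1 - ρ) * ((m : ℝ) * (if i = e S' k' then 1 else 0) - if i ∈ S'.1 then 1 else 0) := by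
  rw [hu, inner_add_right, real_inner_smul_right, real_inner_comm (n S' k'), hn4,
    inner_smul_sub_sum_of_equicorrelated hx1 hx2 S'.2, mul_zero, add_zero]

lemma inner_sum_x_u_eq_zero [Fintype α] (hx1 : ∀ i, ⟪x i, x i⟫ = 1) (hx2 : ∀ i j, i ≠ j → ⟪x i, x j⟫ = ρ)
    (hn4 : ∀ S k i, ⟪n S k, x i⟫ = 0)
    (hu : ∀ S k, u S k = (m : ℝ) • x (e S k) - ∑ j ∈ S.1, x j + t • n S k)
    (S' : {S : Finset α // #S = m}) (k' : Fin m) :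
    ⟪∑ j, x j, u S' k'⟫ = 0 := by
  rw [hu, inner_add_right, real_inner_smul_right,
    inner_sum_smul_sub_sum_of_equicorrelated hx1 hx2 S'.2, sum_inner]
  simp only [real_inner_comm (n S' k'), hn4, sum_const_zero, mul_zero, add_zero]

lemma inner_memberSum_u_eq [Fintype α] (hn1 : ∀ S k, ⟪n S k, n S k⟫ = (m : ℝ) - 1)
    (hn2 : ∀ S k k', k ≠ k' → ⟪n S k, n S k'⟫ = -1)
    (hn3 : ∀ S S' k k', S ≠ S' → ⟪n S k, n S' k'⟫ = 0) (hn4 : ∀ S k i, ⟪n S k, x i⟫ = 0)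
    (hu : ∀ S k, u S k = (m : ℝ) • x (e S k) - ∑ j ∈ S.1, x j + t • n S k)
    (i : α) (S' : {S : Finset α // #S = m}) (k' : Fin m) :
    ⟪memberSum e n i, u S' k'⟫
      = t * ((m : ℝ) * (if i = e S' k' then 1 else 0) - if i ∈ S'.1 then 1 else 0) := by
  have hn_contrast : ∀ S k, ⟪(m : ℝ) • x (e S' k') - ∑ j ∈ S'.1, x j, n S k⟫ = 0 := by
    intro S k
    rw [real_inner_comm]
    simp only [inner_sub_right, real_inner_smul_right, inner_sum, hn4, sum_const_zero, mul_zero,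
      sub_zero]
  rw [hu, inner_add_right, real_inner_smul_right, inner_memberSum_of_simplex hn1 hn2 hn3,
    real_inner_comm, inner_memberSum_eq_zero hn_contrast, zero_add]

end Design

theorem stmt_7_general {H : Type*} [NormedAddCommGroup H] [InnerProductSpace ℝ H]
    (ℓ m : ℕ) (hm : 2 ≤ m)
    (ρ γ : ℝ) (hρ₂ : ρ < 1) (hγ : 0 < γ)
    (x : Fin ℓ → H)
    (hx1 : ∀ i, ⟪x i, x i⟫ = 1)
    (hx2 : ∀ i j, i ≠ j → ⟪x i, x j⟫ = ρ)
    (n : {S : Finset (Fin ℓ) // S.card = m} → Fin m → H)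
    (hn1 : ∀ S k, ⟪n S k, n S k⟫ = (m : ℝ) - 1)
    (hn2 : ∀ S k k', k ≠ k' → ⟪n S k, n S k'⟫ = -1)
    (hn3 : ∀ S S' k k', S ≠ S' → ⟪n S k, n S' k'⟫ = 0)
    (hn4 : ∀ S k i, ⟪n S k, x i⟫ = 0)
    (u : {S : Finset (Fin ℓ) // S.card = m} → Fin m → H)
    (hu : ∀ S k, u S k =
      (m : ℝ) • x ((S.1.orderIsoOfFin S.2 k : {a // a ∈ S.1}) : Fin ℓ)
        - ∑ j ∈ S.1, x j + Real.sqrt γ • n S k)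
    (κ : ℝ)
    (hκ : κ = (1 - ρ) / (γ + ((ℓ - 2).choose (m - 2) : ℝ) * (ℓ : ℝ) * (1 - ρ)))
    (xhat : Fin ℓ → H)
    (hxhat : ∀ i, xhat i = κ • ∑ S : {S : Finset (Fin ℓ) // S.card = m},
        if h : i ∈ S.1 then u S ((S.1.orderIsoOfFin S.2).symm ⟨i, h⟩) else 0) :
    (∀ i S' k', ⟪x i - xhat i, u S' k'⟫ = 0) ∧
    (∀ i j, ⟪x i - xhat i, x j - xhat j⟫ =
      if i = j then
        1 - ((ℓ - 2).choose (m - 2) : ℝ) * ((ℓ : ℝ) - 1) * (1 - ρ) ^ 2 /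
          (γ + ((ℓ - 2).choose (m - 2) : ℝ) * (ℓ : ℝ) * (1 - ρ))
      else
        ρ + ((ℓ - 2).choose (m - 2) : ℝ) * (1 - ρ) ^ 2 /
          (γ + ((ℓ - 2).choose (m - 2) : ℝ) * (ℓ : ℝ) * (1 - ρ))) := by
  set e : ∀ S : {S : Finset (Fin ℓ) // #S = m}, Fin m ≃ S.1 :=
    fun S => (S.1.orderIsoOfFin S.2).toEquiv
  have hu' : ∀ S k, u S k = (m : ℝ) • x (e S k) - ∑ j ∈ S.1, x j + √γ • n S k := hu
  set N : ℝ := ((ℓ - 2).choose (m - 2) : ℝ)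
  have hxhat' : ∀ i, xhat i = κ • (N • ((ℓ : ℝ) • x i - ∑ j, x j) + √γ • memberSum e n i) := by
    intro i
    have h := memberSum_eq_of_eq_smul_sub_sum_add hm hu' i
    rw [Fintype.card_fin] at h
    rw [hxhat i, ← h]
    rfl
  have hκD : κ * (γ + N * ℓ * (1 - ρ)) = 1 - ρ := by
    have : 0 < 1 - ρ := sub_pos.mpr hρ₂
    rw [hκ, div_mul_cancel₀ _ (by positivity)]
  have ha : ∀ i S' k', ⟪x i - xhat i, u S' k'⟫ = 0 := by
    intro i S' k'
    simp only [hxhat', inner_sub_left, inner_add_left, real_inner_smul_left,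
      inner_x_u_eq hx1 hx2 hn4 hu', inner_sum_x_u_eq_zero hx1 hx2 hn4 hu',
      inner_memberSum_u_eq hn1 hn2 hn3 hn4 hu']
    set w : ℝ := (m : ℝ) * (if i = e S' k' then 1 else 0) - if i ∈ S'.1 then 1 else 0
    linear_combination (-w) * hκD - κ * w * Real.mul_self_sqrt hγ.le
  refine ⟨ha, fun i j => ?_⟩
  have hxhat_u : xhat j = κ • memberSum e u j := hxhat j
  rw [inner_sub_right, hxhat_u, real_inner_smul_right, inner_memberSum_eq_zero (ha i), mul_zero,
    sub_zero]
  simp only [hxhat', inner_sub_left, inner_add_left, real_inner_smul_left,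
    inner_memberSum_x_eq_zero hn4, sum_inner_of_equicorrelated hx1 hx2, Fintype.card_fin,
    inner_eq_of_equicorrelated hx1 hx2 i j, hκ]
  split_ifs <;> field_simp <;> ring

/-- Proposition 4, second-moment form: with `u_{S,k} = m·x_{i_k} - ∑_{j∈S} x_j
+ √γ·n_{S,k}` and `x̂_i = κ·∑_{S∋i} u_{S,τ_S(i)}`, the errors `x_i - x̂_i` are orthogonal to
all `u_{S',k'}`, and their Gram matrix has diagonal entries `d⁻(γ)` and off-diagonal
entries `θ⁻(γ)`. -/
theorem stmt_7 {H : Type*} [NormedAddCommGroup H] [InnerProductSpace ℝ H]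
    (ℓ m : ℕ) (hℓ : 2 ≤ ℓ) (hm : 2 ≤ m) (hmℓ : m ≤ ℓ)
    (ρ γ : ℝ) (hρ₁ : -(1 / ((ℓ : ℝ) - 1)) < ρ) (hρ₂ : ρ < 1) (hγ : 0 < γ)
    (x : Fin ℓ → H)
    (hx1 : ∀ i, ⟪x i, x i⟫ = 1)
    (hx2 : ∀ i j, i ≠ j → ⟪x i, x j⟫ = ρ)
    (n : {S : Finset (Fin ℓ) // S.card = m} → Fin m → H)
    (hn1 : ∀ S k, ⟪n S k, n S k⟫ = (m : ℝ) - 1)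
    (hn2 : ∀ S k k', k ≠ k' → ⟪n S k, n S k'⟫ = -1)
    (hn3 : ∀ S S' k k', S ≠ S' → ⟪n S k, n S' k'⟫ = 0)
    (hn4 : ∀ S k i, ⟪n S k, x i⟫ = 0)
    (u : {S : Finset (Fin ℓ) // S.card = m} → Fin m → H)
    (hu : ∀ S k, u S k =
      (m : ℝ) • x ((S.1.orderIsoOfFin S.2 k : {a // a ∈ S.1}) : Fin ℓ)
        - ∑ j ∈ S.1, x j + Real.sqrt γ • n S k)
    (κ : ℝ)
    (hκ : κ = (1 - ρ) / (γ + ((ℓ - 2).choose (m - 2) : ℝ) * (ℓ : ℝ) * (1 - ρ)))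
    (xhat : Fin ℓ → H)
    (hxhat : ∀ i, xhat i = κ • ∑ S : {S : Finset (Fin ℓ) // S.card = m},
        if h : i ∈ S.1 then u S ((S.1.orderIsoOfFin S.2).symm ⟨i, h⟩) else 0) :
    (∀ i S' k', ⟪x i - xhat i, u S' k'⟫ = 0) ∧
    (∀ i j, ⟪x i - xhat i, x j - xhat j⟫ =
      if i = j then
        1 - ((ℓ - 2).choose (m - 2) : ℝ) * ((ℓ : ℝ) - 1) * (1 - ρ) ^ 2 /
          (γ + ((ℓ - 2).choose (m - 2) : ℝ) * (ℓ : ℝ) * (1 - ρ))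
      else
        ρ + ((ℓ - 2).choose (m - 2) : ℝ) * (1 - ρ) ^ 2 /
          (γ + ((ℓ - 2).choose (m - 2) : ℝ) * (ℓ : ℝ) * (1 - ρ))) :=
  stmt_7_general ℓ m hm ρ γ hρ₂ hγ x hx1 hx2 n hn1 hn2 hn3 hn4 u hu κ hκ xhat hxhat
end

section
/- (Proposition 5, second-moment form.) Let H be a real inner product space, let ℓ ≥ 2 and 1 ≤ m ≤ ℓ be integers, ρ ∈ (0,1), and γ > 0. Let I be the collection of all m-element subsets of {1,…,ℓ}. Suppose x₁,…,x_ℓ ∈ H satisfy ⟨x_i, x_i⟩ = 1 and ⟨x_i, x_j⟩ = ρ for i ≠ j, and vectors n_S ∈ H (S ∈ I) satisfy ⟨n_S, n_S⟩ = 1, ⟨n_S, n_{S'}⟩ = 0 for S ≠ S', and ⟨n_S, x_i⟩ = 0 for all i, S. Define u_S = Σ_{i ∈ S} x_i + √γ·n_S. Let α = ((1+(m−1)ρ)γ + C(ℓ−2,m−1)·m(1−ρ)(1+(ℓ−1)ρ))/(γ² + η₂γ + η₁) and β = (mργ − C(ℓ−2,m−2)·m(1−ρ)(1+(ℓ−1)ρ))/(γ²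 + η₂γ + η₁), and set x̂_i = α·Σ_{S ∈ I : i ∈ S} u_S + β·Σ_{S ∈ I : i ∉ S} u_S. Then: (a) ⟨x_i − x̂_i, u_{S'}⟩ = 0 for every i ∈ {1,…,ℓ} and S' ∈ I; and (b) ⟨x_i − x̂_i, x_j − x̂_j⟩ equals d⁺(γ) if i = j and equals θ⁺(γ) if i ≠ j. -/
open scoped RealInnerProductSpace

/-- Binomial coefficient `C(n,k)` with integer lower index, equal to `0` when `k < 0`. -/
noncomputable def Cb (n : ℕ) (k : ℤ) : ℝ := if 0 ≤ k then (n.choose k.toNat : ℝ) else 0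

noncomputable def eta1 (ℓ m : ℕ) (ρ : ℝ) : ℝ :=
  Cb (ℓ - 1) ((m : ℤ) - 1) * Cb (ℓ - 2) ((m : ℤ) - 1) * (m : ℝ) * (1 - ρ) *
    (1 + ((ℓ : ℝ) - 1) * ρ)

noncomputable def eta2 (ℓ m : ℕ) (ρ : ℝ) : ℝ :=
  Cb (ℓ - 1) ((m : ℤ) - 1) * (1 + ((m : ℝ) - 1) * ρ)
    + Cb (ℓ - 2) ((m : ℤ) - 1) * (m : ℝ) * (1 + ((ℓ : ℝ) - 2) * ρ)
    + Cb (ℓ - 2) ((m : ℤ) - 2) * (((ℓ : ℝ) - 1) * (m : ℝ) * ρ + ((m : ℝ) - 1) * (1 - ρ))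

noncomputable def eta3 (ℓ m : ℕ) (ρ : ℝ) : ℝ :=
  Cb (ℓ - 1) ((m : ℤ) - 1) * (1 + ((m : ℝ) - 1) * ρ)
    + Cb (ℓ - 2) ((m : ℤ) - 1) * ((ℓ : ℝ) - 1) * (m : ℝ) * ρ ^ 2
    + Cb (ℓ - 2) ((m : ℤ) - 2) * ((ℓ : ℝ) - 1) * ρ * (1 + ((m : ℝ) - 1) * ρ)

noncomputable def eta4 (ℓ m : ℕ) (ρ : ℝ) : ℝ :=
  Cb (ℓ - 1) ((m : ℤ) - 1) * ρ * (1 + ((m : ℝ) - 1) * ρ)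
    + Cb (ℓ - 2) ((m : ℤ) - 1) * (m : ℝ) * ρ * (1 + ((ℓ : ℝ) - 2) * ρ)
    + Cb (ℓ - 2) ((m : ℤ) - 2) * (1 + ((ℓ : ℝ) - 2) * ρ) * (1 + ((m : ℝ) - 1) * ρ)

/- ## Auxiliary lemmas -/

lemma Cb_eq (n k : ℕ) : Cb n (k : ℤ) = (n.choose k : ℝ) := by simp [Cb]

lemma Cb_nonneg (n : ℕ) (k : ℤ) : 0 ≤ Cb n k := by
  unfold Cb; split <;> positivity

lemma chooseR (n k : ℕ) : (n.choose (k+1) : ℝ) * (k+1) = (n.choose k : ℝ) * ((n:ℝ) - k) := by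
  rcases le_or_gt k n with h | h
  · have h1 := Nat.choose_succ_right_eq n k
    have h3 : ((n.choose (k+1) * (k+1) : ℕ) : ℝ) = ((n.choose k * (n - k) : ℕ) : ℝ) := by
      exact_mod_cast h1
    push_cast [Nat.cast_sub h] at h3
    linarith
  · have h1 : n.choose (k+1) = 0 := Nat.choose_eq_zero_of_lt (by omega)
    have h2 : n.choose k = 0 := Nat.choose_eq_zero_of_lt h
    simp [h1, h2]

lemma relA (ℓ m : ℕ) (hℓ : 2 ≤ ℓ) (hm : 1 ≤ m) :
    Cb (ℓ-1) ((m:ℤ)-1) = Cb (ℓ-2) ((m:ℤ)-1) + Cb (ℓ-2) ((m:ℤ)-2) := by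
  rcases Nat.lt_or_ge m 2 with h | h
  · have hm1 : m = 1 := by omega
    subst hm1
    norm_num [Cb]
  · obtain ⟨l2, rfl⟩ : ∃ l2, ℓ = l2 + 2 := ⟨ℓ-2, by omega⟩
    obtain ⟨m2, rfl⟩ : ∃ m2, m = m2 + 2 := ⟨m-2, by omega⟩
    rw [show ((m2+2:ℕ):ℤ)-1 = ((m2+1:ℕ):ℤ) by push_cast; ring,
        show ((m2+2:ℕ):ℤ)-2 = ((m2:ℕ):ℤ) by push_cast; ring,
        show (l2+2)-1 = l2+1 from rfl, show (l2+2)-2 = l2 from rfl, Cb_eq, Cb_eq, Cb_eq]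
    rw [show (l2+1).choose (m2+1) = l2.choose m2 + l2.choose (m2+1) from Nat.choose_succ_succ l2 m2]
    push_cast
    ring

lemma relN (ℓ m : ℕ) (hℓ : 2 ≤ ℓ) (hm : 1 ≤ m) :
    (ℓ.choose m : ℝ) = Cb (ℓ-1) ((m:ℤ)-1) + Cb (ℓ-2) ((m:ℤ)-1) + ((ℓ-2).choose m : ℝ) := by
  obtain ⟨l2, rfl⟩ : ∃ l2, ℓ = l2 + 2 := ⟨ℓ-2, by omega⟩
  obtain ⟨m1, rfl⟩ : ∃ m1, m = m1 + 1 := ⟨m-1, by omega⟩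
  rw [show ((m1+1:ℕ):ℤ)-1 = ((m1:ℕ):ℤ) by push_cast; ring,
      show (l2+2)-1 = l2+1 from rfl, show (l2+2)-2 = l2 from rfl, Cb_eq, Cb_eq]
  have h1 := Nat.choose_succ_succ (l2+1) m1
  have h2 := Nat.choose_succ_succ l2 m1
  push_cast [h1, h2]
  ring

lemma relE (ℓ m : ℕ) (hℓ : 2 ≤ ℓ) (hm : 1 ≤ m) :
    (m:ℝ) * ((ℓ-2).choose m : ℝ) = ((ℓ:ℝ)-1-(m:ℝ)) * Cb (ℓ-2) ((m:ℤ)-1) := by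
  obtain ⟨m1, rfl⟩ : ∃ m1, m = m1 + 1 := ⟨m-1, by omega⟩
  rw [show ((m1+1:ℕ):ℤ)-1 = ((m1:ℕ):ℤ) by push_cast; ring, Cb_eq]
  have h1 := chooseR (ℓ-2) m1
  have h2 : ((ℓ-2:ℕ):ℝ) = (ℓ:ℝ) - 2 := by
    push_cast [Nat.cast_sub (by omega : 2 ≤ ℓ)]; ring
  rw [h2] at h1
  push_cast
  linarith [h1]

lemma rel3 (ℓ m : ℕ) (hℓ : 2 ≤ ℓ) (hm : 1 ≤ m) :
    ((m:ℝ)-1) * Cb (ℓ-2) ((m:ℤ)-1) = ((ℓ:ℝ)-(m:ℝ)) * Cb (ℓ-2) ((m:ℤ)-2) := by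
  rcases Nat.lt_or_ge m 2 with h | h
  · have hm1 : m = 1 := by omega
    subst hm1
    norm_num [Cb]
  · obtain ⟨m2, rfl⟩ : ∃ m2, m = m2 + 2 := ⟨m-2, by omega⟩
    rw [show ((m2+2:ℕ):ℤ)-1 = ((m2+1:ℕ):ℤ) by push_cast; ring,
        show ((m2+2:ℕ):ℤ)-2 = ((m2:ℕ):ℤ) by push_cast; ring, Cb_eq, Cb_eq]
    have h1 := chooseR (ℓ-2) m2
    have h2 : ((ℓ-2:ℕ):ℝ) = (ℓ:ℝ) - 2 := by
      push_cast [Nat.cast_sub (by omega : 2 ≤ ℓ)]; ring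
    rw [h2] at h1
    push_cast
    linarith [h1]

lemma card_filter_mem {X : Type*} [DecidableEq X] (s : Finset X) (i : X) (hi : i ∈ s) (k : ℕ)
    (p : Finset X → Prop) [DecidablePred p] (hp : ∀ t : Finset X, i ∉ t → (p (insert i t) ↔ p t)) :
    ((s.powersetCard (k+1)).filter fun t => i ∈ t ∧ p t).card
      = (((s.erase i).powersetCard k).filter p).card := by
  refine Finset.card_bij' (fun t _ => t.erase i) (fun t _ => insert i t) ?_ ?_ ?_ ?_
  · intro t ht
    simp only [Finset.mem_filter, Finset.mem_powersetCard] at ht ⊢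
    obtain ⟨⟨hts, htc⟩, hit, hpt⟩ := ht
    refine ⟨⟨Finset.erase_subset_erase i hts, ?_⟩, ?_⟩
    · rw [Finset.card_erase_of_mem hit, htc]; omega
    · rwa [← hp _ (Finset.notMem_erase i t), Finset.insert_erase hit]
  · intro t ht
    simp only [Finset.mem_filter, Finset.mem_powersetCard] at ht ⊢
    obtain ⟨⟨hts, htc⟩, hpt⟩ := ht
    have hit : i ∉ t := fun h => Finset.notMem_erase i s (hts h)
    refine ⟨⟨?_, ?_⟩, ?_, ?_⟩
    · exact Finset.insert_subset hi ((hts.trans (Finset.erase_subset i s)))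
    · rw [Finset.card_insert_of_notMem hit, htc]
    · exact Finset.mem_insert_self i t
    · rwa [hp _ hit]
  · intro t ht
    simp only [Finset.mem_filter] at ht
    exact Finset.insert_erase ht.2.1
  · intro t ht
    simp only [Finset.mem_filter, Finset.mem_powersetCard] at ht
    exact Finset.erase_insert (fun h => Finset.notMem_erase i s (ht.1.1 h))

lemma cnt1 (ℓ m : ℕ) (hm : 1 ≤ m) (i : Fin ℓ) :
    ((Finset.powersetCard m (Finset.univ : Finset (Fin ℓ))).filter fun t => i ∈ t).card
      = (ℓ-1).choose (m-1) := by
  obtain ⟨m1, rfl⟩ : ∃ m1, m = m1 + 1 := ⟨m-1, by omega⟩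
  have h := card_filter_mem (Finset.univ : Finset (Fin ℓ)) i (Finset.mem_univ i) m1
    (fun _ => True) (fun t _ => Iff.rfl)
  simp only [and_true, Finset.filter_true] at h
  rw [h, Finset.card_powersetCard, Finset.card_erase_of_mem (Finset.mem_univ i),
    Finset.card_univ, Fintype.card_fin]
  congr 1

lemma cnt2 (ℓ m : ℕ) (hm : 2 ≤ m) (i j : Fin ℓ) (hij : i ≠ j) :
    ((Finset.powersetCard m (Finset.univ : Finset (Fin ℓ))).filter
        fun t => i ∈ t ∧ j ∈ t).card = (ℓ-2).choose (m-2) := by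
  obtain ⟨m2, rfl⟩ : ∃ m2, m = m2 + 2 := ⟨m-2, by omega⟩
  have h1 := card_filter_mem (Finset.univ : Finset (Fin ℓ)) i (Finset.mem_univ i) (m2+1)
    (fun t => j ∈ t) (fun t _ => by simp [Finset.mem_insert, Ne.symm hij])
  have hji : j ∈ (Finset.univ : Finset (Fin ℓ)).erase i :=
    Finset.mem_erase.mpr ⟨Ne.symm hij, Finset.mem_univ j⟩
  have h2 := card_filter_mem ((Finset.univ : Finset (Fin ℓ)).erase i) j hji m2
    (fun _ => True) (fun t _ => Iff.rfl)
  simp only [and_true, Finset.filter_true] at h2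
  rw [h1, h2, Finset.card_powersetCard, Finset.card_erase_of_mem hji,
    Finset.card_erase_of_mem (Finset.mem_univ i), Finset.card_univ, Fintype.card_fin]
  congr 1

lemma cnt2one (ℓ : ℕ) (i j : Fin ℓ) (hij : i ≠ j) :
    ((Finset.powersetCard 1 (Finset.univ : Finset (Fin ℓ))).filter
        fun t => i ∈ t ∧ j ∈ t).card = 0 := by
  rw [Finset.card_eq_zero, Finset.filter_eq_empty_iff]
  intro t ht
  rintro ⟨h1, h2⟩
  have hc : t.card = 1 := (Finset.mem_powersetCard.mp ht).2
  have : 1 < t.card := Finset.one_lt_card.mpr ⟨i, h1, j, h2, hij⟩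
  omega

/- ## Key polynomial identities -/

lemma key1p (Lr Mr r g A B C E N : ℝ) (hA : A = B + C) (hN : N = A + B + E)
    (hE : Mr*E = (Lr-1-Mr)*B) (h3 : (Mr-1)*B = (Lr-Mr)*C) :
    (Mr*r + (1-r)) * (g^2 + (A*(1+(Mr-1)*r) + B*Mr*(1+(Lr-2)*r)
        + C*((Lr-1)*Mr*r + (Mr-1)*(1-r)))*g + A*B*Mr*(1-r)*(1+(Lr-1)*r))
      = ((1+(Mr-1)*r)*g + B*Mr*(1-r)*(1+(Lr-1)*r))
          * (Mr^2*r*A + (1-r)*(Mr*C + (A-C)) + g)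
        + (Mr*r*g - C*Mr*(1-r)*(1+(Lr-1)*r))
          * ((Mr^2*r*N + (1-r)*Mr*A + g) - (Mr^2*r*A + (1-r)*(Mr*C + (A-C)) + g)) := by
  subst hN; subst hA
  linear_combination (Mr^2*r*C - 2*Mr^2*r^2*C - Mr^2*r^2*g + Mr^2*r^3*C + Lr*Mr^2*r^2*C
      - Lr*Mr^2*r^3*C) * hE
    + (-(Mr*r*g) + Mr*r^2*g - Mr^2*r*B + 2*Mr^2*r^2*B - Mr^2*r^2*g - Mr^2*r^3*B
      - Lr*Mr^2*r^2*B + Lr*Mr^2*r^3*B) * h3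

lemma key2p (Lr Mr r g A B C E N : ℝ) (hA : A = B + C) (hN : N = A + B + E)
    (hE : Mr*E = (Lr-1-Mr)*B) (h3 : (Mr-1)*B = (Lr-Mr)*C) :
    (Mr*r) * (g^2 + (A*(1+(Mr-1)*r) + B*Mr*(1+(Lr-2)*r)
        + C*((Lr-1)*Mr*r + (Mr-1)*(1-r)))*g + A*B*Mr*(1-r)*(1+(Lr-1)*r))
      = ((1+(Mr-1)*r)*g + B*Mr*(1-r)*(1+(Lr-1)*r))
          * (Mr^2*r*A + (1-r)*(Mr*C))
        + (Mr*r*g - C*Mr*(1-r)*(1+(Lr-1)*r))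
          * ((Mr^2*r*N + (1-r)*Mr*A + g) - (Mr^2*r*A + (1-r)*(Mr*C))) := by
  subst hN; subst hA
  linear_combination (Mr^2*r*C - 2*Mr^2*r^2*C - Mr^2*r^2*g + Mr^2*r^3*C + Lr*Mr^2*r^2*C
      - Lr*Mr^2*r^3*C) * hE
    + (-(Mr*r*g) + Mr*r^2*g - Mr^2*r*B + 2*Mr^2*r^2*B - Mr^2*r^2*g - Mr^2*r^3*B
      - Lr*Mr^2*r^2*B + Lr*Mr^2*r^3*B) * h3

lemma key3p (Lr Mr r g A B C E N : ℝ) (hA : A = B + C) (hN : N = A + B + E)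
    (hE : Mr*E = (Lr-1-Mr)*B) (h3 : (Mr-1)*B = (Lr-Mr)*C) :
    ((1+(Mr-1)*r)*g + B*Mr*(1-r)*(1+(Lr-1)*r)) * (Mr*r*A + (1-r)*A)
      + (Mr*r*g - C*Mr*(1-r)*(1+(Lr-1)*r))
        * ((Mr*r*N + (1-r)*A) - (Mr*r*A + (1-r)*A))
    = (A*(1+(Mr-1)*r) + B*(Lr-1)*Mr*r^2 + C*(Lr-1)*r*(1+(Mr-1)*r))*g
      + A*B*Mr*(1-r)*(1+(Lr-1)*r) := by
  subst hN; subst hA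
  linear_combination -((Mr*r*C - 2*Mr*r^2*C - Mr*r^2*g + Mr*r^3*C + Lr*Mr*r^2*C
      - Lr*Mr*r^3*C) * hE
    + (-(r*g) + r^2*g - Mr*r*B + 2*Mr*r^2*B - Mr*r^2*g - Mr*r^3*B
      - Lr*Mr*r^2*B + Lr*Mr*r^3*B) * h3)

lemma key4p (Lr Mr r g A B C E N : ℝ) (hA : A = B + C) (hN : N = A + B + E)
    (hE : Mr*E = (Lr-1-Mr)*B) (h3 : (Mr-1)*B = (Lr-Mr)*C) :
    ((1+(Mr-1)*r)*g + B*Mr*(1-r)*(1+(Lr-1)*r)) * (Mr*r*A + (1-r)*C)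
      + (Mr*r*g - C*Mr*(1-r)*(1+(Lr-1)*r))
        * ((Mr*r*N + (1-r)*A) - (Mr*r*A + (1-r)*C))
    = (A*r*(1+(Mr-1)*r) + B*Mr*r*(1+(Lr-2)*r) + C*(1+(Lr-2)*r)*(1+(Mr-1)*r))*g
      + A*B*Mr*(1-r)*(1+(Lr-1)*r)*r := by
  subst hN; subst hA
  linear_combination -((Mr*r*C - 2*Mr*r^2*C - Mr*r^2*g + Mr*r^3*C + Lr*Mr*r^2*C
      - Lr*Mr*r^3*C) * hE
    + (-(r*g) + r^2*g - Mr*r*B + 2*Mr*r^2*B - Mr*r^2*g - Mr*r^3*B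
      - Lr*Mr*r^2*B + Lr*Mr*r^3*B) * h3)

set_option maxHeartbeats 2000000 in
/-- Proposition 5, second-moment form: with `u_S = ∑_{i∈S} x_i + √γ·n_S` and
`x̂_i = α·∑_{S∋i} u_S + β·∑_{S∌i} u_S`, the errors `x_i - x̂_i` are orthogonal to all `u_{S'}`,
and their Gram matrix has diagonal entries `d⁺(γ)` and off-diagonal entries `θ⁺(γ)`. -/
theorem stmt_8 {H : Type*} [NormedAddCommGroup H] [InnerProductSpace ℝ H]
    (ℓ m : ℕ) (hℓ : 2 ≤ ℓ) (hm : 1 ≤ m) (hmℓ : m ≤ ℓ)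
    (ρ γ : ℝ) (hρ₁ : 0 < ρ) (hρ₂ : ρ < 1) (hγ : 0 < γ)
    (x : Fin ℓ → H)
    (hx1 : ∀ i, ⟪x i, x i⟫ = 1)
    (hx2 : ∀ i j, i ≠ j → ⟪x i, x j⟫ = ρ)
    (n : {S : Finset (Fin ℓ) // S.card = m} → H)
    (hn1 : ∀ S, ⟪n S, n S⟫ = 1)
    (hn2 : ∀ S S', S ≠ S' → ⟪n S, n S'⟫ = 0)
    (hn3 : ∀ S i, ⟪n S, x i⟫ = 0)
    (u : {S : Finset (Fin ℓ) // S.card = m} → H)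
    (hu : ∀ S, u S = (∑ i ∈ S.1, x i) + Real.sqrt γ • n S)
    (α β : ℝ)
    (hα : α = ((1 + ((m : ℝ) - 1) * ρ) * γ
        + Cb (ℓ - 2) ((m : ℤ) - 1) * (m : ℝ) * (1 - ρ) * (1 + ((ℓ : ℝ) - 1) * ρ)) /
      (γ ^ 2 + eta2 ℓ m ρ * γ + eta1 ℓ m ρ))
    (hβ : β = ((m : ℝ) * ρ * γ
        - Cb (ℓ - 2) ((m : ℤ) - 2) * (m : ℝ) * (1 - ρ) * (1 + ((ℓ : ℝ) - 1) * ρ)) /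
      (γ ^ 2 + eta2 ℓ m ρ * γ + eta1 ℓ m ρ))
    (xhat : Fin ℓ → H)
    (hxhat : ∀ i, xhat i =
      α • (∑ S : {S : Finset (Fin ℓ) // S.card = m}, if i ∈ S.1 then u S else 0)
        + β • (∑ S : {S : Finset (Fin ℓ) // S.card = m}, if i ∈ S.1 then 0 else u S)) :
    (∀ i S', ⟪x i - xhat i, u S'⟫ = 0) ∧
    (∀ i j, ⟪x i - xhat i, x j - xhat j⟫ =
      if i = j then
        1 - (eta3 ℓ m ρ * γ + eta1 ℓ m ρ) / (γ ^ 2 + eta2 ℓ m ρ * γ + eta1 ℓ m ρ)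
      else
        ρ - (eta4 ℓ m ρ * γ + eta1 ℓ m ρ * ρ) / (γ ^ 2 + eta2 ℓ m ρ * γ + eta1 ℓ m ρ)) := by
  have hLcast : (2:ℝ) ≤ ((ℓ : ℝ)) := by exact_mod_cast hℓ
  have hMcast : (1:ℝ) ≤ ((m : ℝ)) := by exact_mod_cast hm
  have hA0 : 0 ≤ (Cb (ℓ - 1) ((m : ℤ) - 1)) := Cb_nonneg _ _
  have hB0 : 0 ≤ (Cb (ℓ - 2) ((m : ℤ) - 1)) := Cb_nonneg _ _
  have hC0 : 0 ≤ (Cb (ℓ - 2) ((m : ℤ) - 2)) := Cb_nonneg _ _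
  -- the denominator is nonzero
  have hD0 : γ ^ 2 + eta2 ℓ m ρ * γ + eta1 ℓ m ρ ≠ 0 := by
    have h2 : 0 ≤ eta2 ℓ m ρ := by
      rw [eta2]
      have t2 : (0:ℝ) ≤ 1 + (((m : ℝ)) - 1) * ρ := by nlinarith
      have t3 : (0:ℝ) ≤ 1 + (((ℓ : ℝ)) - 2) * ρ := by nlinarith
      have t4 : (0:ℝ) ≤ (((ℓ : ℝ)) - 1) * ((m : ℝ)) * ρ + (((m : ℝ)) - 1) * (1 - ρ) := by nlinarith
      have hM0 : (0:ℝ) ≤ ((m : ℝ)) := by linarith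
      have q1 := mul_nonneg hA0 t2
      have q2 := mul_nonneg (mul_nonneg hB0 hM0) t3
      have q3 := mul_nonneg hC0 t4
      linarith
    have h1 : 0 ≤ eta1 ℓ m ρ := by
      rw [eta1]
      have t1 : (0:ℝ) ≤ 1 + (((ℓ : ℝ)) - 1) * ρ := by nlinarith
      have q1 : (0:ℝ) ≤ (Cb (ℓ - 1) ((m : ℤ) - 1)) * (Cb (ℓ - 2) ((m : ℤ) - 1)) * ((m : ℝ)) * (1 - ρ) :=
        mul_nonneg (mul_nonneg (mul_nonneg hA0 hB0) (by linarith)) (by linarith)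
      exact mul_nonneg q1 t1
    have hg2 : 0 < γ ^ 2 := by positivity
    have h2g : 0 ≤ eta2 ℓ m ρ * γ := mul_nonneg h2 hγ.le
    exact ne_of_gt (by linarith)
  have hαD : α * (γ ^ 2 + eta2 ℓ m ρ * γ + eta1 ℓ m ρ)
      = (1 + (((m : ℝ)) - 1) * ρ) * γ + (Cb (ℓ - 2) ((m : ℤ) - 1)) * ((m : ℝ)) * (1 - ρ) * (1 + (((ℓ : ℝ)) - 1) * ρ) := by
    rw [hα]; exact div_mul_cancel₀ _ hD0
  have hβD : β * (γ ^ 2 + eta2 ℓ m ρ * γ + eta1 ℓ m ρ)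
      = ((m : ℝ)) * ρ * γ - (Cb (ℓ - 2) ((m : ℤ) - 2)) * ((m : ℝ)) * (1 - ρ) * (1 + (((ℓ : ℝ)) - 1) * ρ) := by
    rw [hβ]; exact div_mul_cancel₀ _ hD0
  simp only [eta1, eta2] at hαD hβD
  -- binomial relations
  have hAeq : (Cb (ℓ - 1) ((m : ℤ) - 1)) = (Cb (ℓ - 2) ((m : ℤ) - 1)) + (Cb (ℓ - 2) ((m : ℤ) - 2)) := relA ℓ m hℓ hm
  have hNeq : ((ℓ.choose m : ℝ)) = (Cb (ℓ - 1) ((m : ℤ) - 1)) + (Cb (ℓ - 2) ((m : ℤ) - 1)) + (((ℓ - 2).choose m : ℝ)) := relN ℓ m hℓ hm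
  have hEeq : ((m : ℝ)) * (((ℓ - 2).choose m : ℝ)) = (((ℓ : ℝ)) - 1 - ((m : ℝ))) * (Cb (ℓ - 2) ((m : ℤ) - 1)) := relE ℓ m hℓ hm
  have h3eq : (((m : ℝ)) - 1) * (Cb (ℓ - 2) ((m : ℤ) - 1)) = (((ℓ : ℝ)) - ((m : ℝ))) * (Cb (ℓ - 2) ((m : ℤ) - 2)) := rel3 ℓ m hℓ hm
  -- basic inner products
  have hxx : ∀ i k : Fin ℓ, ⟪x i, x k⟫ = ρ + (if i = k then 1 - ρ else 0) := by
    intro i k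
    by_cases h : i = k
    · subst h; rw [hx1 i, if_pos rfl]; ring
    · rw [hx2 i k h, if_neg h]; ring
  have hxu : ∀ (i : Fin ℓ) (S : {S : Finset (Fin ℓ) // S.card = m}),
      ⟪x i, u S⟫ = ((m : ℝ)) * ρ + (if i ∈ S.1 then 1 - ρ else 0) := by
    intro i S
    have hns : ⟪x i, Real.sqrt γ • n S⟫ = 0 := by
      rw [real_inner_smul_right, real_inner_comm (n S) (x i), hn3 S i, mul_zero]
    rw [hu S, inner_add_right, hns, add_zero, inner_sum]
    rw [Finset.sum_congr rfl (fun k _ => hxx i k), Finset.sum_add_distrib,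
      Finset.sum_const, S.2, nsmul_eq_mul, Finset.sum_ite_eq]

  -- basic inner products (cont.)
  have hux : ∀ (S : {S : Finset (Fin ℓ) // S.card = m}) (j : Fin ℓ),
      ⟪u S, x j⟫ = ((m : ℝ)) * ρ + (if j ∈ S.1 then 1 - ρ else 0) := by
    intro S j
    rw [real_inner_comm]
    exact hxu j S
  have huu : ∀ S T : {S : Finset (Fin ℓ) // S.card = m},
      ⟪u S, u T⟫ = ((m : ℝ))^2 * ρ + ((S.1 ∩ T.1).card : ℝ) * (1 - ρ)
        + (if S = T then γ else 0) := by
    intro S T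
    have hns2 : ⟪n S, u T⟫ = Real.sqrt γ * (if S = T then 1 else 0) := by
      rw [hu T, inner_add_right, inner_sum, real_inner_smul_right]
      rw [Finset.sum_congr rfl (fun k _ => hn3 S k), Finset.sum_const_zero, zero_add]
      by_cases h : S = T
      · rw [if_pos h, h, hn1, mul_one]
      · rw [if_neg h, hn2 S T h, mul_zero]
    rw [hu S, inner_add_left, sum_inner, real_inner_smul_left, hns2]
    rw [Finset.sum_congr rfl (fun k _ => hxu k T), Finset.sum_add_distrib,
      Finset.sum_const, S.2, nsmul_eq_mul]
    rw [Finset.sum_ite_mem, Finset.sum_const, nsmul_eq_mul]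
    have hss : Real.sqrt γ * (Real.sqrt γ * (if S = T then (1:ℝ) else 0)) = (if S = T then γ else 0) := by
      by_cases h : S = T <;> simp [h, Real.mul_self_sqrt hγ.le]
    rw [hss]
    ring
  -- counting sums
  have hsub : ∀ f : Finset (Fin ℓ) → ℝ,
      (∑ S : {S : Finset (Fin ℓ) // S.card = m}, f S.1)
        = ∑ T ∈ Finset.powersetCard m (Finset.univ : Finset (Fin ℓ)), f T :=
    fun f => (Finset.sum_subtype _ (fun T => Finset.mem_powersetCard_univ) f).symm
  have L1 : ∀ i : Fin ℓ,
      (∑ S : {S : Finset (Fin ℓ) // S.card = m}, if i ∈ S.1 then (1:ℝ) else 0) = (Cb (ℓ - 1) ((m : ℤ) - 1)) := by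
    intro i
    refine (hsub fun T => if i ∈ T then (1:ℝ) else 0).trans ?_
    rw [Finset.sum_boole]
    have hAcast : (Cb (ℓ - 1) ((m : ℤ) - 1)) = (((ℓ-1).choose (m-1) : ℕ) : ℝ) := by
      rw [show (m:ℤ)-1 = ((m-1:ℕ):ℤ) by omega, Cb_eq]
    rw [hAcast]
    exact_mod_cast cnt1 ℓ m hm i
  have L2 : ∀ i j : Fin ℓ, i ≠ j →
      (∑ S : {S : Finset (Fin ℓ) // S.card = m},
        if i ∈ S.1 ∧ j ∈ S.1 then (1:ℝ) else 0) = (Cb (ℓ - 2) ((m : ℤ) - 2)) := by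
    intro i j hij
    refine (hsub fun T => if i ∈ T ∧ j ∈ T then (1:ℝ) else 0).trans ?_
    rw [Finset.sum_boole]
    rcases Nat.lt_or_ge m 2 with h | h
    · have hm1 : m = 1 := by omega
      subst hm1
      rw [cnt2one ℓ i j hij]
      norm_num [Cb]
    · have hCcast : (Cb (ℓ - 2) ((m : ℤ) - 2)) = (((ℓ-2).choose (m-2) : ℕ) : ℝ) := by
        rw [show (m:ℤ)-2 = ((m-2:ℕ):ℤ) by omega, Cb_eq]
      rw [hCcast]
      exact_mod_cast cnt2 ℓ m h i j hij
  have L2' : ∀ i j : Fin ℓ,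
      (∑ S : {S : Finset (Fin ℓ) // S.card = m},
        if i ∈ S.1 ∧ j ∈ S.1 then (1:ℝ) else 0) = if i = j then (Cb (ℓ - 1) ((m : ℤ) - 1)) else (Cb (ℓ - 2) ((m : ℤ) - 2)) := by
    intro i j
    by_cases h : i = j
    · subst h
      rw [if_pos rfl]
      simp only [and_self]
      exact L1 i
    · rw [if_neg h]
      exact L2 i j h
  have hcard : ((Fintype.card {S : Finset (Fin ℓ) // S.card = m} : ℕ) : ℝ) = ((ℓ.choose m : ℝ)) := by
    have h := hsub fun _ => (1:ℝ)
    rw [Finset.sum_const, Finset.sum_const, Finset.card_univ, Finset.card_powersetCard,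
      Finset.card_univ, Fintype.card_fin, nsmul_eq_mul, nsmul_eq_mul, mul_one, mul_one] at h
    exact h
  have cardinter : ∀ (S T : {S : Finset (Fin ℓ) // S.card = m}),
      ((S.1 ∩ T.1).card : ℝ) = ∑ k ∈ T.1, (if k ∈ S.1 then (1:ℝ) else 0) := by
    intro S T
    rw [Finset.sum_boole]
    norm_cast
    rw [Finset.filter_mem_eq_inter, Finset.inter_comm]
  -- the four structural sums
  have TinX : ∀ i j : Fin ℓ,
      (∑ S : {S : Finset (Fin ℓ) // S.card = m}, if i ∈ S.1 then ⟪u S, x j⟫ else 0)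
        = ((m : ℝ)) * ρ * (Cb (ℓ - 1) ((m : ℤ) - 1)) + (1 - ρ) * (if i = j then (Cb (ℓ - 1) ((m : ℤ) - 1)) else (Cb (ℓ - 2) ((m : ℤ) - 2))) := by
    intro i j
    have step : ∀ S : {S : Finset (Fin ℓ) // S.card = m},
        (if i ∈ S.1 then ⟪u S, x j⟫ else 0)
          = ((m : ℝ)) * ρ * (if i ∈ S.1 then (1:ℝ) else 0)
            + (1-ρ) * (if i ∈ S.1 ∧ j ∈ S.1 then (1:ℝ) else 0) := by
      intro S
      rw [hux S j]
      by_cases h1 : i ∈ S.1 <;> by_cases h2 : j ∈ S.1 <;> simp [h1, h2] <;> ring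
    rw [Finset.sum_congr rfl (fun S _ => step S), Finset.sum_add_distrib,
      ← Finset.mul_sum, ← Finset.mul_sum, L1 i, L2' i j]
  have TotX : ∀ j : Fin ℓ,
      (∑ S : {S : Finset (Fin ℓ) // S.card = m}, ⟪u S, x j⟫)
        = ((m : ℝ)) * ρ * ((ℓ.choose m : ℝ)) + (1 - ρ) * (Cb (ℓ - 1) ((m : ℤ) - 1)) := by
    intro j
    have step : ∀ S : {S : Finset (Fin ℓ) // S.card = m},
        ⟪u S, x j⟫ = ((m : ℝ)) * ρ + (1-ρ) * (if j ∈ S.1 then (1:ℝ) else 0) := by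
      intro S
      rw [hux S j]
      by_cases h : j ∈ S.1 <;> simp [h] <;> ring
    rw [Finset.sum_congr rfl (fun S _ => step S), Finset.sum_add_distrib,
      Finset.sum_const, Finset.card_univ, nsmul_eq_mul, hcard,
      ← Finset.mul_sum, L1 j]
    ring
  have TinU : ∀ (i : Fin ℓ) (S' : {S : Finset (Fin ℓ) // S.card = m}),
      (∑ S : {S : Finset (Fin ℓ) // S.card = m}, if i ∈ S.1 then ⟪u S, u S'⟫ else 0)
        = ((m : ℝ))^2 * ρ * (Cb (ℓ - 1) ((m : ℤ) - 1)) + (1 - ρ) * (((m : ℝ)) * (Cb (ℓ - 2) ((m : ℤ) - 2)) + (if i ∈ S'.1 then (Cb (ℓ - 1) ((m : ℤ) - 1)) - (Cb (ℓ - 2) ((m : ℤ) - 2)) else 0))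
          + (if i ∈ S'.1 then γ else 0) := by
    intro i S'
    have step : ∀ S : {S : Finset (Fin ℓ) // S.card = m},
        (if i ∈ S.1 then ⟪u S, u S'⟫ else 0)
          = ((m : ℝ))^2 * ρ * (if i ∈ S.1 then (1:ℝ) else 0)
            + (1-ρ) * (if i ∈ S.1 then ((S.1 ∩ S'.1).card : ℝ) else 0)
            + (if i ∈ S.1 then (if S = S' then γ else 0) else 0) := by
      intro S
      rw [huu S S']
      by_cases h : i ∈ S.1 <;> simp [h] <;> ring
    rw [Finset.sum_congr rfl (fun S _ => step S), Finset.sum_add_distrib,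
      Finset.sum_add_distrib, ← Finset.mul_sum, ← Finset.mul_sum, L1 i]
    -- third sum
    have t3 : (∑ S : {S : Finset (Fin ℓ) // S.card = m},
        if i ∈ S.1 then (if S = S' then γ else 0) else 0)
          = (if i ∈ S'.1 then γ else 0) := by
      have e : ∀ S : {S : Finset (Fin ℓ) // S.card = m},
          (if i ∈ S.1 then (if S = S' then γ else 0) else 0)
            = (if S = S' then (if i ∈ S'.1 then γ else 0) else 0) := by
        intro S
        by_cases h : S = S'
        · subst h; simp
        · simp [h]
      rw [Finset.sum_congr rfl (fun S _ => e S),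
        Finset.sum_ite_eq' Finset.univ S' (fun _ => if i ∈ S'.1 then γ else 0),
        if_pos (Finset.mem_univ S')]
    rw [t3]
    -- middle sum
    have w1 : ∀ S : {S : Finset (Fin ℓ) // S.card = m},
        (if i ∈ S.1 then ((S.1 ∩ S'.1).card : ℝ) else 0)
          = ∑ k ∈ S'.1, (if i ∈ S.1 ∧ k ∈ S.1 then (1:ℝ) else 0) := by
      intro S
      by_cases h : i ∈ S.1
      · rw [if_pos h, cardinter S S']
        refine Finset.sum_congr rfl fun k _ => ?_
        simp [h]
      · rw [if_neg h]
        symm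
        refine Finset.sum_eq_zero fun k _ => ?_
        simp [h]
    rw [Finset.sum_congr rfl (fun S _ => w1 S), Finset.sum_comm]
    have w2 : ∀ k : Fin ℓ,
        (∑ S : {S : Finset (Fin ℓ) // S.card = m},
          if i ∈ S.1 ∧ k ∈ S.1 then (1:ℝ) else 0) = (Cb (ℓ - 2) ((m : ℤ) - 2)) + (if i = k then (Cb (ℓ - 1) ((m : ℤ) - 1)) - (Cb (ℓ - 2) ((m : ℤ) - 2)) else 0) := by
      intro k
      rw [L2' i k]
      by_cases h : i = k <;> simp [h] <;> ring
    rw [Finset.sum_congr rfl (fun k _ => w2 k), Finset.sum_add_distrib,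
      Finset.sum_const, S'.2, nsmul_eq_mul, Finset.sum_ite_eq]

  have TotU : ∀ S' : {S : Finset (Fin ℓ) // S.card = m},
      (∑ S : {S : Finset (Fin ℓ) // S.card = m}, ⟪u S, u S'⟫)
        = ((m : ℝ))^2 * ρ * ((ℓ.choose m : ℝ)) + (1 - ρ) * (((m : ℝ)) * (Cb (ℓ - 1) ((m : ℤ) - 1))) + γ := by
    intro S'
    rw [Finset.sum_congr rfl (fun S _ => huu S S'), Finset.sum_add_distrib,
      Finset.sum_add_distrib, Finset.sum_const, Finset.card_univ, nsmul_eq_mul, hcard]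
    have t3 : (∑ S : {S : Finset (Fin ℓ) // S.card = m}, if S = S' then γ else 0) = γ := by
      rw [Finset.sum_ite_eq' Finset.univ S' (fun _ => γ), if_pos (Finset.mem_univ S')]
    rw [t3]
    have t2 : (∑ S : {S : Finset (Fin ℓ) // S.card = m}, ((S.1 ∩ S'.1).card : ℝ) * (1-ρ))
        = (((m : ℝ)) * (Cb (ℓ - 1) ((m : ℤ) - 1))) * (1-ρ) := by
      rw [← Finset.sum_mul]
      congr 1
      rw [Finset.sum_congr rfl (fun S _ => cardinter S S'), Finset.sum_comm,
        Finset.sum_congr rfl (fun k _ => L1 k), Finset.sum_const, S'.2, nsmul_eq_mul]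
    rw [t2]
    ring
  have hxhat_in : ∀ (i : Fin ℓ) (v : H),
      ⟪xhat i, v⟫ = α * (∑ S : {S : Finset (Fin ℓ) // S.card = m},
            if i ∈ S.1 then ⟪u S, v⟫ else 0)
        + β * ((∑ S : {S : Finset (Fin ℓ) // S.card = m}, ⟪u S, v⟫)
            - (∑ S : {S : Finset (Fin ℓ) // S.card = m},
                if i ∈ S.1 then ⟪u S, v⟫ else 0)) := by
    intro i v
    rw [hxhat i, inner_add_left, real_inner_smul_left, real_inner_smul_left,
      sum_inner, sum_inner]
    have e1 : ∀ S : {S : Finset (Fin ℓ) // S.card = m},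
        ⟪if i ∈ S.1 then u S else 0, v⟫ = (if i ∈ S.1 then ⟪u S, v⟫ else 0) := by
      intro S; by_cases h : i ∈ S.1 <;> simp [h]
    have e2 : ∀ S : {S : Finset (Fin ℓ) // S.card = m},
        ⟪if i ∈ S.1 then (0:H) else u S, v⟫
          = ⟪u S, v⟫ - (if i ∈ S.1 then ⟪u S, v⟫ else 0) := by
      intro S; by_cases h : i ∈ S.1 <;> simp [h]
    rw [Finset.sum_congr rfl (fun S _ => e1 S), Finset.sum_congr rfl (fun S _ => e2 S),
      Finset.sum_sub_distrib]
  -- Part (a)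
  have parta : ∀ (i : Fin ℓ) (S' : {S : Finset (Fin ℓ) // S.card = m}),
      ⟪x i - xhat i, u S'⟫ = 0 := by
    intro i S'
    rw [inner_sub_left, hxu i S', hxhat_in i (u S'), TinU i S', TotU S']
    by_cases h : i ∈ S'.1
    · simp only [if_pos h]
      have hz : ((((m : ℝ)) * ρ + (1 - ρ))
          - (α * (((m : ℝ))^2 * ρ * (Cb (ℓ - 1) ((m : ℤ) - 1)) + (1 - ρ) * (((m : ℝ)) * (Cb (ℓ - 2) ((m : ℤ) - 2)) + ((Cb (ℓ - 1) ((m : ℤ) - 1)) - (Cb (ℓ - 2) ((m : ℤ) - 2)))) + γ)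
            + β * ((((m : ℝ))^2 * ρ * ((ℓ.choose m : ℝ)) + (1 - ρ) * (((m : ℝ)) * (Cb (ℓ - 1) ((m : ℤ) - 1))) + γ)
              - (((m : ℝ))^2 * ρ * (Cb (ℓ - 1) ((m : ℤ) - 1)) + (1 - ρ) * (((m : ℝ)) * (Cb (ℓ - 2) ((m : ℤ) - 2)) + ((Cb (ℓ - 1) ((m : ℤ) - 1)) - (Cb (ℓ - 2) ((m : ℤ) - 2)))) + γ))))
          * (γ ^ 2 + eta2 ℓ m ρ * γ + eta1 ℓ m ρ) = 0 := by
        simp only [eta1, eta2]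
        linear_combination
          (-(((m : ℝ))^2 * ρ * (Cb (ℓ - 1) ((m : ℤ) - 1)) + (1 - ρ) * (((m : ℝ)) * (Cb (ℓ - 2) ((m : ℤ) - 2)) + ((Cb (ℓ - 1) ((m : ℤ) - 1)) - (Cb (ℓ - 2) ((m : ℤ) - 2)))) + γ)) * hαD
          + (-((((m : ℝ))^2 * ρ * ((ℓ.choose m : ℝ)) + (1 - ρ) * (((m : ℝ)) * (Cb (ℓ - 1) ((m : ℤ) - 1))) + γ)
              - (((m : ℝ))^2 * ρ * (Cb (ℓ - 1) ((m : ℤ) - 1)) + (1 - ρ) * (((m : ℝ)) * (Cb (ℓ - 2) ((m : ℤ) - 2)) + ((Cb (ℓ - 1) ((m : ℤ) - 1)) - (Cb (ℓ - 2) ((m : ℤ) - 2)))) + γ))) * hβD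
          + key1p ((ℓ : ℝ)) ((m : ℝ)) ρ γ (Cb (ℓ - 1) ((m : ℤ) - 1)) (Cb (ℓ - 2) ((m : ℤ) - 1)) (Cb (ℓ - 2) ((m : ℤ) - 2)) (((ℓ - 2).choose m : ℝ)) ((ℓ.choose m : ℝ)) hAeq hNeq hEeq h3eq
      rcases mul_eq_zero.mp hz with h0 | h0
      · linarith [h0]
      · exact absurd h0 hD0
    · simp only [if_neg h]
      have hz : ((((m : ℝ)) * ρ + 0)
          - (α * (((m : ℝ))^2 * ρ * (Cb (ℓ - 1) ((m : ℤ) - 1)) + (1 - ρ) * (((m : ℝ)) * (Cb (ℓ - 2) ((m : ℤ) - 2)) + 0) + 0)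
            + β * ((((m : ℝ))^2 * ρ * ((ℓ.choose m : ℝ)) + (1 - ρ) * (((m : ℝ)) * (Cb (ℓ - 1) ((m : ℤ) - 1))) + γ)
              - (((m : ℝ))^2 * ρ * (Cb (ℓ - 1) ((m : ℤ) - 1)) + (1 - ρ) * (((m : ℝ)) * (Cb (ℓ - 2) ((m : ℤ) - 2)) + 0) + 0))))
          * (γ ^ 2 + eta2 ℓ m ρ * γ + eta1 ℓ m ρ) = 0 := by
        simp only [eta1, eta2]
        linear_combination
          (-(((m : ℝ))^2 * ρ * (Cb (ℓ - 1) ((m : ℤ) - 1)) + (1 - ρ) * (((m : ℝ)) * (Cb (ℓ - 2) ((m : ℤ) - 2))))) * hαD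
          + (-((((m : ℝ))^2 * ρ * ((ℓ.choose m : ℝ)) + (1 - ρ) * (((m : ℝ)) * (Cb (ℓ - 1) ((m : ℤ) - 1))) + γ)
              - (((m : ℝ))^2 * ρ * (Cb (ℓ - 1) ((m : ℤ) - 1)) + (1 - ρ) * (((m : ℝ)) * (Cb (ℓ - 2) ((m : ℤ) - 2)))))) * hβD
          + key2p ((ℓ : ℝ)) ((m : ℝ)) ρ γ (Cb (ℓ - 1) ((m : ℤ) - 1)) (Cb (ℓ - 2) ((m : ℤ) - 1)) (Cb (ℓ - 2) ((m : ℤ) - 2)) (((ℓ - 2).choose m : ℝ)) ((ℓ.choose m : ℝ)) hAeq hNeq hEeq h3eq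
      rcases mul_eq_zero.mp hz with h0 | h0
      · linarith [h0]
      · exact absurd h0 hD0
  refine ⟨parta, ?_⟩
  -- Part (b)
  intro i j
  have hz0 : ⟪x i - xhat i, xhat j⟫ = 0 := by
    rw [hxhat j, inner_add_right, real_inner_smul_right, real_inner_smul_right,
      inner_sum, inner_sum]
    have z1 : ∀ S : {S : Finset (Fin ℓ) // S.card = m},
        ⟪x i - xhat i, if j ∈ S.1 then u S else 0⟫ = 0 := by
      intro S
      by_cases hS : j ∈ S.1
      · rw [if_pos hS]; exact parta i S
      · rw [if_neg hS, inner_zero_right]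
    have z2 : ∀ S : {S : Finset (Fin ℓ) // S.card = m},
        ⟪x i - xhat i, if j ∈ S.1 then (0:H) else u S⟫ = 0 := by
      intro S
      by_cases hS : j ∈ S.1
      · rw [if_pos hS, inner_zero_right]
      · rw [if_neg hS]; exact parta i S
    rw [Finset.sum_congr rfl (fun S _ => z1 S), Finset.sum_congr rfl (fun S _ => z2 S),
      Finset.sum_const_zero, mul_zero, mul_zero, add_zero]
  rw [inner_sub_right, hz0, sub_zero, inner_sub_left, hxhat_in i (x j), TinX i j,
    TotX j, hxx i j]
  by_cases h : i = j
  · simp only [if_pos h]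
    have hval : α * (((m : ℝ)) * ρ * (Cb (ℓ - 1) ((m : ℤ) - 1)) + (1 - ρ) * (Cb (ℓ - 1) ((m : ℤ) - 1)))
        + β * ((((m : ℝ)) * ρ * ((ℓ.choose m : ℝ)) + (1 - ρ) * (Cb (ℓ - 1) ((m : ℤ) - 1))) - (((m : ℝ)) * ρ * (Cb (ℓ - 1) ((m : ℤ) - 1)) + (1 - ρ) * (Cb (ℓ - 1) ((m : ℤ) - 1))))
        = (eta3 ℓ m ρ * γ + eta1 ℓ m ρ) / (γ ^ 2 + eta2 ℓ m ρ * γ + eta1 ℓ m ρ) := by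
      rw [eq_div_iff hD0]
      simp only [eta1, eta2, eta3]
      linear_combination
        (((m : ℝ)) * ρ * (Cb (ℓ - 1) ((m : ℤ) - 1)) + (1 - ρ) * (Cb (ℓ - 1) ((m : ℤ) - 1))) * hαD
        + ((((m : ℝ)) * ρ * ((ℓ.choose m : ℝ)) + (1 - ρ) * (Cb (ℓ - 1) ((m : ℤ) - 1))) - (((m : ℝ)) * ρ * (Cb (ℓ - 1) ((m : ℤ) - 1)) + (1 - ρ) * (Cb (ℓ - 1) ((m : ℤ) - 1)))) * hβD
        + key3p ((ℓ : ℝ)) ((m : ℝ)) ρ γ (Cb (ℓ - 1) ((m : ℤ) - 1)) (Cb (ℓ - 2) ((m : ℤ) - 1)) (Cb (ℓ - 2) ((m : ℤ) - 2)) (((ℓ - 2).choose m : ℝ)) ((ℓ.choose m : ℝ)) hAeq hNeq hEeq h3eq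
    linarith [hval]
  · simp only [if_neg h]
    have hval : α * (((m : ℝ)) * ρ * (Cb (ℓ - 1) ((m : ℤ) - 1)) + (1 - ρ) * (Cb (ℓ - 2) ((m : ℤ) - 2)))
        + β * ((((m : ℝ)) * ρ * ((ℓ.choose m : ℝ)) + (1 - ρ) * (Cb (ℓ - 1) ((m : ℤ) - 1))) - (((m : ℝ)) * ρ * (Cb (ℓ - 1) ((m : ℤ) - 1)) + (1 - ρ) * (Cb (ℓ - 2) ((m : ℤ) - 2))))
        = (eta4 ℓ m ρ * γ + eta1 ℓ m ρ * ρ) / (γ ^ 2 + eta2 ℓ m ρ * γ + eta1 ℓ m ρ) := by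
      rw [eq_div_iff hD0]
      simp only [eta1, eta2, eta4]
      linear_combination
        (((m : ℝ)) * ρ * (Cb (ℓ - 1) ((m : ℤ) - 1)) + (1 - ρ) * (Cb (ℓ - 2) ((m : ℤ) - 2))) * hαD
        + ((((m : ℝ)) * ρ * ((ℓ.choose m : ℝ)) + (1 - ρ) * (Cb (ℓ - 1) ((m : ℤ) - 1))) - (((m : ℝ)) * ρ * (Cb (ℓ - 1) ((m : ℤ) - 1)) + (1 - ρ) * (Cb (ℓ - 2) ((m : ℤ) - 2)))) * hβD
        + key4p ((ℓ : ℝ)) ((m : ℝ)) ρ γ (Cb (ℓ - 1) ((m : ℤ) - 1)) (Cb (ℓ - 2) ((m : ℤ) - 1)) (Cb (ℓ - 2) ((m : ℤ) - 2)) (((ℓ - 2).choose m : ℝ)) ((ℓ.choose m : ℝ)) hAeq hNeq hEeq h3eq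
    linarith [hval]
end

section
/- Let ℓ ≥ 2 and 2 ≤ m ≤ ℓ be integers and ρ ∈ (0,1). Define γ_c = C(ℓ−2,m−2)·(1−ρ)(1+(ℓ−1)ρ)/ρ. Then γ_c > 0, θ⁺(γ_c) = 0, and d⁺(γ_c) = 1 − (ℓ−1)ρ(1+(m−1)ρ)/((ℓ−1)mρ + (m−1)(1−ρ)). -/
noncomputable def dplus (ℓ m : ℕ) (ρ γ : ℝ) : ℝ :=
  1 - (eta3 ℓ m ρ * γ + eta1 ℓ m ρ) / (γ ^ 2 + eta2 ℓ m ρ * γ + eta1 ℓ m ρ)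

noncomputable def thetaplus (ℓ m : ℕ) (ρ γ : ℝ) : ℝ :=
  ρ - (eta4 ℓ m ρ * γ + eta1 ℓ m ρ * ρ) / (γ ^ 2 + eta2 ℓ m ρ * γ + eta1 ℓ m ρ)

set_option maxHeartbeats 2000000 in
/-- for `γ_c = C(ℓ-2,m-2)(1-ρ)(1+(ℓ-1)ρ)/ρ` one has `γ_c > 0`,
`θ⁺(γ_c) = 0`, and `d⁺(γ_c)` equals the critical distortion `d_c^{(ℓ,m)}` of Theorem 2. -/
theorem stmt_9 (ℓ m : ℕ) (hℓ : 2 ≤ ℓ) (hm : 2 ≤ m) (hmℓ : m ≤ ℓ)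
    (ρ : ℝ) (hρ₁ : 0 < ρ) (hρ₂ : ρ < 1)
    (γc : ℝ)
    (hγc : γc = Cb (ℓ - 2) ((m : ℤ) - 2) * (1 - ρ) * (1 + ((ℓ : ℝ) - 1) * ρ) / ρ) :
    0 < γc ∧ thetaplus ℓ m ρ γc = 0 ∧
    dplus ℓ m ρ γc =
      1 - ((ℓ : ℝ) - 1) * ρ * (1 + ((m : ℝ) - 1) * ρ) /
        (((ℓ : ℝ) - 1) * (m : ℝ) * ρ + ((m : ℝ) - 1) * (1 - ρ)) := by
  obtain ⟨l2, rfl⟩ : ∃ l2, ℓ = l2 + 2 := ⟨ℓ - 2, by omega⟩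
  obtain ⟨k2, rfl⟩ : ∃ k2, m = k2 + 2 := ⟨m - 2, by omega⟩
  have hk : k2 ≤ l2 := by omega
  -- rewrite the Cb values
  have hs1 : l2 + 2 - 1 = l2 + 1 := by omega
  have hs2 : l2 + 2 - 2 = l2 := by omega
  have hCb1 : Cb (l2 + 2 - 1) ((↑(k2 + 2) : ℤ) - 1) = ((l2 + 1).choose (k2 + 1) : ℝ) := by
    have e : ((↑(k2 + 2) : ℤ) - 1).toNat = k2 + 1 := by omega
    rw [Cb, if_pos (by omega), e]
    norm_num
  have hCb2 : Cb (l2 + 2 - 2) ((↑(k2 + 2) : ℤ) - 1) = (l2.choose (k2 + 1) : ℝ) := by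
    have e : ((↑(k2 + 2) : ℤ) - 1).toNat = k2 + 1 := by omega
    rw [Cb, if_pos (by omega), e]
    norm_num
  have hCb3 : Cb (l2 + 2 - 2) ((↑(k2 + 2) : ℤ) - 2) = (l2.choose k2 : ℝ) := by
    have e : ((↑(k2 + 2) : ℤ) - 2).toNat = k2 := by omega
    rw [Cb, if_pos (by omega), e]
    norm_num
  set A : ℝ := ((l2 + 1).choose (k2 + 1) : ℝ) with hAdef
  set B : ℝ := (l2.choose (k2 + 1) : ℝ) with hBdef
  set D : ℝ := (l2.choose k2 : ℝ) with hDdef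
  have hApos : 0 < A := by
    rw [hAdef]
    exact_mod_cast Nat.choose_pos (by omega : k2 + 1 ≤ l2 + 1)
  have hDpos : 0 < D := by
    rw [hDdef]
    exact_mod_cast Nat.choose_pos hk
  have hBnn : 0 ≤ B := by positivity
  have hl1 : ((l2 : ℝ) + 1) ≠ 0 := by positivity
  -- the choose identities, cast to ℝ
  have h2n : (l2 + 1) * l2.choose k2 = (l2 + 1).choose (k2 + 1) * (k2 + 1) :=
    Nat.add_one_mul_choose_eq l2 k2
  have h3n : l2.choose (k2 + 1) * (k2 + 1) = l2.choose k2 * (l2 - k2) :=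
    Nat.choose_succ_right_eq l2 k2
  have h2R : ((l2 : ℝ) + 1) * D = A * ((k2 : ℝ) + 1) := by
    rw [hAdef, hDdef]; exact_mod_cast h2n
  have h3R : B * ((k2 : ℝ) + 1) = D * ((l2 : ℝ) - (k2 : ℝ)) := by
    rw [hBdef, hDdef]
    have hc : ((l2 - k2 : ℕ) : ℝ) = (l2 : ℝ) - (k2 : ℝ) := by
      rw [Nat.cast_sub hk]
    calc (l2.choose (k2 + 1) : ℝ) * ((k2 : ℝ) + 1)
          = ((l2.choose (k2 + 1) * (k2 + 1) : ℕ) : ℝ) := by push_cast; ring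
      _ = ((l2.choose k2 * (l2 - k2) : ℕ) : ℝ) := by rw [h3n]
      _ = (l2.choose k2 : ℝ) * ((l2 : ℝ) - (k2 : ℝ)) := by push_cast [hk]; ring
  have hD' : D = A * ((k2 : ℝ) + 1) / ((l2 : ℝ) + 1) := by
    field_simp
    linarith [h2R]
  have hB' : B = A * ((l2 : ℝ) - (k2 : ℝ)) / ((l2 : ℝ) + 1) := by
    have hk1 : ((k2 : ℝ) + 1) ≠ 0 := by positivity
    rw [hD'] at h3R
    field_simp at h3R ⊢
    nlinarith [h3R]
  -- cast simplifications for ℓ, m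
  have hLc : ((l2 + 2 : ℕ) : ℝ) = (l2 : ℝ) + 2 := by push_cast; ring
  have hMc : ((k2 + 2 : ℕ) : ℝ) = (k2 : ℝ) + 2 := by push_cast; ring
  -- γc explicit
  rw [hCb3] at hγc
  have hγ : γc = D * (1 - ρ) * (1 + ((l2 : ℝ) + 1) * ρ) / ρ := by
    rw [hγc, hLc]; ring_nf
  have hγpos : 0 < γc := by
    rw [hγ]
    have h1 : 0 < 1 - ρ := by linarith
    have h2 : 0 < 1 + ((l2 : ℝ) + 1) * ρ := by positivity
    positivity
  -- explicit forms of the etas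
  have he1 : eta1 (l2 + 2) (k2 + 2) ρ
      = A * B * ((k2 : ℝ) + 2) * (1 - ρ) * (1 + ((l2 : ℝ) + 1) * ρ) := by
    rw [eta1, hCb1, hCb2]; push_cast; ring
  have he2 : eta2 (l2 + 2) (k2 + 2) ρ
      = A * (1 + ((k2 : ℝ) + 1) * ρ) + B * ((k2 : ℝ) + 2) * (1 + (l2 : ℝ) * ρ)
        + D * (((l2 : ℝ) + 1) * ((k2 : ℝ) + 2) * ρ + ((k2 : ℝ) + 1) * (1 - ρ)) := by
    rw [eta2, hCb1, hCb2, hCb3]; push_cast; ring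
  have he3 : eta3 (l2 + 2) (k2 + 2) ρ
      = A * (1 + ((k2 : ℝ) + 1) * ρ) + B * ((l2 : ℝ) + 1) * ((k2 : ℝ) + 2) * ρ ^ 2
        + D * ((l2 : ℝ) + 1) * ρ * (1 + ((k2 : ℝ) + 1) * ρ) := by
    rw [eta3, hCb1, hCb2, hCb3]; push_cast; ring
  have he4 : eta4 (l2 + 2) (k2 + 2) ρ
      = A * ρ * (1 + ((k2 : ℝ) + 1) * ρ) + B * ((k2 : ℝ) + 2) * ρ * (1 + (l2 : ℝ) * ρ)
        + D * (1 + (l2 : ℝ) * ρ) * (1 + ((k2 : ℝ) + 1) * ρ) := by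
    rw [eta4, hCb1, hCb2, hCb3]; push_cast; ring
  have h1mρ : (0:ℝ) < 1 - ρ := by linarith
  -- positivity of the denominator Q
  have he2pos : 0 < eta2 (l2 + 2) (k2 + 2) ρ := by
    rw [he2]
    have t1 : 0 < A * (1 + ((k2 : ℝ) + 1) * ρ) := by positivity
    have t2 : 0 ≤ B * ((k2 : ℝ) + 2) * (1 + (l2 : ℝ) * ρ) := by positivity
    have t3 : 0 ≤ D * (((l2 : ℝ) + 1) * ((k2 : ℝ) + 2) * ρ + ((k2 : ℝ) + 1) * (1 - ρ)) := by
      apply mul_nonneg hDpos.le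
      have : 0 ≤ ((l2 : ℝ) + 1) * ((k2 : ℝ) + 2) * ρ := by positivity
      nlinarith
    linarith
  have he1nn : 0 ≤ eta1 (l2 + 2) (k2 + 2) ρ := by
    rw [he1]
    have h5 : 0 ≤ 1 + ((l2 : ℝ) + 1) * ρ := by positivity
    have h6 : 0 ≤ A * B * ((k2 : ℝ) + 2) := by positivity
    exact mul_nonneg (mul_nonneg h6 h1mρ.le) h5
  have hQ : 0 < γc ^ 2 + eta2 (l2 + 2) (k2 + 2) ρ * γc + eta1 (l2 + 2) (k2 + 2) ρ := by
    have := mul_pos he2pos hγpos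
    nlinarith [sq_nonneg γc]
  have hρne : ρ ≠ 0 := ne_of_gt hρ₁
  refine ⟨hγpos, ?_, ?_⟩
  · -- θ⁺(γc) = 0
    rw [thetaplus]
    have key : eta4 (l2 + 2) (k2 + 2) ρ * γc + eta1 (l2 + 2) (k2 + 2) ρ * ρ
        = ρ * (γc ^ 2 + eta2 (l2 + 2) (k2 + 2) ρ * γc + eta1 (l2 + 2) (k2 + 2) ρ) := by
      rw [he1, he2, he4, hγ]
      field_simp
      ring
    rw [key, mul_div_assoc, div_self hQ.ne', mul_one, sub_self]
  · -- d⁺(γc) = critical distortion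
    rw [dplus, hLc, hMc]
    have hW : 0 < ((l2 : ℝ) + 2 - 1) * ((k2 : ℝ) + 2) * ρ + ((k2 : ℝ) + 2 - 1) * (1 - ρ) := by
      have t1 : 0 < ((l2 : ℝ) + 1) * ((k2 : ℝ) + 2) * ρ := by positivity
      have t2 : 0 ≤ ((k2 : ℝ) + 1) * (1 - ρ) := by positivity
      nlinarith
    rw [sub_right_inj, div_eq_div_iff hQ.ne' hW.ne']
    rw [he1, he2, he3, hγ, hB', hD']
    field_simp
    ring
end

section
/- Let ℓ ≥ 2 and 2 ≤ m ≤ ℓ be integers, ρ ∈ (−1/(ℓ−1), 1), and d ∈ ((1+(ℓ−1)ρ)/ℓ, 1). Define γ = C(ℓ−2,m−2)·(1−ρ)·((ℓ−1)(1−ρ) − ℓ(1−d))/(1−d). Then γ > 0, d⁻(γ) = d, and θ⁻(γ) = (1−d)/(ℓ−1) + ρ. Moreover, the map γ ↦ d⁻(γ) is a strictly increasing bijection from (0,∞) onto ((1+(ℓ−1)ρ)/ℓ, 1). -/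
noncomputable def dminus (ℓ m : ℕ) (ρ γ : ℝ) : ℝ :=
  1 - ((ℓ - 2).choose (m - 2) : ℝ) * ((ℓ : ℝ) - 1) * (1 - ρ) ^ 2 /
    (γ + ((ℓ - 2).choose (m - 2) : ℝ) * (ℓ : ℝ) * (1 - ρ))

noncomputable def thetaminus (ℓ m : ℕ) (ρ γ : ℝ) : ℝ :=
  ρ + ((ℓ - 2).choose (m - 2) : ℝ) * (1 - ρ) ^ 2 /
    (γ + ((ℓ - 2).choose (m - 2) : ℝ) * (ℓ : ℝ) * (1 - ρ))

lemma key_lemma (ℓ m : ℕ) (hℓ : 2 ≤ ℓ) (hm : 2 ≤ m) (hmℓ : m ≤ ℓ)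
    (ρ d : ℝ) (hρ₂ : ρ < 1)
    (hd₁ : (1 + ((ℓ : ℝ) - 1) * ρ) / (ℓ : ℝ) < d) (hd₂ : d < 1)
    (γ : ℝ)
    (hγ : γ = ((ℓ - 2).choose (m - 2) : ℝ) * (1 - ρ) *
      (((ℓ : ℝ) - 1) * (1 - ρ) - (ℓ : ℝ) * (1 - d)) / (1 - d)) :
    0 < γ ∧ dminus ℓ m ρ γ = d ∧
    thetaminus ℓ m ρ γ = (1 - d) / ((ℓ : ℝ) - 1) + ρ := by
  set C : ℝ := ((ℓ - 2).choose (m - 2) : ℝ) with hCdef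
  have hC : 0 < C := by
    have : (ℓ - 2).choose (m - 2) ≠ 0 := Nat.choose_pos (by omega) |>.ne'
    positivity
  have hℓR : (2:ℝ) ≤ (ℓ:ℝ) := by exact_mod_cast hℓ
  have hℓ0 : 0 < (ℓ:ℝ) := by linarith
  have hℓ1 : 0 < (ℓ:ℝ) - 1 := by linarith
  have hρ : 0 < 1 - ρ := by linarith
  have hdne : (0:ℝ) < 1 - d := by linarith
  have hE : 0 < ((ℓ : ℝ) - 1) * (1 - ρ) - (ℓ : ℝ) * (1 - d) := by
    have := (div_lt_iff₀ hℓ0).mp hd₁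
    nlinarith
  have hγpos : 0 < γ := by rw [hγ]; positivity
  have hD : γ + C * (ℓ:ℝ) * (1 - ρ) = C * ((ℓ:ℝ) - 1) * (1 - ρ)^2 / (1 - d) := by
    rw [hγ]; field_simp; ring
  refine ⟨hγpos, ?_, ?_⟩
  · rw [dminus, ← hCdef, hD]
    rw [div_div_eq_mul_div]
    rw [mul_comm, mul_div_assoc, div_self (by positivity), mul_one]
    ring
  · rw [thetaminus, ← hCdef, hD]
    rw [div_div_eq_mul_div]
    have : C * (1 - ρ) ^ 2 * (1 - d) / (C * ((ℓ:ℝ) - 1) * (1 - ρ) ^ 2)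
        = (1 - d) / ((ℓ:ℝ) - 1) := by
      field_simp
    rw [this]; ring

/-- for `d ∈ ((1+(ℓ-1)ρ)/ℓ, 1)` and
`γ = C(ℓ-2,m-2)(1-ρ)((ℓ-1)(1-ρ)-ℓ(1-d))/(1-d)` one has `γ > 0`, `d⁻(γ) = d`, and
`θ⁻(γ) = (1-d)/(ℓ-1)+ρ`; moreover `γ ↦ d⁻(γ)` is a strictly increasing bijection from
`(0,∞)` onto `((1+(ℓ-1)ρ)/ℓ, 1)`. -/
theorem stmt_10 (ℓ m : ℕ) (hℓ : 2 ≤ ℓ) (hm : 2 ≤ m) (hmℓ : m ≤ ℓ)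
    (ρ d : ℝ) (hρ₁ : -(1 / ((ℓ : ℝ) - 1)) < ρ) (hρ₂ : ρ < 1)
    (hd₁ : (1 + ((ℓ : ℝ) - 1) * ρ) / (ℓ : ℝ) < d) (hd₂ : d < 1)
    (γ : ℝ)
    (hγ : γ = ((ℓ - 2).choose (m - 2) : ℝ) * (1 - ρ) *
      (((ℓ : ℝ) - 1) * (1 - ρ) - (ℓ : ℝ) * (1 - d)) / (1 - d)) :
    0 < γ ∧ dminus ℓ m ρ γ = d ∧
    thetaminus ℓ m ρ γ = (1 - d) / ((ℓ : ℝ) - 1) + ρ ∧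
    StrictMonoOn (dminus ℓ m ρ) (Set.Ioi 0) ∧
    Set.BijOn (dminus ℓ m ρ) (Set.Ioi 0)
      (Set.Ioo ((1 + ((ℓ : ℝ) - 1) * ρ) / (ℓ : ℝ)) 1) := by
  obtain ⟨h1, h2, h3⟩ := key_lemma ℓ m hℓ hm hmℓ ρ d hρ₂ hd₁ hd₂ γ hγ
  set C : ℝ := ((ℓ - 2).choose (m - 2) : ℝ) with hCdef
  have hC : 0 < C := by
    have : (ℓ - 2).choose (m - 2) ≠ 0 := Nat.choose_pos (by omega) |>.ne'
    positivity
  have hℓR : (2:ℝ) ≤ (ℓ:ℝ) := by exact_mod_cast hℓ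
  have hℓ0 : 0 < (ℓ:ℝ) := by linarith
  have hℓ1 : 0 < (ℓ:ℝ) - 1 := by linarith
  have hρ : 0 < 1 - ρ := by linarith
  have hK : 0 < C * ((ℓ:ℝ) - 1) * (1 - ρ)^2 := by positivity
  have hB : 0 < C * (ℓ:ℝ) * (1 - ρ) := by positivity
  have hmono : StrictMonoOn (dminus ℓ m ρ) (Set.Ioi 0) := by
    intro x hx y hy hxy
    simp only [Set.mem_Ioi] at hx hy
    have hxB : 0 < x + C * (ℓ:ℝ) * (1 - ρ) := by linarith
    have hyB : 0 < y + C * (ℓ:ℝ) * (1 - ρ) := by linarith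
    have : C * ((ℓ:ℝ) - 1) * (1 - ρ)^2 / (y + C * (ℓ:ℝ) * (1 - ρ))
        < C * ((ℓ:ℝ) - 1) * (1 - ρ)^2 / (x + C * (ℓ:ℝ) * (1 - ρ)) :=
      div_lt_div_of_pos_left hK hxB (by linarith)
    simp only [dminus, ← hCdef]
    linarith
  have hmaps : Set.MapsTo (dminus ℓ m ρ) (Set.Ioi 0)
      (Set.Ioo ((1 + ((ℓ : ℝ) - 1) * ρ) / (ℓ : ℝ)) 1) := by
    intro x hx
    simp only [Set.mem_Ioi] at hx
    have hxB : 0 < x + C * (ℓ:ℝ) * (1 - ρ) := by linarith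
    have hlt : C * ((ℓ:ℝ) - 1) * (1 - ρ)^2 / (x + C * (ℓ:ℝ) * (1 - ρ))
        < C * ((ℓ:ℝ) - 1) * (1 - ρ)^2 / (C * (ℓ:ℝ) * (1 - ρ)) :=
      div_lt_div_of_pos_left hK hB (by linarith)
    have hKB : C * ((ℓ:ℝ) - 1) * (1 - ρ)^2 / (C * (ℓ:ℝ) * (1 - ρ))
        = ((ℓ:ℝ) - 1) * (1 - ρ) / (ℓ:ℝ) := by
      field_simp
    have hval : (1 + ((ℓ : ℝ) - 1) * ρ) / (ℓ : ℝ)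
        = 1 - ((ℓ:ℝ) - 1) * (1 - ρ) / (ℓ:ℝ) := by
      field_simp; ring
    constructor
    · simp only [dminus, ← hCdef]
      rw [hval]
      have := hlt.trans_eq hKB
      linarith
    · simp only [dminus, ← hCdef]
      have : 0 < C * ((ℓ:ℝ) - 1) * (1 - ρ)^2 / (x + C * (ℓ:ℝ) * (1 - ρ)) :=
        div_pos hK hxB
      linarith
  refine ⟨h1, h2, h3, hmono, hmaps, hmono.injOn, ?_⟩
  intro y hy
  obtain ⟨hy1, hy2⟩ := hy
  set γy : ℝ := C * (1 - ρ) * (((ℓ : ℝ) - 1) * (1 - ρ) - (ℓ : ℝ) * (1 - y)) / (1 - y)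
    with hγy
  obtain ⟨hg1, hg2, _⟩ := key_lemma ℓ m hℓ hm hmℓ ρ y hρ₂ hy1 hy2 γy hγy
  exact ⟨γy, hg1, hg2⟩
end

section
/- Let ρ ∈ (0,1) and, for integers ℓ ≥ 2 and 1 ≤ m ≤ ℓ, define d_c^{(ℓ,m)} = 1 − (ℓ−1)ρ(1+(m−1)ρ)/((ℓ−1)mρ + (m−1)(1−ρ)). Then: (i) for fixed ℓ, d_c^{(ℓ,m)} is strictly increasing in m, i.e. d_c^{(ℓ,m)} < d_c^{(ℓ,m')} whenever 1 ≤ m < m' ≤ ℓ; and (ii) for fixed m ≥ 2, d_c^{(ℓ,m)} is strictly decreasing in ℓ, i.e. d_c^{(ℓ,m)} > d_c^{(ℓ',m)} whenever m ≤ ℓ < ℓ'. -/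
/-- The critical distortion `d_c^{(ℓ,m)}` of Theorem 2. -/
noncomputable def dc (ρ : ℝ) (ℓ m : ℕ) : ℝ :=
  1 - ((ℓ : ℝ) - 1) * ρ * (1 + ((m : ℝ) - 1) * ρ) /
    (((ℓ : ℝ) - 1) * (m : ℝ) * ρ + ((m : ℝ) - 1) * (1 - ρ))

lemma aux_m (ρ L a b : ℝ) (hρ₁ : 0 < ρ) (hρ₂ : ρ < 1) (hL : 1 ≤ L)
    (ha : 0 ≤ a) (hab : a < b) :
    L * ρ * (1 + b * ρ) / (L * (b + 1) * ρ + b * (1 - ρ)) <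
      L * ρ * (1 + a * ρ) / (L * (a + 1) * ρ + a * (1 - ρ)) := by
  have hb : 0 ≤ b := le_of_lt (lt_of_le_of_lt ha hab)
  have h1ρ : (0:ℝ) < 1 - ρ := by linarith
  have hL0 : (0:ℝ) < L := by linarith
  have hDa : 0 < L * (a + 1) * ρ + a * (1 - ρ) := by
    have := mul_pos (mul_pos hL0 (by linarith : (0:ℝ) < a + 1)) hρ₁
    nlinarith [mul_nonneg ha h1ρ.le]
  have hDb : 0 < L * (b + 1) * ρ + b * (1 - ρ) := by
    have := mul_pos (mul_pos hL0 (by linarith : (0:ℝ) < b + 1)) hρ₁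
    nlinarith [mul_nonneg hb h1ρ.le]
  rw [div_lt_div_iff₀ hDb hDa]
  have key : L * ρ * (1 + a * ρ) * (L * (b + 1) * ρ + b * (1 - ρ)) -
      L * ρ * (1 + b * ρ) * (L * (a + 1) * ρ + a * (1 - ρ)) =
      L * ρ * (b - a) * ((1 - ρ) * (L * ρ + 1)) := by ring
  have pos : 0 < L * ρ * (b - a) * ((1 - ρ) * (L * ρ + 1)) := by
    apply mul_pos (mul_pos (mul_pos hL0 hρ₁) (by linarith))
    apply mul_pos h1ρ
    nlinarith
  linarith

lemma aux_l (ρ L L' a : ℝ) (hρ₁ : 0 < ρ) (hρ₂ : ρ < 1) (ha : 1 ≤ a)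
    (hLL : L < L') (hL : 1 ≤ L) :
    L * ρ * (1 + a * ρ) / (L * (a + 1) * ρ + a * (1 - ρ)) <
      L' * ρ * (1 + a * ρ) / (L' * (a + 1) * ρ + a * (1 - ρ)) := by
  have hL' : 1 ≤ L' := le_of_lt (lt_of_le_of_lt hL hLL)
  have h1ρ : (0:ℝ) < 1 - ρ := by linarith
  have hL0 : (0:ℝ) < L := by linarith
  have hL0' : (0:ℝ) < L' := by linarith
  have hDa : 0 < L * (a + 1) * ρ + a * (1 - ρ) := by
    have := mul_pos (mul_pos hL0 (by linarith : (0:ℝ) < a + 1)) hρ₁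
    nlinarith [mul_nonneg (by linarith : (0:ℝ) ≤ a) h1ρ.le]
  have hDb : 0 < L' * (a + 1) * ρ + a * (1 - ρ) := by
    have := mul_pos (mul_pos hL0' (by linarith : (0:ℝ) < a + 1)) hρ₁
    nlinarith [mul_nonneg (by linarith : (0:ℝ) ≤ a) h1ρ.le]
  rw [div_lt_div_iff₀ hDa hDb]
  have key : L' * ρ * (1 + a * ρ) * (L * (a + 1) * ρ + a * (1 - ρ)) -
      L * ρ * (1 + a * ρ) * (L' * (a + 1) * ρ + a * (1 - ρ)) =
      (L' - L) * ρ * (1 + a * ρ) * (a * (1 - ρ)) := by ring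
  have pos : 0 < (L' - L) * ρ * (1 + a * ρ) * (a * (1 - ρ)) := by
    apply mul_pos (mul_pos (mul_pos (by linarith) hρ₁) (by nlinarith))
    exact mul_pos (by linarith) h1ρ
  linarith

/-- for ρ ∈ (0,1), the critical distortion `d_c^{(ℓ,m)}` is strictly
increasing in `m` for fixed `ℓ`, and strictly decreasing in `ℓ` for fixed `m ≥ 2`. -/
theorem stmt_12 (ρ : ℝ) (hρ₁ : 0 < ρ) (hρ₂ : ρ < 1) :
    (∀ ℓ m m' : ℕ, 2 ≤ ℓ → 1 ≤ m → m < m' → m' ≤ ℓ → dc ρ ℓ m < dc ρ ℓ m') ∧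
    (∀ m ℓ ℓ' : ℕ, 2 ≤ m → m ≤ ℓ → ℓ < ℓ' → dc ρ ℓ' m < dc ρ ℓ m) := by
  constructor
  · intro ℓ m m' hℓ hm hmm' _
    have hL : (1:ℝ) ≤ (ℓ:ℝ) - 1 := by
      have : (2:ℝ) ≤ (ℓ:ℝ) := by exact_mod_cast hℓ
      linarith
    have ha : (0:ℝ) ≤ (m:ℝ) - 1 := by
      have : (1:ℝ) ≤ (m:ℝ) := by exact_mod_cast hm
      linarith
    have hab : (m:ℝ) - 1 < (m':ℝ) - 1 := by
      have : (m:ℝ) < (m':ℝ) := by exact_mod_cast hmm'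
      linarith
    have := aux_m ρ ((ℓ:ℝ)-1) ((m:ℝ)-1) ((m':ℝ)-1) hρ₁ hρ₂ hL ha hab
    simp only [dc]
    have e1 : ((ℓ:ℝ)-1) * ((m:ℝ)-1+1) * ρ = ((ℓ:ℝ)-1) * (m:ℝ) * ρ := by ring
    have e2 : ((ℓ:ℝ)-1) * ((m':ℝ)-1+1) * ρ = ((ℓ:ℝ)-1) * (m':ℝ) * ρ := by ring
    rw [e1, e2] at this
    linarith
  · intro m ℓ ℓ' hm hmℓ hℓℓ'
    have hm' : (2:ℝ) ≤ (m:ℝ) := by exact_mod_cast hm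
    have hℓr : (m:ℝ) ≤ (ℓ:ℝ) := by exact_mod_cast hmℓ
    have hℓℓr : (ℓ:ℝ) < (ℓ':ℝ) := by exact_mod_cast hℓℓ'
    have hL : (1:ℝ) ≤ (ℓ:ℝ) - 1 := by linarith
    have ha : (1:ℝ) ≤ (m:ℝ) - 1 := by linarith
    have hLL : (ℓ:ℝ) - 1 < (ℓ':ℝ) - 1 := by linarith
    have := aux_l ρ ((ℓ:ℝ)-1) ((ℓ':ℝ)-1) ((m:ℝ)-1) hρ₁ hρ₂ ha hLL hL
    simp only [dc]
    have e1 : ((ℓ:ℝ)-1) * ((m:ℝ)-1+1) * ρ = ((ℓ:ℝ)-1) * (m:ℝ) * ρ := by ring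
    have e2 : ((ℓ':ℝ)-1) * ((m:ℝ)-1+1) * ρ = ((ℓ':ℝ)-1) * (m:ℝ) * ρ := by ring
    rw [e1, e2] at this
    linarith
end

section
/- Fix ρ ∈ (0,1), an integer m ≥ 1, and d ∈ (0, 1−ρ). For each integer ℓ > m, define η₁(ℓ), η₂(ℓ), η₃(ℓ), η₄(ℓ) as in the context, γ(ℓ) = (η₃(ℓ) − η₂(ℓ)(1−d) + √((η₂(ℓ)(1−d) − η₃(ℓ))² + 4η₁(ℓ)d(1−d)))/(2(1−d)), and θ(ℓ) = ρ − (η₄(ℓ)γ(ℓ) + η₁(ℓ)ρ)/(γ(ℓ)² + η₂(ℓ)γ(ℓ) + η₁(ℓ)). Then, as ℓ → ∞: (i) γ(ℓ) − ((1−ρ)d/(1−ρ−d))·ℓ^{m−1}/(m−1)! = O(ℓ^{m−2}); and (ii) θ(ℓ) − d·(d − (m−1)(1−ρ−d))/(ℓ·m·(1−ρ−d)) = O(1/ℓ²). -/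
open Filter Asymptotics

/-- The value `γ^{(ℓ,m)}` solving `d⁺(γ) = d`. -/
noncomputable def gammaFun (m : ℕ) (ρ d : ℝ) (ℓ : ℕ) : ℝ :=
  (eta3 ℓ m ρ - eta2 ℓ m ρ * (1 - d) +
      Real.sqrt ((eta2 ℓ m ρ * (1 - d) - eta3 ℓ m ρ) ^ 2 + 4 * eta1 ℓ m ρ * d * (1 - d))) /
    (2 * (1 - d))

/-- `θ⁺(γ^{(ℓ,m)})`. -/
noncomputable def thetaFun (m : ℕ) (ρ d : ℝ) (ℓ : ℕ) : ℝ :=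
  ρ - (eta4 ℓ m ρ * gammaFun m ρ d ℓ + eta1 ℓ m ρ * ρ) /
    ((gammaFun m ρ d ℓ) ^ 2 + eta2 ℓ m ρ * gammaFun m ρ d ℓ + eta1 ℓ m ρ)

/-!
Put `t = 1/ℓ` and `κ = ℓ^(m-1)/(m-1)!`. Every binomial coefficient in the `ηᵢ` is `κ` (or `κ t`)
times a polynomial in `t`, so `η₁ = κ² ℓ e₁(t)` and `ηᵢ = κ ℓ eᵢ(t)` for `i = 2, 3, 4`, with
polynomials `eᵢ`. Rationalising the quadratic formula gives `γ = κ g(t)` with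
`g = 2 d e₁ / (b + √(b² + 4 (1-d) d t e₁))`, `b = (1-d) e₂ - e₃`; since `b(0) = m ρ (1-ρ-d) > 0`,
`g` is smooth at `t = 0`, although the quadratic degenerates there. Likewise `ρ e₂ - e₄` is
divisible by `t`, so `θ = t h(t)` with `h` smooth at `0`. Both claims are then the first-order
estimates `g(t) - g(0) = O(t)` and `h(t) - h(0) = O(t)`, with `g(0) = (1-ρ) d / (1-ρ-d)` and
`h(0) = d (d - (m-1)(1-ρ-d)) / (m (1-ρ-d))`.
-/

open Topology Finset
open scoped Nat

noncomputable def descProd (s k : ℕ) (t : ℝ) : ℝ := ∏ i ∈ range k, (1 - (s + i : ℝ) * t)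

@[fun_prop]
lemma differentiable_descProd (s k : ℕ) : Differentiable ℝ (descProd s k) := by
  unfold descProd; fun_prop

@[simp]
lemma descProd_zero (s k : ℕ) : descProd s k 0 = 1 := by simp [descProd]

lemma cast_choose_sub_eq {ℓ s : ℕ} (k : ℕ) (hs : s ≤ ℓ) (hℓ : ℓ ≠ 0) :
    ((ℓ - s).choose k : ℝ) = (ℓ : ℝ) ^ k / k ! * descProd s k (ℓ : ℝ)⁻¹ := by
  rw [Nat.cast_choose_eq_descPochhammer_div, descPochhammer_eval_eq_prod_range, descProd,
    Nat.cast_sub hs, div_mul_eq_mul_div, show (ℓ : ℝ) ^ k = ∏ _i ∈ range k, (ℓ : ℝ) by simp,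
    ← prod_mul_distrib]
  congr 1
  refine prod_congr rfl fun i _ => ?_
  field_simp
  ring

lemma Cb_sub_sub_one {ℓ s m : ℕ} (hm : 1 ≤ m) (hs : s ≤ ℓ) (hℓ : ℓ ≠ 0) :
    Cb (ℓ - s) ((m : ℤ) - 1) = (ℓ : ℝ) ^ (m - 1) / (m - 1)! * descProd s (m - 1) (ℓ : ℝ)⁻¹ := by
  rw [Cb, if_pos (by omega), show ((m : ℤ) - 1).toNat = m - 1 by omega, cast_choose_sub_eq _ hs hℓ]

lemma Cb_sub_two_sub_two {ℓ m : ℕ} (hm : 1 ≤ m) (hℓ : 2 ≤ ℓ) :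
    Cb (ℓ - 2) ((m : ℤ) - 2) = (ℓ : ℝ) ^ (m - 1) / (m - 1)! * (ℓ : ℝ)⁻¹ *
      (((m : ℝ) - 1) * descProd 2 (m - 2) (ℓ : ℝ)⁻¹) := by
  obtain rfl | hm2 := hm.eq_or_lt
  · simp [Cb]
  obtain ⟨n, rfl⟩ : ∃ n, m = n + 2 := ⟨m - 2, by omega⟩
  have hℓ0 : (ℓ : ℝ) ≠ 0 := by positivity
  rw [Cb, if_pos (by omega), show ((n + 2 : ℕ) : ℤ) - 2 = n by push_cast; ring, Int.toNat_natCast,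
    cast_choose_sub_eq _ hℓ (by omega), show n + 2 - 1 = n + 1 by omega, Nat.add_sub_cancel,
    Nat.factorial_succ]
  push_cast
  field_simp
  ring

lemma quadratic_root_eq_div {a b c : ℝ} (ha : a ≠ 0) (hb : 0 < b) (hD : 0 ≤ b ^ 2 + 4 * a * c) :
    (-b + √(b ^ 2 + 4 * a * c)) / (2 * a) = 2 * c / (b + √(b ^ 2 + 4 * a * c)) := by
  have hs : 0 < b + √(b ^ 2 + 4 * a * c) := by positivity
  rw [div_eq_div_iff (by positivity) hs.ne']
  linear_combination Real.sq_sqrt hD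

lemma DifferentiableAt.isBigO_comp_inv_natCast {F : Type*} [NormedAddCommGroup F]
    [NormedSpace ℝ F] {f : ℝ → F} (hf : DifferentiableAt ℝ f 0) :
    (fun n : ℕ => f (n : ℝ)⁻¹ - f 0) =O[atTop] fun n : ℕ => (n : ℝ)⁻¹ := by
  simpa [Function.comp_def] using hf.isBigO_sub.comp_tendsto tendsto_inv_atTop_nhds_zero_nat

section Scaled

/-! In the notation of the header, `etaiScaled`, `bScaled`, `gammaScaled` and `thetaScaled` are
`eᵢ`, `b`, `g` and `h`, and `wScaled = (ρ e₂ - e₄) / t`. -/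

variable (m : ℕ) (ρ d t : ℝ)

noncomputable def eta1Scaled : ℝ :=
  descProd 1 (m - 1) t * descProd 2 (m - 1) t * m * (1 - ρ) * (t + (1 - t) * ρ)

noncomputable def eta2Scaled : ℝ :=
  t * descProd 1 (m - 1) t * (1 + ((m : ℝ) - 1) * ρ)
    + descProd 2 (m - 1) t * m * (t + (1 - 2 * t) * ρ)
    + t * (((m : ℝ) - 1) * descProd 2 (m - 2) t) * ((1 - t) * m * ρ + t * ((m : ℝ) - 1) * (1 - ρ))

noncomputable def eta3Scaled : ℝ :=
  t * descProd 1 (m - 1) t * (1 + ((m : ℝ) - 1) * ρ)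
    + descProd 2 (m - 1) t * (1 - t) * m * ρ ^ 2
    + t * (((m : ℝ) - 1) * descProd 2 (m - 2) t) * (1 - t) * ρ * (1 + ((m : ℝ) - 1) * ρ)

noncomputable def eta4Scaled : ℝ :=
  t * descProd 1 (m - 1) t * ρ * (1 + ((m : ℝ) - 1) * ρ)
    + descProd 2 (m - 1) t * m * ρ * (t + (1 - 2 * t) * ρ)
    + t * (((m : ℝ) - 1) * descProd 2 (m - 2) t) * (t + (1 - 2 * t) * ρ) *
      (1 + ((m : ℝ) - 1) * ρ)

noncomputable def wScaled : ℝ :=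
  ((m : ℝ) - 1) * descProd 2 (m - 2) t *
    (ρ * ((1 - t) * m * ρ + t * ((m : ℝ) - 1) * (1 - ρ)) -
      (t + (1 - 2 * t) * ρ) * (1 + ((m : ℝ) - 1) * ρ))

noncomputable def bScaled : ℝ := (1 - d) * eta2Scaled m ρ t - eta3Scaled m ρ t

noncomputable def discScaled : ℝ := bScaled m ρ d t ^ 2 + 4 * (1 - d) * (d * t * eta1Scaled m ρ t)

noncomputable def gammaScaled : ℝ :=
  2 * (d * eta1Scaled m ρ t) / (bScaled m ρ d t + √(discScaled m ρ d t))

noncomputable def thetaDenScaled : ℝ :=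
  t * gammaScaled m ρ d t ^ 2 + eta2Scaled m ρ t * gammaScaled m ρ d t + eta1Scaled m ρ t

noncomputable def thetaScaled : ℝ :=
  gammaScaled m ρ d t * (ρ * gammaScaled m ρ d t + wScaled m ρ t) / thetaDenScaled m ρ d t

lemma rho_mul_eta2Scaled_sub_eta4Scaled :
    ρ * eta2Scaled m ρ t - eta4Scaled m ρ t = t * wScaled m ρ t := by
  simp only [eta2Scaled, eta4Scaled, wScaled]
  ring

variable {m}

lemma mul_thetaScaled (hden : thetaDenScaled m ρ d t ≠ 0) :
    t * thetaScaled m ρ d t = ρ - (eta4Scaled m ρ t * gammaScaled m ρ d t + eta1Scaled m ρ t * ρ) /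
      thetaDenScaled m ρ d t := by
  have hW := rho_mul_eta2Scaled_sub_eta4Scaled m ρ t
  rw [thetaScaled, mul_div_assoc', eq_sub_iff_add_eq, ← add_div, div_eq_iff hden,
    thetaDenScaled]
  linear_combination (-gammaScaled m ρ d t) * hW

variable {ℓ : ℕ}

lemma eta1_eq_eta1Scaled (hm : 1 ≤ m) (hℓ : 2 ≤ ℓ) :
    eta1 ℓ m ρ = ((ℓ : ℝ) ^ (m - 1) / (m - 1)!) ^ 2 * ℓ * eta1Scaled m ρ (ℓ : ℝ)⁻¹ := by
  have hℓ0 : (ℓ : ℝ) ≠ 0 := by positivity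
  rw [eta1, Cb_sub_sub_one hm (by omega) (by omega), Cb_sub_sub_one hm hℓ (by omega), eta1Scaled]
  field_simp

lemma eta2_eq_eta2Scaled (hm : 1 ≤ m) (hℓ : 2 ≤ ℓ) :
    eta2 ℓ m ρ = (ℓ : ℝ) ^ (m - 1) / (m - 1)! * ℓ * eta2Scaled m ρ (ℓ : ℝ)⁻¹ := by
  have hℓ0 : (ℓ : ℝ) ≠ 0 := by positivity
  rw [eta2, Cb_sub_sub_one hm (by omega) (by omega), Cb_sub_sub_one hm hℓ (by omega),
    Cb_sub_two_sub_two hm hℓ, eta2Scaled]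
  field_simp

lemma eta3_eq_eta3Scaled (hm : 1 ≤ m) (hℓ : 2 ≤ ℓ) :
    eta3 ℓ m ρ = (ℓ : ℝ) ^ (m - 1) / (m - 1)! * ℓ * eta3Scaled m ρ (ℓ : ℝ)⁻¹ := by
  have hℓ0 : (ℓ : ℝ) ≠ 0 := by positivity
  rw [eta3, Cb_sub_sub_one hm (by omega) (by omega), Cb_sub_sub_one hm hℓ (by omega),
    Cb_sub_two_sub_two hm hℓ, eta3Scaled]
  field_simp

lemma eta4_eq_eta4Scaled (hm : 1 ≤ m) (hℓ : 2 ≤ ℓ) :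
    eta4 ℓ m ρ = (ℓ : ℝ) ^ (m - 1) / (m - 1)! * ℓ * eta4Scaled m ρ (ℓ : ℝ)⁻¹ := by
  have hℓ0 : (ℓ : ℝ) ≠ 0 := by positivity
  rw [eta4, Cb_sub_sub_one hm (by omega) (by omega), Cb_sub_sub_one hm hℓ (by omega),
    Cb_sub_two_sub_two hm hℓ, eta4Scaled]
  field_simp

lemma gammaFun_eq_gammaScaled (hm : 1 ≤ m) (hℓ : 2 ≤ ℓ) (hd : d ≠ 1)
    (hb : 0 < bScaled m ρ d (ℓ : ℝ)⁻¹) (hD : 0 ≤ discScaled m ρ d (ℓ : ℝ)⁻¹) :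
    gammaFun m ρ d ℓ = (ℓ : ℝ) ^ (m - 1) / (m - 1)! * gammaScaled m ρ d (ℓ : ℝ)⁻¹ := by
  have hℓ0 : (ℓ : ℝ) ≠ 0 := by positivity
  have hscale : 0 ≤ (ℓ : ℝ) ^ (m - 1) / (m - 1)! * ℓ := by positivity
  have hroot := quadratic_root_eq_div (sub_ne_zero.2 hd.symm) hb hD
  rw [← discScaled] at hroot
  have hsqrt : √((eta2 ℓ m ρ * (1 - d) - eta3 ℓ m ρ) ^ 2 + 4 * eta1 ℓ m ρ * d * (1 - d))
      = (ℓ : ℝ) ^ (m - 1) / (m - 1)! * ℓ * √(discScaled m ρ d (ℓ : ℝ)⁻¹) := by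
    rw [← Real.sqrt_sq hscale, ← Real.sqrt_mul (sq_nonneg _)]
    congr 1
    rw [eta1_eq_eta1Scaled ρ hm hℓ, eta2_eq_eta2Scaled ρ hm hℓ, eta3_eq_eta3Scaled ρ hm hℓ,
      discScaled, bScaled]
    field_simp
  calc gammaFun m ρ d ℓ
      = (ℓ : ℝ) ^ (m - 1) / (m - 1)! * ℓ *
        ((-bScaled m ρ d (ℓ : ℝ)⁻¹ + √(discScaled m ρ d (ℓ : ℝ)⁻¹)) / (2 * (1 - d))) := by
        rw [gammaFun, hsqrt, eta2_eq_eta2Scaled ρ hm hℓ, eta3_eq_eta3Scaled ρ hm hℓ, bScaled]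
        ring
    _ = _ := by
        rw [hroot, gammaScaled]
        field_simp

lemma thetaFun_eq_thetaScaled (hm : 1 ≤ m) (hℓ : 2 ≤ ℓ) (hd : d ≠ 1)
    (hb : 0 < bScaled m ρ d (ℓ : ℝ)⁻¹) (hD : 0 ≤ discScaled m ρ d (ℓ : ℝ)⁻¹)
    (hden : thetaDenScaled m ρ d (ℓ : ℝ)⁻¹ ≠ 0) :
    thetaFun m ρ d ℓ = (ℓ : ℝ)⁻¹ * thetaScaled m ρ d (ℓ : ℝ)⁻¹ := by
  have hκ : ((ℓ : ℝ) ^ (m - 1) / (m - 1)!) ^ 2 * ℓ ≠ 0 := by positivity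
  rw [mul_thetaScaled ρ d _ hden, thetaFun, gammaFun_eq_gammaScaled ρ d hm hℓ hd hb hD,
    eta1_eq_eta1Scaled ρ hm hℓ, eta2_eq_eta2Scaled ρ hm hℓ, eta4_eq_eta4Scaled ρ hm hℓ,
    ← mul_div_mul_left _ (thetaDenScaled m ρ d _) hκ, thetaDenScaled]
  congr 2 <;> field_simp

end Scaled

section AtZero

variable (m : ℕ) (ρ d : ℝ)

lemma eta1Scaled_zero : eta1Scaled m ρ 0 = m * ρ * (1 - ρ) := by
  simp [eta1Scaled]; ring

lemma eta2Scaled_zero : eta2Scaled m ρ 0 = m * ρ := by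
  simp [eta2Scaled]

lemma eta3Scaled_zero : eta3Scaled m ρ 0 = m * ρ ^ 2 := by
  simp [eta3Scaled]

lemma wScaled_zero : wScaled m ρ 0 = -(((m : ℝ) - 1) * ρ * (1 - ρ)) := by
  simp [wScaled]; ring

lemma bScaled_zero : bScaled m ρ d 0 = m * ρ * (1 - ρ - d) := by
  rw [bScaled, eta2Scaled_zero, eta3Scaled_zero]; ring

lemma discScaled_zero : discScaled m ρ d 0 = bScaled m ρ d 0 ^ 2 := by
  simp [discScaled]

variable {m ρ d}

lemma bScaled_zero_pos (hm : 1 ≤ m) (hρ : 0 < ρ) (hdρ : d < 1 - ρ) : 0 < bScaled m ρ d 0 := by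
  have hm0 : (0 : ℝ) < m := by exact_mod_cast hm
  rw [bScaled_zero]
  exact mul_pos (mul_pos hm0 hρ) (by linarith)

lemma gammaScaled_zero (hm : 1 ≤ m) (hρ : 0 < ρ) (hdρ : d < 1 - ρ) :
    gammaScaled m ρ d 0 = d * (1 - ρ) / (1 - ρ - d) := by
  have hb := bScaled_zero_pos hm hρ hdρ
  rw [gammaScaled, discScaled_zero, Real.sqrt_sq hb.le, eta1Scaled_zero, bScaled_zero]
  have : 1 - ρ - d ≠ 0 := by linarith
  field_simp
  ring

lemma thetaDenScaled_zero (hm : 1 ≤ m) (hρ : 0 < ρ) (hdρ : d < 1 - ρ) :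
    thetaDenScaled m ρ d 0 = m * ρ * (1 - ρ) ^ 2 / (1 - ρ - d) := by
  have : 1 - ρ - d ≠ 0 := by linarith
  rw [thetaDenScaled, gammaScaled_zero hm hρ hdρ, eta1Scaled_zero, eta2Scaled_zero]
  field_simp
  ring

lemma thetaDenScaled_zero_pos (hm : 1 ≤ m) (hρ : 0 < ρ) (hρ1 : ρ < 1) (hdρ : d < 1 - ρ) :
    0 < thetaDenScaled m ρ d 0 := by
  have hm0 : (0 : ℝ) < m := by exact_mod_cast hm
  have : 0 < 1 - ρ - d := by linarith
  have : 0 < 1 - ρ := by linarith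
  rw [thetaDenScaled_zero hm hρ hdρ]
  positivity

lemma thetaScaled_zero (hm : 1 ≤ m) (hρ : 0 < ρ) (hρ1 : ρ < 1) (hdρ : d < 1 - ρ) :
    thetaScaled m ρ d 0 = d * (d - ((m : ℝ) - 1) * (1 - ρ - d)) / (m * (1 - ρ - d)) := by
  have hm0 : (0 : ℝ) < m := by exact_mod_cast hm
  have : 1 - ρ - d ≠ 0 := by linarith
  have : 1 - ρ ≠ 0 := by linarith
  rw [thetaScaled, thetaDenScaled_zero hm hρ hdρ, gammaScaled_zero hm hρ hdρ, wScaled_zero]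
  field_simp
  ring

end AtZero

section Smoothness

variable (m : ℕ) (ρ d : ℝ)

@[fun_prop]
lemma differentiable_eta1Scaled : Differentiable ℝ (eta1Scaled m ρ) := by
  unfold eta1Scaled; fun_prop

@[fun_prop]
lemma differentiable_eta2Scaled : Differentiable ℝ (eta2Scaled m ρ) := by
  unfold eta2Scaled; fun_prop

@[fun_prop]
lemma differentiable_wScaled : Differentiable ℝ (wScaled m ρ) := by
  unfold wScaled; fun_prop

@[fun_prop]
lemma differentiable_bScaled : Differentiable ℝ (bScaled m ρ d) := by
  unfold bScaled eta3Scaled; fun_prop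

@[fun_prop]
lemma differentiable_discScaled : Differentiable ℝ (discScaled m ρ d) := by
  unfold discScaled; fun_prop

variable {m ρ d}

lemma differentiableAt_gammaScaled (hm : 1 ≤ m) (hρ : 0 < ρ) (hdρ : d < 1 - ρ) :
    DifferentiableAt ℝ (gammaScaled m ρ d) 0 := by
  have hb := bScaled_zero_pos hm hρ hdρ
  have hdisc : discScaled m ρ d 0 ≠ 0 := by rw [discScaled_zero]; positivity
  have hden : bScaled m ρ d 0 + √(discScaled m ρ d 0) ≠ 0 := by positivity
  unfold gammaScaled
  fun_prop (disch := assumption)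

lemma differentiableAt_thetaDenScaled (hm : 1 ≤ m) (hρ : 0 < ρ) (hdρ : d < 1 - ρ) :
    DifferentiableAt ℝ (thetaDenScaled m ρ d) 0 := by
  have := differentiableAt_gammaScaled hm hρ hdρ
  unfold thetaDenScaled
  fun_prop

lemma differentiableAt_thetaScaled (hm : 1 ≤ m) (hρ : 0 < ρ) (hρ1 : ρ < 1) (hdρ : d < 1 - ρ) :
    DifferentiableAt ℝ (thetaScaled m ρ d) 0 := by
  have := differentiableAt_gammaScaled hm hρ hdρ
  have := differentiableAt_thetaDenScaled hm hρ hdρ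
  have hden := (thetaDenScaled_zero_pos hm hρ hρ1 hdρ).ne'
  unfold thetaScaled
  fun_prop (disch := assumption)

end Smoothness

section Asymptotics

variable {m : ℕ} {ρ d : ℝ}

lemma eventually_scaled_pos (hm : 1 ≤ m) (hρ : 0 < ρ) (hρ1 : ρ < 1) (hdρ : d < 1 - ρ) :
    ∀ᶠ t in 𝓝 0, 0 < bScaled m ρ d t ∧ 0 < discScaled m ρ d t ∧ 0 < thetaDenScaled m ρ d t := by
  have hb := bScaled_zero_pos hm hρ hdρ
  have hdisc : 0 < discScaled m ρ d 0 := by rw [discScaled_zero]; positivity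
  exact ((differentiable_bScaled m ρ d).continuous.continuousAt.eventually_const_lt hb).and
    (((differentiable_discScaled m ρ d).continuous.continuousAt.eventually_const_lt hdisc).and
      ((differentiableAt_thetaDenScaled hm hρ hdρ).continuousAt.eventually_const_lt
        (thetaDenScaled_zero_pos hm hρ hρ1 hdρ)))

lemma eventually_gammaFun_thetaFun_eq (hm : 1 ≤ m) (hρ : 0 < ρ) (hρ1 : ρ < 1) (hdρ : d < 1 - ρ) :
    ∀ᶠ ℓ : ℕ in atTop,
      gammaFun m ρ d ℓ = (ℓ : ℝ) ^ (m - 1) / (m - 1)! * gammaScaled m ρ d (ℓ : ℝ)⁻¹ ∧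
      thetaFun m ρ d ℓ = (ℓ : ℝ)⁻¹ * thetaScaled m ρ d (ℓ : ℝ)⁻¹ := by
  have hd : d ≠ 1 := by linarith
  filter_upwards [eventually_ge_atTop 2,
    tendsto_inv_atTop_nhds_zero_nat.eventually (eventually_scaled_pos hm hρ hρ1 hdρ)]
    with ℓ hℓ ⟨hb, hD, hden⟩
  exact ⟨gammaFun_eq_gammaScaled ρ d hm hℓ hd hb hD.le,
    thetaFun_eq_thetaScaled ρ d hm hℓ hd hb hD.le hden.ne'⟩

end Asymptotics

theorem stmt_14_general (ρ d : ℝ) (m : ℕ) (hm : 1 ≤ m)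
    (hρ₁ : 0 < ρ) (hρ₂ : ρ < 1) (hd₂ : d < 1 - ρ) :
    ((fun ℓ : ℕ => gammaFun m ρ d ℓ -
        ((1 - ρ) * d / (1 - ρ - d)) * (ℓ : ℝ) ^ (m - 1) / ((m - 1).factorial : ℝ))
      =O[atTop] fun ℓ : ℕ => (ℓ : ℝ) ^ ((m : ℤ) - 2)) ∧
    ((fun ℓ : ℕ => thetaFun m ρ d ℓ -
        d * (d - ((m : ℝ) - 1) * (1 - ρ - d)) / ((ℓ : ℝ) * (m : ℝ) * (1 - ρ - d)))
      =O[atTop] fun ℓ : ℕ => 1 / (ℓ : ℝ) ^ 2) := by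
  have hscaled := eventually_gammaFun_thetaFun_eq hm hρ₁ hρ₂ hd₂
  have hγ := (differentiableAt_gammaScaled hm hρ₁ hd₂).isBigO_comp_inv_natCast
  have hθ := (differentiableAt_thetaScaled hm hρ₁ hρ₂ hd₂).isBigO_comp_inv_natCast
  rw [gammaScaled_zero hm hρ₁ hd₂] at hγ
  rw [thetaScaled_zero hm hρ₁ hρ₂ hd₂] at hθ
  constructor
  · refine (((isBigO_refl (fun ℓ : ℕ => (ℓ : ℝ) ^ (m - 1)) atTop).mul hγ).const_mul_left
      ((m - 1)! : ℝ)⁻¹).congr' ?_ ?_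
    · filter_upwards [hscaled] with ℓ ⟨hγℓ, _⟩
      rw [hγℓ]
      ring
    · filter_upwards [eventually_ne_atTop 0] with ℓ hℓ
      rw [show (m : ℤ) - 2 = (m - 1 : ℕ) + (-1) by omega, zpow_add₀ (by positivity), zpow_natCast,
        zpow_neg_one]
  · refine ((isBigO_refl (fun ℓ : ℕ => (ℓ : ℝ)⁻¹) atTop).mul hθ).congr' ?_ ?_
    · filter_upwards [hscaled] with ℓ ⟨_, hθℓ⟩
      rw [hθℓ]
      field_simp
    · exact .of_eq (funext fun ℓ => by ring)

/-- for `d ∈ (0, 1-ρ)`, as `ℓ → ∞`,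
(i) `γ(ℓ) = ((1-ρ)d/(1-ρ-d))·ℓ^{m-1}/(m-1)! + O(ℓ^{m-2})` and
(ii) `θ(ℓ) = d(d-(m-1)(1-ρ-d))/(ℓm(1-ρ-d)) + O(1/ℓ²)`. -/
theorem stmt_14 (ρ d : ℝ) (m : ℕ) (hm : 1 ≤ m)
    (hρ₁ : 0 < ρ) (hρ₂ : ρ < 1) (hd₁ : 0 < d) (hd₂ : d < 1 - ρ) :
    ((fun ℓ : ℕ => gammaFun m ρ d ℓ -
        ((1 - ρ) * d / (1 - ρ - d)) * (ℓ : ℝ) ^ (m - 1) / ((m - 1).factorial : ℝ))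
      =O[atTop] fun ℓ : ℕ => (ℓ : ℝ) ^ ((m : ℤ) - 2)) ∧
    ((fun ℓ : ℕ => thetaFun m ρ d ℓ -
        d * (d - ((m : ℝ) - 1) * (1 - ρ - d)) / ((ℓ : ℝ) * (m : ℝ) * (1 - ρ - d)))
      =O[atTop] fun ℓ : ℕ => 1 / (ℓ : ℝ) ^ 2) :=
  stmt_14_general ρ d m hm hρ₁ hρ₂ hd₂
end

section
/- Fix ρ ∈ (0,1), an integer m ≥ 1, and set d = 1−ρ. For each integer ℓ > m, define η₁(ℓ), η₂(ℓ), η₃(ℓ), η₄(ℓ) as in the context, γ(ℓ) = (η₃(ℓ) − η₂(ℓ)(1−d) + √((η₂(ℓ)(1−d) − η₃(ℓ))² + 4η₁(ℓ)d(1−d)))/(2(1−d)), and θ(ℓ) = ρ − (η₄(ℓ)γ(ℓ) + η₁(ℓ)ρ)/(γ(ℓ)² + η₂(ℓ)γ(ℓ) + η₁(ℓ)). Then, as ℓ → ∞: (i) γ(ℓ) − √m·(1−ρ)·ℓ^{m−1/2}/(m−1)! − ((1−ρ)(1+(m−2)ρ)/(2ρ))·ℓ^{m−1}/(m−1)! =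 O(ℓ^{m−3/2}); and (ii) θ(ℓ) − (1−ρ)/√(ℓm) + (1−ρ)(1+mρ)/(2ℓmρ) = O(ℓ^{−3/2}). -/
/-!
At `d = 1 - ρ` the quantities reduce to the binomial coefficients `A = C(ℓ-1,m-1)`,
`B = C(ℓ-2,m-1)`, `D = C(ℓ-2,m-2)`, each `ℓ^k/k! + O(ℓ^(k-1))`, through the ring identities
`η₁ = m(1-ρ)(1+(ℓ-1)ρ) A B`, `η₃ - ρη₂ = (1-ρ)(A(1+(m-1)ρ) - mρB + ρ(ℓ-m)D)`,
`ρη₂ - η₄ = -(1-ρ)(1+(ℓ-1)ρ) D`, together with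
`γ = (η₃ - ρη₂ + √((η₃ - ρη₂)² + 4ρ(1-ρ)η₁)) / (2ρ)` and
`θ = γ (ργ + ρη₂ - η₄) / (γ² + η₂γ + η₁)`.
Expansions `c₀ ℓ^a + c₁ ℓ^(a-1/2) + O(ℓ^(a-1))` are closed under sums and products, and, when
`c₀ > 0`, under inverses and square roots (via `√f - S = (f - S²) / (√f + S)`). Since
`η₃ - ρη₂ = O(ℓ^(m-1))` is of lower order than `√η₁ ≍ ℓ^(m-1/2)`, the radicand of `γ` is dominated
by `4ρ(1-ρ)η₁`, and the two-term expansions of `γ` and `θ` follow.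
-/

open Filter Asymptotics

section NatRpow

variable {a b : ℝ}

theorem eventually_natCast_pos : ∀ᶠ ℓ : ℕ in atTop, (0 : ℝ) < ℓ :=
  (eventually_gt_atTop 0).mono fun _ h => Nat.cast_pos.2 h

theorem isBigO_natCast_rpow_of_le (h : a ≤ b) :
    (fun ℓ : ℕ => (ℓ : ℝ) ^ a) =O[atTop] fun ℓ : ℕ => (ℓ : ℝ) ^ b := by
  refine IsBigO.of_bound 1 ?_
  filter_upwards [eventually_ge_atTop 1] with ℓ hℓ
  have hx : (1 : ℝ) ≤ ℓ := Nat.one_le_cast.2 hℓ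
  rw [one_mul, Real.norm_of_nonneg (by positivity), Real.norm_of_nonneg (by positivity)]
  exact Real.rpow_le_rpow_of_exponent_le hx h

theorem isLittleO_natCast_rpow_of_lt (h : a < b) :
    (fun ℓ : ℕ => (ℓ : ℝ) ^ a) =o[atTop] fun ℓ : ℕ => (ℓ : ℝ) ^ b := by
  have hsmall : (fun ℓ : ℕ => (ℓ : ℝ) ^ (a - b)) =o[atTop] fun _ => (1 : ℝ) := by
    rw [isLittleO_one_iff]
    have := (tendsto_rpow_neg_atTop (sub_pos.2 h)).comp tendsto_natCast_atTop_atTop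
    simpa [Function.comp_def] using this
  refine ((hsmall.mul_isBigO (isBigO_refl (fun ℓ : ℕ => (ℓ : ℝ) ^ b) atTop)).congr' ?_ ?_)
  · filter_upwards [eventually_natCast_pos] with ℓ hℓ
    rw [← Real.rpow_add hℓ, sub_add_cancel]
  · simp

theorem rpow_mul_rpow_of_add_eq {x : ℝ} (hx : 0 < x) {p q r : ℝ} (h : p + q = r) :
    x ^ p * x ^ q = x ^ r := by
  rw [← Real.rpow_add hx, h]

theorem Asymptotics.IsBigO.mul_natCast_rpow {u v : ℕ → ℝ} {c : ℝ}
    (hu : u =O[atTop] fun ℓ : ℕ => (ℓ : ℝ) ^ a) (hv : v =O[atTop] fun ℓ : ℕ => (ℓ : ℝ) ^ b)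
    (h : a + b = c) : (fun ℓ => u ℓ * v ℓ) =O[atTop] fun ℓ : ℕ => (ℓ : ℝ) ^ c := by
  refine (hu.mul hv).congr' EventuallyEq.rfl ?_
  filter_upwards [eventually_natCast_pos] with ℓ hℓ
  exact rpow_mul_rpow_of_add_eq hℓ h

theorem isBigO_inv_of_eventually_ge {f : ℕ → ℝ} {c : ℝ} (hc : 0 < c)
    (hf : ∀ᶠ ℓ : ℕ in atTop, c * (ℓ : ℝ) ^ a ≤ f ℓ) :
    (fun ℓ => (f ℓ)⁻¹) =O[atTop] fun ℓ : ℕ => (ℓ : ℝ) ^ (-a) := by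
  refine IsBigO.of_bound c⁻¹ ?_
  filter_upwards [hf, eventually_natCast_pos] with ℓ hfℓ hℓ
  have hpos : 0 < c * (ℓ : ℝ) ^ a := by positivity
  rw [Real.norm_of_nonneg (inv_nonneg.2 (hpos.le.trans hfℓ)), Real.norm_of_nonneg (by positivity),
    Real.rpow_neg hℓ.le, ← mul_inv]
  exact inv_anti₀ hpos hfℓ

end NatRpow

def HasExpansion (f : ℕ → ℝ) (a c₀ c₁ : ℝ) : Prop :=
  (fun ℓ : ℕ => f ℓ - c₀ * (ℓ : ℝ) ^ a - c₁ * (ℓ : ℝ) ^ (a - 1 / 2)) =O[atTop]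
    fun ℓ : ℕ => (ℓ : ℝ) ^ (a - 1)

theorem hasExpansion_two_term (a c₀ c₁ : ℝ) :
    HasExpansion (fun ℓ => c₀ * (ℓ : ℝ) ^ a + c₁ * (ℓ : ℝ) ^ (a - 1 / 2)) a c₀ c₁ :=
  (isBigO_zero _ _).congr_left fun ℓ => by ring

namespace HasExpansion

variable {f g : ℕ → ℝ} {a b c₀ c₁ d₀ d₁ : ℝ}

theorem congr (hf : HasExpansion f a c₀ c₁) (h : f =ᶠ[atTop] g) : HasExpansion g a c₀ c₁ :=
  hf.congr' (h.mono fun ℓ hℓ => by simp only [hℓ]) EventuallyEq.rfl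

theorem sub_isBigO (hf : HasExpansion f a c₀ c₁) :
    (fun ℓ => f ℓ - c₀ * (ℓ : ℝ) ^ a) =O[atTop] fun ℓ : ℕ => (ℓ : ℝ) ^ (a - 1 / 2) :=
  ((hf.trans (isBigO_natCast_rpow_of_le (by linarith))).add
    ((isBigO_refl _ _).const_mul_left c₁)).congr_left fun ℓ => by ring

theorem sub_isLittleO (hf : HasExpansion f a c₀ c₁) :
    (fun ℓ => f ℓ - c₀ * (ℓ : ℝ) ^ a) =o[atTop] fun ℓ : ℕ => (ℓ : ℝ) ^ a :=
  hf.sub_isBigO.trans_isLittleO (isLittleO_natCast_rpow_of_lt (by linarith))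

theorem isBigO (hf : HasExpansion f a c₀ c₁) : f =O[atTop] fun ℓ : ℕ => (ℓ : ℝ) ^ a :=
  (hf.sub_isLittleO.isBigO.add ((isBigO_refl _ _).const_mul_left c₀)).congr_left fun ℓ => by ring

theorem eventually_ge (hf : HasExpansion f a c₀ c₁) (hc : 0 < c₀) :
    ∀ᶠ ℓ : ℕ in atTop, c₀ / 2 * (ℓ : ℝ) ^ a ≤ f ℓ := by
  filter_upwards [hf.sub_isLittleO.def (half_pos hc), eventually_natCast_pos] with ℓ h hℓ
  rw [Real.norm_of_nonneg (by positivity : (0 : ℝ) ≤ (ℓ : ℝ) ^ a), Real.norm_eq_abs] at h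
  linarith [neg_abs_le (f ℓ - c₀ * (ℓ : ℝ) ^ a)]

theorem eventually_pos (hf : HasExpansion f a c₀ c₁) (hc : 0 < c₀) :
    ∀ᶠ ℓ : ℕ in atTop, 0 < f ℓ := by
  filter_upwards [hf.eventually_ge hc, eventually_natCast_pos] with ℓ h hℓ
  exact (by positivity : (0 : ℝ) < c₀ / 2 * (ℓ : ℝ) ^ a).trans_le h

theorem shift (hf : HasExpansion f a c₀ c₁) (h : a + 1 / 2 = b) : HasExpansion f b 0 c₀ := by
  subst h
  unfold HasExpansion
  convert hf.sub_isBigO using 2 with ℓ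
  · ring_nf
  · ring_nf

theorem add_isBigO (hf : HasExpansion f a c₀ c₁)
    (hg : g =O[atTop] fun ℓ : ℕ => (ℓ : ℝ) ^ (a - 1)) :
    HasExpansion (fun ℓ => f ℓ + g ℓ) a c₀ c₁ :=
  (hf.add hg).congr_left fun ℓ => by ring

theorem add (hf : HasExpansion f a c₀ c₁) (hg : HasExpansion g a d₀ d₁) :
    HasExpansion (fun ℓ => f ℓ + g ℓ) a (c₀ + d₀) (c₁ + d₁) :=
  (IsBigO.add hf hg).congr_left fun ℓ => by ring

theorem const_mul (hf : HasExpansion f a c₀ c₁) (c : ℝ) :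
    HasExpansion (fun ℓ => c * f ℓ) a (c * c₀) (c * c₁) :=
  (hf.const_mul_left c).congr_left fun ℓ => by ring

theorem mul {e : ℝ} (hf : HasExpansion f a c₀ c₁) (hg : HasExpansion g b d₀ d₁) (h : a + b = e) :
    HasExpansion (fun ℓ => f ℓ * g ℓ) e (c₀ * d₀) (c₀ * d₁ + c₁ * d₀) := by
  subst h
  have hF := (hasExpansion_two_term a c₀ c₁).isBigO
  have h₁ := hf.mul_natCast_rpow hg.isBigO (show a - 1 + b = a + b - 1 by ring)
  have h₂ := hF.mul_natCast_rpow hg (show a + (b - 1) = a + b - 1 by ring)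
  refine ((h₁.add h₂).add ((isBigO_refl _ _).const_mul_left (c₁ * d₁))).congr' ?_
    EventuallyEq.rfl
  filter_upwards [eventually_natCast_pos] with ℓ hℓ
  have e₁ := rpow_mul_rpow_of_add_eq hℓ (show a + b = a + b from rfl)
  have e₂ := rpow_mul_rpow_of_add_eq hℓ (show a + (b - 1 / 2) = a + b - 1 / 2 by ring)
  have e₃ := rpow_mul_rpow_of_add_eq hℓ (show a - 1 / 2 + b = a + b - 1 / 2 by ring)
  have e₄ := rpow_mul_rpow_of_add_eq hℓ (show a - 1 / 2 + (b - 1 / 2) = a + b - 1 by ring)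
  linear_combination -(c₀ * d₀ * e₁ + c₀ * d₁ * e₂ + c₁ * d₀ * e₃ + c₁ * d₁ * e₄)

theorem inv (hf : HasExpansion f a c₀ c₁) (hc : 0 < c₀) :
    HasExpansion (fun ℓ => (f ℓ)⁻¹) (-a) c₀⁻¹ (-(c₁ / c₀ ^ 2)) := by
  set T : ℕ → ℝ := fun ℓ => c₀⁻¹ * (ℓ : ℝ) ^ (-a) + -(c₁ / c₀ ^ 2) * (ℓ : ℝ) ^ (-a - 1 / 2)
  have hT := (hasExpansion_two_term (-a) c₀⁻¹ (-(c₁ / c₀ ^ 2))).isBigO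
  -- `(c₀ ℓ^a + c₁ ℓ^(a - 1/2)) * T ℓ = 1 - (c₁ / c₀)^2 ℓ^(-1)`: the `ℓ^(-1/2)` terms cancel.
  have h_one_sub : (fun ℓ => 1 - f ℓ * T ℓ) =O[atTop] fun ℓ : ℕ => (ℓ : ℝ) ^ (-1 : ℝ) := by
    refine ((hf.mul_natCast_rpow hT (by ring)).neg_left.add
      ((isBigO_refl _ _).const_mul_left ((c₁ / c₀) ^ 2))).congr' ?_ EventuallyEq.rfl
    filter_upwards [eventually_natCast_pos] with ℓ hℓ
    have e₁ := rpow_mul_rpow_of_add_eq hℓ (show a + -a = 0 by ring)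
    have e₂ := rpow_mul_rpow_of_add_eq hℓ (show a + (-a - 1 / 2) = -1 / 2 by ring)
    have e₃ := rpow_mul_rpow_of_add_eq hℓ (show a - 1 / 2 + -a = -1 / 2 by ring)
    have e₄ := rpow_mul_rpow_of_add_eq hℓ (show a - 1 / 2 + (-a - 1 / 2) = -1 by ring)
    rw [Real.rpow_zero] at e₁
    have h₀ := mul_inv_cancel₀ hc.ne'
    simp only [T]
    linear_combination c₀ * c₀⁻¹ * e₁ - c₁ * c₀ * c₀⁻¹ ^ 2 * e₂ + c₁ * c₀⁻¹ * e₃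
      - c₁ ^ 2 * c₀⁻¹ ^ 2 * e₄ + (1 - c₁ * c₀⁻¹ * (ℓ : ℝ) ^ (-1 / 2 : ℝ)) * h₀
  refine ((isBigO_inv_of_eventually_ge (half_pos hc) (hf.eventually_ge hc)).mul_natCast_rpow
    h_one_sub (show -a + -1 = -a - 1 by ring)).congr' ?_ EventuallyEq.rfl
  filter_upwards [hf.eventually_pos hc] with ℓ hfℓ
  have := hfℓ.ne'
  simp only [T]
  field_simp
  ring

theorem sqrt (hf : HasExpansion f a c₀ c₁) (hc : 0 < c₀) :
    HasExpansion (fun ℓ => √(f ℓ)) (a / 2) √c₀ (c₁ / (2 * √c₀)) := by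
  set s := √c₀
  have hs : 0 < s := Real.sqrt_pos.2 hc
  set S : ℕ → ℝ := fun ℓ => s * (ℓ : ℝ) ^ (a / 2) + c₁ / (2 * s) * (ℓ : ℝ) ^ (a / 2 - 1 / 2)
  have hS := hasExpansion_two_term (a / 2) s (c₁ / (2 * s))
  have h_sub_sq : (fun ℓ => f ℓ - S ℓ ^ 2) =O[atTop] fun ℓ : ℕ => (ℓ : ℝ) ^ (a - 1) := by
    refine (IsBigO.add hf ((isBigO_refl _ _).const_mul_left (-(c₁ / (2 * s)) ^ 2))).congr' ?_
      EventuallyEq.rfl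
    filter_upwards [eventually_natCast_pos] with ℓ hℓ
    have e₁ := rpow_mul_rpow_of_add_eq hℓ (show a / 2 + a / 2 = a by ring)
    have e₂ := rpow_mul_rpow_of_add_eq hℓ (show a / 2 + (a / 2 - 1 / 2) = a - 1 / 2 by ring)
    have e₃ := rpow_mul_rpow_of_add_eq hℓ (show a / 2 - 1 / 2 + (a / 2 - 1 / 2) = a - 1 by ring)
    have hs₂ : s ^ 2 = c₀ := Real.sq_sqrt hc.le
    have h₀ := mul_inv_cancel₀ hs.ne'
    simp only [S]
    linear_combination s ^ 2 * e₁ + c₁ * s * s⁻¹ * e₂ + (c₁ / (2 * s)) ^ 2 * e₃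
      + (ℓ : ℝ) ^ a * hs₂ + c₁ * (ℓ : ℝ) ^ (a - 1 / 2) * h₀
  have h_inv : (fun ℓ => (√(f ℓ) + S ℓ)⁻¹) =O[atTop] fun ℓ : ℕ => (ℓ : ℝ) ^ (-(a / 2)) :=
    isBigO_inv_of_eventually_ge (half_pos hs)
      ((hS.eventually_ge hs).mono fun _ h => h.trans (le_add_of_nonneg_left (Real.sqrt_nonneg _)))
  refine (h_inv.mul_natCast_rpow h_sub_sq (by ring)).congr' ?_ EventuallyEq.rfl
  filter_upwards [hf.eventually_pos hc, hS.eventually_pos hs] with ℓ hfℓ hSℓ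
  have hsum : 0 < √(f ℓ) + S ℓ := add_pos_of_nonneg_of_pos (Real.sqrt_nonneg _) hSℓ
  rw [show f ℓ - S ℓ ^ 2 = (√(f ℓ) + S ℓ) * (√(f ℓ) - S ℓ) by
    linear_combination -Real.sq_sqrt hfℓ.le, inv_mul_cancel_left₀ hsum.ne']
  ring

end HasExpansion

theorem hasExpansion_const (c : ℝ) : HasExpansion (fun _ => c) 0 c 0 :=
  (isBigO_zero _ _).congr_left fun ℓ => by simp

theorem hasExpansion_linear (p q : ℝ) : HasExpansion (fun ℓ => p * ℓ + q) 1 p 0 := by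
  unfold HasExpansion
  simpa using isBigO_const_const q (one_ne_zero (α := ℝ)) (atTop : Filter ℕ)

theorem hasExpansion_prod_sub (c : ℕ → ℝ) (k : ℕ) :
    HasExpansion (fun ℓ => ∏ i ∈ Finset.range k, ((ℓ : ℝ) - c i)) k 1 0 := by
  induction k with
  | zero => simpa using hasExpansion_const 1
  | succ k ih =>
    convert ih.mul (hasExpansion_linear 1 (-c k))
      (show (k : ℝ) + 1 = ((k + 1 : ℕ) : ℝ) by push_cast; ring) using 1
    · funext ℓ
      rw [Finset.prod_range_succ]
      ring
    · ring
    · ring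

theorem hasExpansion_choose_sub (j k : ℕ) :
    HasExpansion (fun ℓ => ((ℓ - j).choose k : ℝ)) k (k.factorial : ℝ)⁻¹ 0 := by
  convert ((hasExpansion_prod_sub (fun i => j + i) k).const_mul (k.factorial : ℝ)⁻¹).congr ?_
    using 1
  · simp
  · simp
  filter_upwards [eventually_ge_atTop (j + k)] with ℓ hℓ
  have hk : (k.factorial : ℝ) ≠ 0 := by positivity
  rw [inv_mul_eq_iff_eq_mul₀ hk, ← Nat.cast_mul, ← Nat.descFactorial_eq_factorial_mul_choose,
    Nat.descFactorial_eq_prod_range, Nat.cast_prod]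
  refine Finset.prod_congr rfl fun i hi => ?_
  have := Finset.mem_range.1 hi
  rw [Nat.cast_sub (by omega), Nat.cast_sub (by omega)]
  ring

theorem Cb_of_nonneg (n : ℕ) {k : ℤ} (hk : 0 ≤ k) : Cb n k = n.choose k.toNat := if_pos hk

theorem Cb_of_neg (n : ℕ) {k : ℤ} (hk : k < 0) : Cb n k = 0 := if_neg (not_le.2 hk)

theorem hasExpansion_Cb_sub_one (j : ℕ) {m : ℕ} (hm : 1 ≤ m) :
    HasExpansion (fun ℓ => Cb (ℓ - j) ((m : ℤ) - 1)) ((m : ℝ) - 1)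
      ((m - 1).factorial : ℝ)⁻¹ 0 := by
  convert hasExpansion_choose_sub j (m - 1) using 1
  · funext ℓ
    rw [Cb_of_nonneg _ (by omega)]
    congr
    omega
  · rw [Nat.cast_sub hm, Nat.cast_one]

theorem hasExpansion_Cb_sub_two (j : ℕ) {m : ℕ} (hm : 1 ≤ m) :
    HasExpansion (fun ℓ => Cb (ℓ - j) ((m : ℤ) - 2)) ((m : ℝ) - 2)
      (((m : ℝ) - 1) / (m - 1).factorial) 0 := by
  obtain rfl | hm₂ := hm.eq_or_lt
  · convert (hasExpansion_two_term (((1 : ℕ) : ℝ) - 2) 0 0) using 1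
    · funext ℓ
      rw [Cb_of_neg _ (by norm_num)]
      ring
    · simp
  · convert hasExpansion_choose_sub j (m - 2) using 1
    · funext ℓ
      rw [Cb_of_nonneg _ (by omega)]
      congr
      omega
    · rw [Nat.cast_sub hm₂, Nat.cast_two]
    · obtain ⟨k, rfl⟩ := Nat.exists_eq_add_of_le' hm₂
      rw [show k + 2 - 1 = k + 1 by omega, show k + 2 - 2 = k by omega, Nat.factorial_succ]
      push_cast
      field_simp
      ring

section Eta

variable {m : ℕ}

theorem hasExpansion_eta1 (hm : 1 ≤ m) (ρ : ℝ) :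
    HasExpansion (fun ℓ => eta1 ℓ m ρ) (2 * m - 1)
      (m * ρ * (1 - ρ) / ((m - 1).factorial : ℝ) ^ 2) 0 := by
  convert (((hasExpansion_Cb_sub_one 1 hm).mul (hasExpansion_Cb_sub_one 2 hm) rfl).mul
    (hasExpansion_linear ρ (1 - ρ)) rfl).const_mul (m * (1 - ρ)) using 1
  · funext ℓ
    simp only [eta1]
    ring
  · ring
  · field_simp
  · ring

theorem hasExpansion_eta2 (hm : 1 ≤ m) (ρ : ℝ) :
    HasExpansion (fun ℓ => eta2 ℓ m ρ) m (m * ρ / (m - 1).factorial) 0 := by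
  have hmain := ((hasExpansion_Cb_sub_one 2 hm).mul (hasExpansion_linear ρ (1 - 2 * ρ))
    (sub_add_cancel _ _)).const_mul m
  have hA := ((hasExpansion_Cb_sub_one 1 hm).const_mul (1 + (m - 1) * ρ)).isBigO
  have hD := ((hasExpansion_Cb_sub_two 2 hm).mul
    (hasExpansion_linear (m * ρ) ((m - 1) * (1 - ρ) - m * ρ)) rfl).isBigO
  convert hmain.add_isBigO (hA.add (hD.trans (isBigO_natCast_rpow_of_le (by linarith)))) using 1
  · funext ℓ
    simp only [eta2]
    ring
  · field_simp
  · ring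

theorem hasExpansion_eta3_sub_mul_eta2 (hm : 1 ≤ m) (ρ : ℝ) :
    HasExpansion (fun ℓ => eta3 ℓ m ρ - ρ * eta2 ℓ m ρ) (m - 1)
      ((1 - ρ) * (1 + (m - 2) * ρ) / (m - 1).factorial) 0 := by
  have hD := (hasExpansion_linear ρ (-(ρ * m))).mul (hasExpansion_Cb_sub_two 2 hm)
    (show 1 + ((m : ℝ) - 2) = m - 1 by ring)
  convert ((((hasExpansion_Cb_sub_one 1 hm).const_mul (1 + (m - 1) * ρ)).add
    ((hasExpansion_Cb_sub_one 2 hm).const_mul (-(m * ρ)))).add hD).const_mul (1 - ρ) using 1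
  · funext ℓ
    simp only [eta2, eta3]
    ring
  · field_simp
    ring
  · ring

theorem hasExpansion_mul_eta2_sub_eta4 (hm : 1 ≤ m) (ρ : ℝ) :
    HasExpansion (fun ℓ => ρ * eta2 ℓ m ρ - eta4 ℓ m ρ) (m - 1)
      (-((1 - ρ) * ρ * (m - 1) / (m - 1).factorial)) 0 := by
  convert ((hasExpansion_linear ρ (1 - ρ)).mul (hasExpansion_Cb_sub_two 2 hm)
    (show 1 + ((m : ℝ) - 2) = m - 1 by ring)).const_mul (-(1 - ρ)) using 1
  · funext ℓ
    simp only [eta2, eta4]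
    ring
  · ring
  · ring

end Eta

theorem thetaFun_eq_of_ne_zero {m ℓ : ℕ} {ρ d : ℝ}
    (h : gammaFun m ρ d ℓ ^ 2 + eta2 ℓ m ρ * gammaFun m ρ d ℓ + eta1 ℓ m ρ ≠ 0) :
    thetaFun m ρ d ℓ =
      gammaFun m ρ d ℓ * (ρ * gammaFun m ρ d ℓ + (ρ * eta2 ℓ m ρ - eta4 ℓ m ρ)) /
        (gammaFun m ρ d ℓ ^ 2 + eta2 ℓ m ρ * gammaFun m ρ d ℓ + eta1 ℓ m ρ) := by
  rw [thetaFun, eq_div_iff h, sub_mul, div_mul_cancel₀ _ h]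
  ring

section Critical

variable {m : ℕ} {ρ : ℝ}

theorem hasExpansion_gammaFun (hm : 1 ≤ m) (hρ₀ : 0 < ρ) (hρ₁ : ρ < 1) :
    HasExpansion (gammaFun m ρ (1 - ρ)) (m - 1 / 2) (√m * (1 - ρ) / (m - 1).factorial)
      ((1 - ρ) * (1 + (m - 2) * ρ) / (2 * ρ) / (m - 1).factorial) := by
  have hm₀ : (0 : ℝ) < m := by exact_mod_cast hm
  have hc : 0 < 2 * ρ * (1 - ρ) * √m / (m - 1).factorial := by
    have := Real.sqrt_pos.2 hm₀
    have : 0 < 1 - ρ := by linarith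
    positivity
  have hE := hasExpansion_eta3_sub_mul_eta2 hm ρ
  have hX : HasExpansion
      (fun ℓ => 4 * ρ * (1 - ρ) * eta1 ℓ m ρ +
        (eta3 ℓ m ρ - ρ * eta2 ℓ m ρ) * (eta3 ℓ m ρ - ρ * eta2 ℓ m ρ))
      (2 * m - 1) ((2 * ρ * (1 - ρ) * √m / (m - 1).factorial) ^ 2) 0 := by
    convert ((hasExpansion_eta1 hm ρ).const_mul (4 * ρ * (1 - ρ))).add_isBigO
      (hE.isBigO.mul_natCast_rpow hE.isBigO (by ring)) using 1
    · rw [div_pow, mul_pow, Real.sq_sqrt hm₀.le]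
      ring
    · ring
  convert ((hE.shift (by ring)).add (hX.sqrt (by positivity))).const_mul (2 * ρ)⁻¹ using 1
  · funext ℓ
    simp only [gammaFun]
    rw [show (eta2 ℓ m ρ * (1 - (1 - ρ)) - eta3 ℓ m ρ) ^ 2 +
        4 * eta1 ℓ m ρ * (1 - ρ) * (1 - (1 - ρ)) = 4 * ρ * (1 - ρ) * eta1 ℓ m ρ +
        (eta3 ℓ m ρ - ρ * eta2 ℓ m ρ) * (eta3 ℓ m ρ - ρ * eta2 ℓ m ρ) by ring]
    ring
  · ring
  · rw [Real.sqrt_sq hc.le]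
    field_simp
    ring
  · ring

theorem hasExpansion_thetaFun (hm : 1 ≤ m) (hρ₀ : 0 < ρ) (hρ₁ : ρ < 1) :
    HasExpansion (thetaFun m ρ (1 - ρ)) (-1 / 2) ((1 - ρ) / √m)
      (-((1 - ρ) * (1 + m * ρ) / (2 * m * ρ))) := by
  have hm₀ : (0 : ℝ) < m := by exact_mod_cast hm
  have h₁ρ : 0 < 1 - ρ := by linarith
  have hγ := hasExpansion_gammaFun hm hρ₀ hρ₁
  have hP := (hγ.const_mul ρ).add ((hasExpansion_mul_eta2_sub_eta4 hm ρ).shift (by ring))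
  have hR := ((hγ.mul hγ (show (m : ℝ) - 1 / 2 + (m - 1 / 2) = 2 * m - 1 by ring)).add
    (hasExpansion_eta1 hm ρ)).shift (show 2 * (m : ℝ) - 1 + 1 / 2 = m + (m - 1 / 2) by ring)
  have hQ := ((hasExpansion_eta2 hm ρ).mul hγ rfl).add hR
  generalize hs : √(m : ℝ) = s at hγ hP hR hQ ⊢
  have hs₀ : 0 < s := hs ▸ Real.sqrt_pos.2 hm₀
  have hms : (m : ℝ) = s ^ 2 := by rw [← hs, Real.sq_sqrt hm₀.le]
  have hQ₀ : 0 < m * ρ / (m - 1).factorial * (s * (1 - ρ) / (m - 1).factorial) + 0 := by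
    positivity
  convert ((hγ.mul hP rfl).mul (hQ.inv hQ₀)
    (show (m : ℝ) - 1 / 2 + (m - 1 / 2) + -(m + (m - 1 / 2)) = -1 / 2 by ring)).congr ?_ using 1
  · rw [hms]; field_simp; ring
  · rw [hms]; field_simp; ring
  filter_upwards [hQ.eventually_pos hQ₀] with ℓ hQℓ
  rw [thetaFun_eq_of_ne_zero (by convert hQℓ.ne' using 1; ring), div_eq_mul_inv]
  ring

end Critical

/-- at the critical distortion `d = 1-ρ`, as `ℓ → ∞`,
(i) `γ(ℓ) = √m(1-ρ)ℓ^{m-1/2}/(m-1)! + ((1-ρ)(1+(m-2)ρ)/(2ρ))ℓ^{m-1}/(m-1)! + O(ℓ^{m-3/2})`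
and (ii) `θ(ℓ) = (1-ρ)/√(ℓm) - (1-ρ)(1+mρ)/(2ℓmρ) + O(ℓ^{-3/2})`. -/
theorem stmt_15 (ρ : ℝ) (m : ℕ) (hm : 1 ≤ m) (hρ₁ : 0 < ρ) (hρ₂ : ρ < 1) :
    ((fun ℓ : ℕ => gammaFun m ρ (1 - ρ) ℓ -
        Real.sqrt m * (1 - ρ) * (ℓ : ℝ) ^ ((m : ℝ) - 1 / 2) / ((m - 1).factorial : ℝ) -
        ((1 - ρ) * (1 + ((m : ℝ) - 2) * ρ) / (2 * ρ)) * (ℓ : ℝ) ^ (m - 1) /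
          ((m - 1).factorial : ℝ))
      =O[atTop] fun ℓ : ℕ => (ℓ : ℝ) ^ ((m : ℝ) - 3 / 2)) ∧
    ((fun ℓ : ℕ => thetaFun m ρ (1 - ρ) ℓ -
        (1 - ρ) / Real.sqrt ((ℓ : ℝ) * (m : ℝ)) +
        (1 - ρ) * (1 + (m : ℝ) * ρ) / (2 * (ℓ : ℝ) * (m : ℝ) * ρ))
      =O[atTop] fun ℓ : ℕ => (ℓ : ℝ) ^ (-(3 : ℝ) / 2)) := by
  have hγ := hasExpansion_gammaFun hm hρ₁ hρ₂
  have hθ := hasExpansion_thetaFun hm hρ₁ hρ₂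
  unfold HasExpansion at hγ hθ
  constructor
  · convert hγ using 2 with ℓ
    · rw [show (m : ℝ) - 1 / 2 - 1 / 2 = ((m - 1 : ℕ) : ℝ) by push_cast [Nat.cast_sub hm]; ring,
        Real.rpow_natCast]
      ring
    · ring_nf
  · refine hθ.congr' ?_ (by norm_num)
    filter_upwards [eventually_natCast_pos] with ℓ hℓ
    have hm₀ : (0 : ℝ) < m := by exact_mod_cast hm
    rw [show (-1 / 2 : ℝ) - 1 / 2 = -1 by norm_num, Real.rpow_neg_one,
      show (-1 / 2 : ℝ) = -(1 / 2) by norm_num, Real.rpow_neg hℓ.le, ← Real.sqrt_eq_rpow,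
      Real.sqrt_mul hℓ.le]
    have := Real.sqrt_pos.2 hℓ
    have := Real.sqrt_pos.2 hm₀
    field_simp
    ring
end
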